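/- arXiv:1710.08159 — 9 statements merged into one kernel-verified Lean document; each statement's English description precedes it below -/
import Mathlib

section
/- Strong solutions are uniquely determined by their initial data: if u and v are strong solutions of u'' + u' + A²u − λAu + ⟨Au,u⟩Au = f(t) on [0,∞) with u(0) = v(0) and u'(0) = v'(0), then u(t) = v(t) for every t ≥ 0. -/
set_option maxHeartbeats 1000000

open Filter Topology Set
open scoped RealInnerProductSpace

/-- `u` (with derivatives `u'`, `u''`) is a strong solution on `[0,∞)` of
`u'' + u' + A²u - λAu + ⟪Au,u⟫Au = f(t)`. -/
def IsStrongSolution {H : Type*} [NormedAddCommGroup H] [InnerProductSpace ℝ H]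
    (D : Submodule ℝ H) (A : H →ₗ[ℝ] H) (lam : ℝ)
    (f u u' u'' : ℝ → H) : Prop :=
  (∀ t ∈ Ici (0:ℝ), HasDerivWithinAt u (u' t) (Ici 0) t) ∧
  (∀ t ∈ Ici (0:ℝ), HasDerivWithinAt u' (u'' t) (Ici 0) t) ∧
  ContinuousOn u'' (Ici 0) ∧
  (∀ t ∈ Ici (0:ℝ), u t ∈ D) ∧
  (∀ t ∈ Ici (0:ℝ), A (u t) ∈ D) ∧
  ContinuousOn (fun t => A (u t)) (Ici 0) ∧
  (∀ t ∈ Ici (0:ℝ),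
    u'' t + u' t + A (A (u t)) - lam • A (u t) + ⟪A (u t), u t⟫ • A (u t) = f t)

lemma aux_hasDeriv_inner_AA {H : Type*} [NormedAddCommGroup H] [InnerProductSpace ℝ H]
    (D : Submodule ℝ H) (A : H →ₗ[ℝ] H)
    (hsym : ∀ x ∈ D, ∀ y ∈ D, ⟪A x, y⟫ = ⟪x, A y⟫)
    (w w' z : ℝ → H)
    (hw : ∀ s ∈ Ici (0:ℝ), HasDerivWithinAt w (w' s) (Ici 0) s)
    (hwD : ∀ s ∈ Ici (0:ℝ), w s ∈ D)
    (hAwD : ∀ s ∈ Ici (0:ℝ), A (w s) ∈ D)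
    (hz : ∀ s ∈ Ici (0:ℝ), z s = A (A (w s)))
    (hzc : ContinuousOn z (Ici 0))
    {t : ℝ} (ht : t ∈ Ici (0:ℝ)) :
    HasDerivWithinAt (fun s => ⟪A (w s), A (w s)⟫) (⟪w' t, z t + z t⟫) (Ici 0) t := by
  have key : ∀ s ∈ Ici (0:ℝ), ⟪A (w s), A (w s)⟫ - ⟪A (w t), A (w t)⟫
      = ⟪w s - w t, z s + z t⟫ := by
    intro s hs
    have h1 : ⟪A (w s), A (w s)⟫ - ⟪A (w t), A (w t)⟫
        = ⟪A (w s - w t), A (w s) + A (w t)⟫ := by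
      rw [map_sub, inner_sub_left, inner_add_right, inner_add_right]
      rw [real_inner_comm (A (w t)) (A (w s))]
      ring
    rw [h1, hsym _ (D.sub_mem (hwD s hs) (hwD t ht)) _ (D.add_mem (hAwD s hs) (hAwD t ht)),
      map_add, hz s hs, hz t ht]
  rw [hasDerivWithinAt_iff_tendsto_slope]
  have Hw : Tendsto (slope w t) (𝓝[Ici 0 \ {t}] t) (𝓝 (w' t)) :=
    hasDerivWithinAt_iff_tendsto_slope.mp (hw t ht)
  have Hz : Tendsto (fun s => z s + z t) (𝓝[Ici 0 \ {t}] t) (𝓝 (z t + z t)) := by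
    exact Tendsto.add ((hzc t ht).mono_left (nhdsWithin_mono _ diff_subset)) tendsto_const_nhds
  refine Tendsto.congr' ?_ (Hw.inner Hz)
  filter_upwards [eventually_mem_nhdsWithin] with s hs
  rw [slope_def_module, slope_def_module, key s hs.1, real_inner_smul_left, smul_eq_mul]

/-- Strong solutions are uniquely determined by their initial data. -/
theorem strong_solutions_unique
    {H : Type*} [NormedAddCommGroup H] [InnerProductSpace ℝ H] [CompleteSpace H]
    (D : Submodule ℝ H) (hD : Dense (D : Set H))
    (A : H →ₗ[ℝ] H)
    (hsym : ∀ x ∈ D, ∀ y ∈ D, ⟪A x, y⟫ = ⟪x, A y⟫)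
    (hpos : ∀ x ∈ D, 0 ≤ ⟪A x, x⟫)
    (lam : ℝ)
    (f : ℝ → H) (hfc : ContinuousOn f (Ici 0))
    (hfb : ∃ C, ∀ t ∈ Ici (0:ℝ), ‖f t‖ ≤ C)
    (u u' u'' : ℝ → H) (hu : IsStrongSolution D A lam f u u' u'')
    (v v' v'' : ℝ → H) (hv : IsStrongSolution D A lam f v v' v'')
    (h0 : u 0 = v 0) (h0' : u' 0 = v' 0) :
    ∀ t ∈ Ici (0:ℝ), u t = v t := by
  rw [IsStrongSolution] at hu hv
  intro T hT
  obtain ⟨hu1, hu2, hu3, hu4, hu5, hu6, hu7⟩ := hu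
  obtain ⟨hv1, hv2, hv3, hv4, hv5, hv6, hv7⟩ := hv
  set w : ℝ → H := fun s => u s - v s with hwdef
  set W' : ℝ → H := fun s => u' s - v' s with hW'def
  set W'' : ℝ → H := fun s => u'' s - v'' s with hW''def
  set z : ℝ → H := fun s => A (A (u s)) - A (A (v s)) with hzdef
  set n : ℝ → H := fun s => ⟪A (u s), u s⟫ • A (u s) - ⟪A (v s), v s⟫ • A (v s) with hndef
  set E : ℝ → ℝ := fun s => ⟪w s, w s⟫ + ⟪W' s, W' s⟫ + ⟪A (w s), A (w s)⟫ with hEdef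
  set e : ℝ → ℝ := fun s =>
    (⟪w s, W' s⟫ + ⟪W' s, w s⟫) + (⟪W' s, W'' s⟫ + ⟪W'' s, W' s⟫) + ⟪W' s, z s + z s⟫
    with hedef
  have hw : ∀ s ∈ Ici (0:ℝ), HasDerivWithinAt w (W' s) (Ici 0) s :=
    fun s hs => (hu1 s hs).sub (hv1 s hs)
  have hw' : ∀ s ∈ Ici (0:ℝ), HasDerivWithinAt W' (W'' s) (Ici 0) s :=
    fun s hs => (hu2 s hs).sub (hv2 s hs)
  have hwD : ∀ s ∈ Ici (0:ℝ), w s ∈ D := fun s hs => D.sub_mem (hu4 s hs) (hv4 s hs)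
  have hAwD : ∀ s ∈ Ici (0:ℝ), A (w s) ∈ D := by
    intro s hs
    simpa [hwdef, map_sub] using D.sub_mem (hu5 s hs) (hv5 s hs)
  have hzw : ∀ s ∈ Ici (0:ℝ), z s = A (A (w s)) := by
    intro s hs; simp [hzdef, hwdef, map_sub]
  have hucont : ContinuousOn u (Ici 0) := fun s hs => (hu1 s hs).continuousWithinAt
  have hvcont : ContinuousOn v (Ici 0) := fun s hs => (hv1 s hs).continuousWithinAt
  have hu'cont : ContinuousOn u' (Ici 0) := fun s hs => (hu2 s hs).continuousWithinAt
  have hv'cont : ContinuousOn v' (Ici 0) := fun s hs => (hv2 s hs).continuousWithinAt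
  -- continuity of z via the equation
  have hz_eq : ∀ s ∈ Ici (0:ℝ), z s =
      (f s - u'' s - u' s + lam • A (u s) - ⟪A (u s), u s⟫ • A (u s))
      - (f s - v'' s - v' s + lam • A (v s) - ⟪A (v s), v s⟫ • A (v s)) := by
    intro s hs
    have e1 : A (A (u s)) = f s - u'' s - u' s + lam • A (u s) - ⟪A (u s), u s⟫ • A (u s) := by
      rw [← hu7 s hs]; abel
    have e2 : A (A (v s)) = f s - v'' s - v' s + lam • A (v s) - ⟪A (v s), v s⟫ • A (v s) := by
      rw [← hv7 s hs]; abel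
    simp only [hzdef]
    rw [e1, e2]
  have hzc : ContinuousOn z (Ici 0) := by
    refine ContinuousOn.congr ?_ hz_eq
    have c1 : ContinuousOn (fun s => ⟪A (u s), u s⟫ • A (u s)) (Ici (0:ℝ)) :=
      (hu6.inner hucont).smul hu6
    have c2 : ContinuousOn (fun s => ⟪A (v s), v s⟫ • A (v s)) (Ici (0:ℝ)) :=
      (hv6.inner hvcont).smul hv6
    exact ((((hfc.sub hu3).sub hu'cont).add (continuousOn_const.smul hu6)).sub c1).sub
      ((((hfc.sub hv3).sub hv'cont).add (continuousOn_const.smul hv6)).sub c2)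
  -- the equation for the difference
  have hEqn : ∀ s ∈ Ici (0:ℝ), W'' s + z s = -W' s + lam • A (w s) - n s := by
    intro s hs
    rw [← sub_eq_zero]
    calc W'' s + z s - (-W' s + lam • A (w s) - n s)
        = (u'' s + u' s + A (A (u s)) - lam • A (u s) + ⟪A (u s), u s⟫ • A (u s))
          - (v'' s + v' s + A (A (v s)) - lam • A (v s) + ⟪A (v s), v s⟫ • A (v s)) := by
          simp only [hW''def, hzdef, hW'def, hndef, hwdef, map_sub, smul_sub]
          abel
      _ = 0 := by rw [hu7 s hs, hv7 s hs, sub_self]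
  -- derivative of the energy
  have hE : ∀ s ∈ Ici (0:ℝ), HasDerivWithinAt E (e s) (Ici 0) s := by
    intro s hs
    exact (((hw s hs).inner ℝ (hw s hs)).add ((hw' s hs).inner ℝ (hw' s hs))).add
      (aux_hasDeriv_inner_AA D A hsym w W' z hw hwD hAwD hzw hzc hs)
  -- bounds on a compact interval
  obtain ⟨M1, hM1⟩ := isCompact_Icc.exists_bound_of_continuousOn
    (hucont.mono (Icc_subset_Ici_self (a := T) (b := (0:ℝ))))
  obtain ⟨M2, hM2⟩ := isCompact_Icc.exists_bound_of_continuousOn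
    (hvcont.mono (Icc_subset_Ici_self (a := T) (b := (0:ℝ))))
  obtain ⟨M3, hM3⟩ := isCompact_Icc.exists_bound_of_continuousOn
    (hu6.mono (Icc_subset_Ici_self (a := T) (b := (0:ℝ))))
  obtain ⟨M4, hM4⟩ := isCompact_Icc.exists_bound_of_continuousOn
    (hv6.mono (Icc_subset_Ici_self (a := T) (b := (0:ℝ))))
  set M : ℝ := max 1 (max (max M1 M2) (max M3 M4)) with hMdef
  have hM1' : ∀ x ∈ Icc (0:ℝ) T, ‖u x‖ ≤ M := fun x hx => (hM1 x hx).trans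
    (le_max_of_le_right (le_max_of_le_left (le_max_left _ _)))
  have hM2' : ∀ x ∈ Icc (0:ℝ) T, ‖v x‖ ≤ M := fun x hx => (hM2 x hx).trans
    (le_max_of_le_right (le_max_of_le_left (le_max_right _ _)))
  have hM3' : ∀ x ∈ Icc (0:ℝ) T, ‖A (u x)‖ ≤ M := fun x hx => (hM3 x hx).trans
    (le_max_of_le_right (le_max_of_le_right (le_max_left _ _)))
  have hM4' : ∀ x ∈ Icc (0:ℝ) T, ‖A (v x)‖ ≤ M := fun x hx => (hM4 x hx).trans
    (le_max_of_le_right (le_max_of_le_right (le_max_right _ _)))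
  have hMone : (1:ℝ) ≤ M := le_max_left _ _
  have hM0 : (0:ℝ) ≤ M := zero_le_one.trans hMone
  set K : ℝ := 3 + |lam| + 3 * (M * M) with hKdef
  -- the Gronwall bound hypothesis
  have bound : ∀ x ∈ Ico (0:ℝ) T, ‖e x‖ ≤ K * ‖E x‖ + 0 := by
    intro x hx
    have hx0 : x ∈ Ici (0:ℝ) := hx.1
    have hxI : x ∈ Icc (0:ℝ) T := ⟨hx.1, hx.2.le⟩
    have hEx : E x = ‖w x‖ ^ 2 + ‖W' x‖ ^ 2 + ‖A (w x)‖ ^ 2 := by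
      simp only [hEdef, real_inner_self_eq_norm_sq]
    have hEnn : 0 ≤ E x := by rw [hEx]; positivity
    -- rewrite e using the equation
    have he2 : e x = (⟪w x, W' x⟫ + ⟪w x, W' x⟫)
        + (-⟪W' x, W' x⟫ + lam * ⟪W' x, A (w x)⟫ - ⟪W' x, n x⟫)
        + (-⟪W' x, W' x⟫ + lam * ⟪W' x, A (w x)⟫ - ⟪W' x, n x⟫) := by
      have h : ⟪W' x, W'' x + z x⟫ = -⟪W' x, W' x⟫ + lam * ⟪W' x, A (w x)⟫ - ⟪W' x, n x⟫ := by
        rw [hEqn x hx0]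
        simp only [inner_sub_right, inner_add_right, inner_neg_right, real_inner_smul_right]
      have h2 : ⟪W' x, z x + z x⟫ + ⟪W' x, W'' x⟫ + ⟪W'' x, W' x⟫
          = ⟪W' x, W'' x + z x⟫ + ⟪W' x, W'' x + z x⟫ := by
        simp only [inner_add_right]
        rw [real_inner_comm (W'' x) (W' x)]
        ring
      simp only [hedef]
      rw [real_inner_comm (W' x) (w x)]
      linarith [h2, h]
    -- bound on n
    have hnx : n x = ⟪A (u x), u x⟫ • (A (w x))
        + (⟪A (w x), u x⟫ + ⟪A (v x), w x⟫) • (A (v x)) := by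
      simp only [hndef, hwdef, map_sub, inner_sub_left, inner_sub_right, add_smul, sub_smul, smul_sub]
      abel
    have b1 : |⟪A (u x), u x⟫| ≤ M * M :=
      (abs_real_inner_le_norm _ _).trans
        (mul_le_mul (hM3' x hxI) (hM1' x hxI) (norm_nonneg _) hM0)
    have b2 : |⟪A (w x), u x⟫ + ⟪A (v x), w x⟫| ≤ ‖A (w x)‖ * M + M * ‖w x‖ := by
      refine (abs_add_le _ _).trans (add_le_add ?_ ?_)
      · exact (abs_real_inner_le_norm _ _).trans
          (mul_le_mul_of_nonneg_left (hM1' x hxI) (norm_nonneg _))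
      · exact (abs_real_inner_le_norm _ _).trans
          (mul_le_mul_of_nonneg_right (hM4' x hxI) (norm_nonneg _))
    have hn_le : ‖n x‖ ≤ M * M * ‖A (w x)‖ + (‖A (w x)‖ * M + M * ‖w x‖) * M := by
      rw [hnx]
      refine (norm_add_le _ _).trans ?_
      rw [norm_smul, norm_smul, Real.norm_eq_abs, Real.norm_eq_abs]
      refine add_le_add (mul_le_mul_of_nonneg_right b1 (norm_nonneg _)) ?_
      refine mul_le_mul b2 (hM4' x hxI) (norm_nonneg _) ?_
      positivity
    -- inner product bounds
    have i1 : |⟪w x, W' x⟫| ≤ ‖w x‖ * ‖W' x‖ := abs_real_inner_le_norm _ _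
    have i2 : ⟪W' x, W' x⟫ = ‖W' x‖ ^ 2 := real_inner_self_eq_norm_sq _
    have i3 : |⟪W' x, A (w x)⟫| ≤ ‖W' x‖ * ‖A (w x)‖ := abs_real_inner_le_norm _ _
    have i4 : |⟪W' x, n x⟫| ≤ ‖W' x‖ * (M * M * ‖A (w x)‖ + (‖A (w x)‖ * M + M * ‖w x‖) * M) :=
      (abs_real_inner_le_norm _ _).trans (mul_le_mul_of_nonneg_left hn_le (norm_nonneg _))
    have hl : (0:ℝ) ≤ |lam| := abs_nonneg _
    have i3' : |lam * ⟪W' x, A (w x)⟫| ≤ |lam| * (‖W' x‖ * ‖A (w x)‖) := by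
      rw [abs_mul]; exact mul_le_mul_of_nonneg_left i3 hl
    rw [Real.norm_eq_abs, Real.norm_eq_abs, abs_of_nonneg hEnn, add_zero, hEx, hKdef]
    rw [he2, i2]
    rw [abs_le] at i1 i3' i4 ⊢
    obtain ⟨i1a, i1b⟩ := i1
    obtain ⟨i3a, i3b⟩ := i3'
    obtain ⟨i4a, i4b⟩ := i4
    constructor <;>
    · linarith [sq_nonneg (‖w x‖ - ‖W' x‖), sq_nonneg (‖w x‖ + ‖W' x‖),
        mul_nonneg hl (sq_nonneg (‖W' x‖ - ‖A (w x)‖)),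
        mul_nonneg hl (sq_nonneg (‖W' x‖ + ‖A (w x)‖)),
        mul_nonneg (mul_nonneg hM0 hM0) (sq_nonneg (‖w x‖ - ‖W' x‖)),
        mul_nonneg (mul_nonneg hM0 hM0) (sq_nonneg (‖w x‖ + ‖W' x‖)),
        mul_nonneg (mul_nonneg hM0 hM0) (sq_nonneg (‖W' x‖ - ‖A (w x)‖)),
        mul_nonneg (mul_nonneg hM0 hM0) (sq_nonneg (‖W' x‖ + ‖A (w x)‖)),
        sq_nonneg ‖w x‖, sq_nonneg ‖W' x‖, sq_nonneg ‖A (w x)‖,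
        mul_nonneg hl (sq_nonneg ‖w x‖), mul_nonneg hl (sq_nonneg ‖W' x‖),
        mul_nonneg hl (sq_nonneg ‖A (w x)‖),
        mul_nonneg (mul_nonneg hM0 hM0) (sq_nonneg ‖w x‖),
        mul_nonneg (mul_nonneg hM0 hM0) (sq_nonneg ‖W' x‖),
        mul_nonneg (mul_nonneg hM0 hM0) (sq_nonneg ‖A (w x)‖)]
  -- Gronwall
  have hEcont : ContinuousOn E (Icc 0 T) :=
    ContinuousOn.mono (fun s hs => (hE s hs).continuousWithinAt) Icc_subset_Ici_self
  have hE0 : E 0 = 0 := by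
    have hw0 : w 0 = 0 := by simp [hwdef, h0]
    have hw0' : W' 0 = 0 := by simp [hW'def, h0']
    simp [hEdef, hw0, hw0']
  have hG := norm_le_gronwallBound_of_norm_deriv_right_le (f := E) (f' := e) (δ := 0)
    (K := K) (ε := 0) (a := 0) (b := T) hEcont
    (fun x hx => (hE x hx.1).mono (Ici_subset_Ici.mpr hx.1)) (by simp [hE0]) bound
  have hET : ‖E T‖ ≤ 0 := by
    have := hG T ⟨hT, le_rfl⟩
    rwa [gronwallBound_ε0_δ0] at this
  have hET0 : E T = 0 := by
    have := abs_nonneg (E T)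
    rw [Real.norm_eq_abs] at hET
    have : |E T| = 0 := le_antisymm hET this
    exact abs_eq_zero.mp this
  have h1 : (0:ℝ) ≤ ⟪w T, w T⟫ := real_inner_self_nonneg
  have h2 : (0:ℝ) ≤ ⟪W' T, W' T⟫ := real_inner_self_nonneg
  have h3 : (0:ℝ) ≤ ⟪A (w T), A (w T)⟫ := real_inner_self_nonneg
  have hwT : ⟪w T, w T⟫ = 0 := by
    simp only [hEdef] at hET0; linarith
  have : w T = 0 := by
    rwa [real_inner_self_eq_norm_sq, pow_eq_zero_iff, norm_eq_zero] at hwT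
    exact two_ne_zero
  have := sub_eq_zero.mp this
  exact this
end

section
/- Classification of stationary solutions of the unforced equation: an element u ∈ D(A) with Au ∈ D(A) satisfies A(Au) − λAu + ⟨Au,u⟩Au = 0 if and only if u = σ·e1 for some σ ∈ {−σ0, 0, σ0}. In particular the unforced equation u'' + u' + A²u − λAu + ⟨Au,u⟩Au = 0 has exactly three stationary solutions. -/
open Filter Topology Set
open scoped RealInnerProductSpace

set_option maxHeartbeats 1000000 in
/-- Classification of stationary solutions of the unforced equation. -/
theorem stationary_solutions_classification
    {H : Type*} [NormedAddCommGroup H] [InnerProductSpace ℝ H] [CompleteSpace H]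
    (D : Submodule ℝ H) (hD : Dense (D : Set H))
    (A : H →ₗ[ℝ] H)
    (hsym : ∀ x ∈ D, ∀ y ∈ D, ⟪A x, y⟫ = ⟪x, A y⟫)
    (hpos : ∀ x ∈ D, 0 ≤ ⟪A x, x⟫)
    (l1 l2 lam : ℝ) (hl1 : 0 < l1) (hl12 : l1 < l2)
    (hlam1 : l1 < lam) (hlam2 : lam < l2)
    (e1 : H) (he1D : e1 ∈ D) (he1 : ‖e1‖ = 1) (hAe1 : A e1 = l1 • e1)
    (hgap : ∀ x ∈ D, ⟪x, e1⟫ = 0 → l2 ^ 2 * ‖x‖ ^ 2 ≤ ‖A x‖ ^ 2)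
    (σ0 : ℝ) (hσ0 : σ0 = Real.sqrt ((lam - l1) / l1))
    :
    ∀ x ∈ D, A x ∈ D →
      (A (A x) - lam • A x + ⟪A x, x⟫ • A x = 0 ↔
        ∃ σ ∈ ({-σ0, 0, σ0} : Set ℝ), x = σ • e1) := by
  have he11 : ⟪e1, e1⟫ = (1 : ℝ) := by
    rw [real_inner_self_eq_norm_sq, he1]; norm_num
  have hσ0sq : σ0 ^ 2 * l1 = lam - l1 := by
    rw [hσ0, Real.sq_sqrt (div_nonneg (by linarith) hl1.le)]
    field_simp
  intro x hx hAx
  constructor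
  · intro heq
    set c : ℝ := ⟪x, e1⟫ with hc
    set μ : ℝ := lam - ⟪A x, x⟫ with hμdef
    have hμ : A (A x) = μ • A x := by
      rw [hμdef, sub_smul]
      linear_combination (norm := module) heq
    have hAxe1 : ⟪A x, e1⟫ = c * l1 := by
      rw [hsym x hx e1 he1D, hAe1, real_inner_smul_right]; ring
    set w : H := A x - (c * l1) • e1 with hw
    have hwD : w ∈ D := D.sub_mem hAx (D.smul_mem _ he1D)
    have hwperp : ⟪w, e1⟫ = 0 := by
      rw [hw, inner_sub_left, real_inner_smul_left, hAxe1, he11]; ring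
    have hAAxe1 : ⟪A (A x), e1⟫ = c * l1 * l1 := by
      rw [hsym (A x) hAx e1 he1D, hAe1, real_inner_smul_right, hAxe1]; ring
    have hcomp : c * l1 * l1 = μ * (c * l1) := by
      have := congrArg (fun v => ⟪v, e1⟫) hμ
      simpa [hAAxe1, real_inner_smul_left, hAxe1] using this
    have hAw : A w = μ • w := by
      rw [hw, map_sub, map_smul, hAe1, hμ, smul_smul, smul_sub, smul_smul]
      rw [show c * l1 * l1 = μ * (c * l1) from hcomp]
    have hw0 : w = 0 := by
      by_contra hne
      have hwn : 0 < ‖w‖ ^ 2 := by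
        have := norm_pos_iff.mpr hne; positivity
      have h1 : 0 ≤ μ * ‖w‖ ^ 2 := by
        have h := hpos w hwD
        rwa [hAw, real_inner_smul_left, real_inner_self_eq_norm_sq] at h
      have hμ0 : 0 ≤ μ := nonneg_of_mul_nonneg_right (mul_comm μ _ ▸ h1) hwn
      have h2 := hgap w hwD hwperp
      rw [hAw, norm_smul] at h2
      have habs : ‖μ‖ = μ := by rw [Real.norm_eq_abs, abs_of_nonneg hμ0]
      rw [habs] at h2
      have h3 : l2 ^ 2 ≤ μ ^ 2 :=
        le_of_mul_le_mul_right (by nlinarith [h2]) hwn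
      have hsum : 0 < l2 + μ := by linarith [hl1.trans hl12]
      have hμl2 : l2 ≤ μ := by nlinarith [h3, hsum]
      have hposx := hpos x hx
      have : μ ≤ lam := by rw [hμdef]; linarith
      linarith
    have hAxval : A x = (c * l1) • e1 := by
      rwa [hw, sub_eq_zero] at hw0
    -- now show x = c • e1
    set z : H := x - c • e1 with hz
    have hzD : z ∈ D := D.sub_mem hx (D.smul_mem _ he1D)
    have hzperp : ⟪z, e1⟫ = 0 := by
      rw [hz, inner_sub_left, real_inner_smul_left, he11, ← hc]; ring
    have hAz : A z = 0 := by
      rw [hz, map_sub, map_smul, hAe1, hAxval, smul_smul, sub_self]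
    have hz0 : z = 0 := by
      have h := hgap z hzD hzperp
      rw [hAz, norm_zero] at h
      have hl2p : 0 < l2 := hl1.trans hl12
      have hz2 : ‖z‖ ^ 2 = 0 := by nlinarith [h, mul_pos hl2p hl2p, sq_nonneg ‖z‖]
      exact norm_eq_zero.mp (pow_eq_zero_iff (by norm_num) |>.mp hz2)
    have hxval : x = c • e1 := by rwa [hz, sub_eq_zero] at hz0
    have hip : ⟪A x, x⟫ = c ^ 2 * l1 := by
      rw [hAxval, hxval, real_inner_smul_left, real_inner_smul_right, he11]; ring
    -- scalar equation
    have hAAx : A (A x) = (c * l1 * l1) • e1 := by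
      rw [hAxval, map_smul, hAe1, smul_smul]
    have hscalar : c * l1 * l1 - lam * (c * l1) + (c ^ 2 * l1) * (c * l1) = 0 := by
      have h := heq
      rw [hip, hAAx, hAxval, smul_smul, smul_smul, ← sub_smul, ← add_smul] at h
      have he1ne : e1 ≠ 0 := by
        intro h0; rw [h0, norm_zero] at he1; norm_num at he1
      exact (smul_eq_zero.mp h).resolve_right he1ne
    have hcl : c * l1 * (l1 - lam + c ^ 2 * l1) = 0 := by linear_combination hscalar
    rcases mul_eq_zero.mp hcl with h | h
    · have hc0 : c = 0 := by
        rcases mul_eq_zero.mp h with h' | h'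
        · exact h'
        · exact absurd h' hl1.ne'
      exact ⟨0, by simp, by rw [hxval, hc0]⟩
    · have hcsq : c ^ 2 = σ0 ^ 2 := by
        have h2 : c ^ 2 * l1 = σ0 ^ 2 * l1 := by linarith [h, hσ0sq]
        exact mul_right_cancel₀ hl1.ne' h2
      have : (c - σ0) * (c + σ0) = 0 := by linear_combination hcsq
      rcases mul_eq_zero.mp this with h' | h'
      · exact ⟨σ0, by simp, by rw [hxval, sub_eq_zero.mp h']⟩
      · exact ⟨-σ0, by simp, by rw [hxval, show c = -σ0 by linarith]⟩
  · rintro ⟨σ, hσ, rfl⟩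
    have hA1 : A (σ • e1) = (σ * l1) • e1 := by rw [map_smul, hAe1, smul_smul]
    have hA2 : A ((σ * l1) • e1) = (σ * l1 * l1) • e1 := by
      rw [map_smul, hAe1, smul_smul]
    have hip : ⟪(σ * l1) • e1, σ • e1⟫ = σ * l1 * σ := by
      rw [real_inner_smul_left, real_inner_smul_right, he11]; ring
    have hcase : σ = 0 ∨ σ ^ 2 * l1 = lam - l1 := by
      simp only [Set.mem_insert_iff, Set.mem_singleton_iff] at hσ
      rcases hσ with h | h | h
      · right; rw [h]; linear_combination hσ0sq
      · left; exact h
      · right; rw [h]; exact hσ0sq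
    have hK : σ * l1 * l1 - lam * (σ * l1) + (σ * l1 * σ) * (σ * l1) = 0 := by
      rcases hcase with h | h
      · rw [h]; ring
      · linear_combination (σ * l1) * h
    rw [hA1, hA2, hip, smul_smul, smul_smul, ← sub_smul, ← add_smul, hK, zero_smul]
end

section
/- Ultimate bound on the corrected energy: there exists a positive constant M1, depending only on λ, λ1, λ2, such that for every bounded continuous f : [0,∞) → H and every strong solution u of u'' + u' + A²u − λAu + ⟨Au,u⟩Au = f(t), one has limsup_{t→+∞} F(t) ≤ M1 · limsup_{t→+∞} |f(t)|². -/
set_option maxHeartbeats 1600000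

open Filter Topology Set
open scoped RealInnerProductSpace

section AuxLemmas

variable {H : Type*} [NormedAddCommGroup H] [InnerProductSpace ℝ H]

lemma aux_inner_deriv_zero {g w : ℝ → H} {G p : H} {s : Set ℝ} {t : ℝ}
    (hg : Tendsto g (𝓝[s] t) (𝓝 G)) (hw : HasDerivWithinAt w p s t)
    (h0 : w t = 0) :
    HasDerivWithinAt (fun r => ⟪g r, w r⟫) ⟪G, p⟫ s t := by
  rw [hasDerivWithinAt_iff_tendsto_slope] at hw ⊢
  have hg' : Tendsto g (𝓝[s \ {t}] t) (𝓝 G) := hg.mono_left (nhdsWithin_mono _ diff_subset)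
  have hs : (slope (fun r => ⟪g r, w r⟫) t) = fun r => ⟪g r, slope w t r⟫ := by
    funext r
    simp [slope_def_module, h0, real_inner_smul_right]
  rw [hs]
  exact hg'.inner hw

lemma aux_hasDerivWithinAt_of_symm {φ : ℝ → ℝ} {u q : ℝ → H} {p : H} {s : Set ℝ} {t : ℝ}
    (hts : t ∈ s)
    (hq : ContinuousWithinAt q s t)
    (hu : HasDerivWithinAt u p s t)
    (hφ : ∀ r ∈ s, φ r = φ t + ⟪q r + q t, u r - u t⟫) :
    HasDerivWithinAt φ (2 * ⟪q t, p⟫) s t := by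
  have h1 : HasDerivWithinAt (fun r => φ t + ⟪q r + q t, u r - u t⟫)
      ⟪q t + q t, p⟫ s t := by
    have h0 := aux_inner_deriv_zero (g := fun r => q r + q t) (w := fun r => u r - u t)
      (G := q t + q t) (p := p)
      (hq.tendsto.add tendsto_const_nhds) (hu.sub_const _) (by simp)
    simpa using h0
  have h2 : HasDerivWithinAt φ ⟪q t + q t, p⟫ s t :=
    h1.congr (fun r hr => (hφ r hr)) (by simpa using hφ t hts)
  convert h2 using 1
  rw [inner_add_left]; ring

end AuxLemmas

lemma aux_key1 (l1 l2 lam γ a b n W : ℝ)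
    (hl1 : 0 < l1) (hlam1 : l1 < lam) (hlam2 : lam < l2)
    (hγ : 0 < γ)
    (hγ1 : 8*γ ≤ l1*(lam - l1)) (hγ2 : 8*γ ≤ l2*(l2 - lam))
    (hb : 0 ≤ b) (hn : 0 ≤ n) (hb2 : b^2 ≤ W*n) (hW : l2^2*n ≤ W) :
    γ*((1/2)*(l1*(l1*a^2) + W) - (lam/2)*(l1*a^2+b) + (1/4)*(l1*a^2+b)^2)
      + γ^2*(a^2/6 + n) + (7/6)*γ^2*(a^2+n)
    ≤ 2*γ*(l1*(l1*a^2)/6 + W - (lam - (l1*a^2+b))*((l1*a^2)/6 + b)) := by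
  have hl2 : 0 < l2 := hl1.trans (hlam1.trans hlam2)
  have hlam : 0 < lam := hl1.trans hlam1
  have hW0 : 0 ≤ W := le_trans (by positivity) hW
  have hbl2 : b*l2 ≤ W := by
    nlinarith [sq_nonneg (b*l2 - W), sq_nonneg (b*l2 + W),
      mul_le_mul_of_nonneg_left hW (sq_nonneg b), mul_pos hl2 hl2]
  have hWsplit : lam*b + (l2-lam)*l2*n ≤ W := by
    have h1 : lam*(b*l2) ≤ lam*W := mul_le_mul_of_nonneg_left hbl2 hlam.le
    have h2 : (l2-lam)*(l2^2*n) ≤ (l2-lam)*W := mul_le_mul_of_nonneg_left hW (by linarith)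
    have h3 : lam*(b*l2) + (l2-lam)*(l2^2*n) ≤ l2*W := by nlinarith
    nlinarith [mul_pos hl2 hl2]
  have hα : 0 ≤ l1*a^2 := by positivity
  have h4 : 8*γ*a^2 ≤ (lam-l1)*(l1*a^2) := by
    nlinarith [mul_le_mul_of_nonneg_right hγ1 (sq_nonneg a)]
  have h5 : 8*γ*n ≤ (l2-lam)*l2*n := by
    nlinarith [mul_le_mul_of_nonneg_right hγ2 hn]
  have key : (2*(l1*(l1*a^2)/6 + W - (lam - (l1*a^2+b))*((l1*a^2)/6 + b))
      - ((1/2)*(l1*(l1*a^2) + W) - (lam/2)*(l1*a^2+b) + (1/4)*(l1*a^2+b)^2)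
      - γ*(a^2/6 + n) - (7/6)*γ*(a^2+n)) ≥ 0 := by
    nlinarith [mul_nonneg hα hb, sq_nonneg (l1*a^2), sq_nonneg b, mul_nonneg hγ.le hn]
  calc γ*((1/2)*(l1*(l1*a^2) + W) - (lam/2)*(l1*a^2+b) + (1/4)*(l1*a^2+b)^2)
    + γ^2*(a^2/6 + n) + (7/6)*γ^2*(a^2+n)
      = γ * (((1/2)*(l1*(l1*a^2) + W) - (lam/2)*(l1*a^2+b) + (1/4)*(l1*a^2+b)^2)
        + γ*(a^2/6 + n) + (7/6)*γ*(a^2+n)) := by ring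
    _ ≤ γ * (2*(l1*(l1*a^2)/6 + W - (lam - (l1*a^2+b))*((l1*a^2)/6 + b))) := by
        apply mul_le_mul_of_nonneg_left _ hγ.le
        linarith
    _ = 2*γ*(l1*(l1*a^2)/6 + W - (lam - (l1*a^2+b))*((l1*a^2)/6 + b)) := by ring

lemma aux_key2 (γ N X Φ : ℝ) (hγ : 0 < γ) (hγ8 : 8*γ ≤ 1)
    (hN : 0 ≤ N) (hX : 0 ≤ X) (hΦ : 0 ≤ Φ) :
    Φ*N - N^2 + 2*γ*N^2 + 2*γ*X*Φ + (γ/2)*N^2 + 2*γ^2*X*N - (7/6)*γ^2*X^2 ≤ 4*Φ^2 := by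
  have h8 : (0:ℝ) ≤ 1 - 8*γ := by linarith
  nlinarith [sq_nonneg (Φ - N), sq_nonneg (7*γ*X - 24*Φ),
    mul_nonneg (mul_nonneg hγ.le hγ.le) (sq_nonneg (7*X - 24*N)),
    mul_nonneg (mul_nonneg h8 hγ.le) (sq_nonneg N),
    mul_nonneg h8 (sq_nonneg N)]

lemma aux_key3 (l1 l2 lam γ a b n W N X : ℝ)
    (hl1 : 0 < l1) (hlam1 : l1 < lam) (hlam2 : lam < l2)
    (hγ : 0 < γ) (hγ8 : 8*γ ≤ 1)
    (hb : 0 ≤ b) (hn : 0 ≤ n) (hW : l2^2*n ≤ W)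
    (hN : 0 ≤ N) (hX : 0 ≤ X) (hX2 : X^2 = a^2 + n) :
    -(lam^2/2 + 2*γ^2/l1^2) ≤
      (1/2)*N^2 + (1/2)*(l1^2*a^2+W) - (lam/2)*(l1*a^2+b) + (1/4)*(l1*a^2+b)^2
        - 2*γ*(X*N) + γ*(a^2/6+n) := by
  have hl2 : 0 < l2 := hl1.trans (hlam1.trans hlam2)
  have hW0 : 0 ≤ W := le_trans (by positivity) hW
  set s : ℝ := l1*a^2 + b with hs
  have hs0 : 0 ≤ s := by positivity
  have hsge : l1*a^2 ≤ s := by linarith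
  have hA : -(lam/2)*s + s^2/8 ≥ -lam^2/2 := by nlinarith [sq_nonneg (s - 2*lam)]
  have hB : s^2/8 ≥ (l1*a^2)^2/8 := by nlinarith [sq_nonneg a, mul_nonneg hl1.le (sq_nonneg a)]
  have hz : 0 ≤ (l1^2*a^2)^2/8 - (5/6)*γ*(l1^2*a^2) + 2*γ^2 := by
    nlinarith [sq_nonneg (l1^2*a^2 - (10/3)*γ), sq_nonneg γ]
  have hC : 0 ≤ (l1*a^2)^2/8 - (5/6)*γ*a^2 + 2*γ^2/l1^2 := by
    have hl12 : (0:ℝ) < l1^2 := by positivity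
    have h2 := div_nonneg hz hl12.le
    have hfs : ((l1^2*a^2)^2/8 - (5/6)*γ*(l1^2*a^2) + 2*γ^2)/l1^2
        = (l1*a^2)^2/8 - (5/6)*γ*a^2 + 2*γ^2/l1^2 := by
      field_simp
    rwa [hfs] at h2
  have hXN : 2*γ*(X*N) ≤ γ*(a^2+n) + γ*N^2 := by
    have h1 : 2*(X*N) ≤ X^2 + N^2 := by nlinarith [sq_nonneg (X-N)]
    nlinarith [mul_le_mul_of_nonneg_left h1 hγ.le]
  linarith [hXN, hA, hB, hC, hW0,
    mul_nonneg (show (0:ℝ) ≤ 1/2 - γ by linarith) (sq_nonneg N),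
    mul_nonneg (mul_nonneg hl1.le hl1.le) (sq_nonneg a)]

lemma aux_gronwall {Fn DF : ℝ → ℝ} {γ K T : ℝ} (hγ : 0 < γ) (hT : 0 ≤ T)
    (hF : ∀ t ∈ Set.Ici (0:ℝ), HasDerivWithinAt Fn (DF t) (Set.Ici 0) t)
    (hle : ∀ t, T ≤ t → DF t + γ * Fn t ≤ 4*K) :
    ∀ t, T ≤ t → Fn t ≤ 4*K/γ + (Fn T - 4*K/γ) * Real.exp (-γ*(t-T)) := by
  have hFc : ContinuousOn Fn (Ici 0) := fun s hs => (hF s hs).continuousWithinAt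
  set g : ℝ → ℝ := fun t => (Fn t - 4*K/γ) * Real.exp (γ*t) with hg
  have hgc : ContinuousOn g (Ici T) :=
    ((hFc.mono (Ici_subset_Ici.2 hT)).sub continuousOn_const).mul
      ((Real.continuous_exp.comp (continuous_const.mul continuous_id)).continuousOn)
  have hderiv : ∀ t ∈ interior (Ici T), HasDerivAt g ((DF t + γ*Fn t - 4*K)*Real.exp (γ*t)) t := by
    intro t ht
    rw [interior_Ici] at ht
    have ht0 : (0:ℝ) < t := lt_of_le_of_lt hT ht
    have hFt : HasDerivAt Fn (DF t) t := (hF t ht0.le).hasDerivAt (Ici_mem_nhds ht0)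
    have hexp : HasDerivAt (fun r => Real.exp (γ*r)) (Real.exp (γ*t)*γ) t := by
      exact ((Real.hasDerivAt_exp (γ*t)).comp t ((hasDerivAt_id t).const_mul γ)).congr_deriv (by ring)
    have := (hFt.sub_const (4*K/γ)).mul hexp
    refine this.congr_deriv ?_
    field_simp
    ring
  have hanti : AntitoneOn g (Ici T) := by
    apply antitoneOn_of_deriv_nonpos (convex_Ici T) hgc
    · intro t ht
      exact (hderiv t ht).differentiableAt.differentiableWithinAt
    · intro t ht
      rw [(hderiv t ht).deriv]
      have h1 := hle t (le_of_lt (by rwa [interior_Ici] at ht))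
      nlinarith [Real.exp_pos (γ*t)]
  intro t htT
  have hgt : g t ≤ g T := hanti self_mem_Ici htT htT
  have hEt : (0:ℝ) < Real.exp (γ*t) := Real.exp_pos _
  rw [hg] at hgt
  simp only at hgt
  have h2 : Fn t - 4*K/γ ≤ (Fn T - 4*K/γ) * Real.exp (γ*T) / Real.exp (γ*t) :=
    (le_div_iff₀ hEt).2 hgt
  have h3 : (Fn T - 4*K/γ) * Real.exp (γ*T) / Real.exp (γ*t)
      = (Fn T - 4*K/γ) * Real.exp (-γ*(t-T)) := by
    rw [mul_div_assoc, ← Real.exp_sub]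
    ring_nf
  linarith [h2.trans_eq h3]

lemma aux_pointwise {H : Type*} [NormedAddCommGroup H] [InnerProductSpace ℝ H]
    (D : Submodule ℝ H) (A : H →ₗ[ℝ] H)
    (hsym : ∀ x ∈ D, ∀ y ∈ D, ⟪A x, y⟫ = ⟪x, A y⟫)
    (hpos : ∀ x ∈ D, 0 ≤ ⟪A x, x⟫)
    (l1 l2 lam : ℝ) (hl1 : 0 < l1) (hlam1 : l1 < lam) (hlam2 : lam < l2)
    (e1 : H) (he1D : e1 ∈ D) (he1e1 : ⟪e1, e1⟫ = (1:ℝ)) (hAe1 : A e1 = l1 • e1)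
    (hgap : ∀ x ∈ D, ⟪x, e1⟫ = 0 → l2 ^ 2 * ‖x‖ ^ 2 ≤ ‖A x‖ ^ 2)
    (γ0 : ℝ) (hγpos : 0 < γ0) (hγ81 : 8*γ0 ≤ 1)
    (hγ8a : 8*γ0 ≤ l1*(lam-l1)) (hγ8b : 8*γ0 ≤ l2*(l2-lam))
    (x p w φ : H) (hxD : x ∈ D) (hAxD : A x ∈ D)
    (heq : w + p + A (A x) - lam • A x + ⟪A x, x⟫ • A x = φ) :
    ⟪w, p⟫ + ⟪A (A x), p⟫ - lam*⟪A x, p⟫ + ⟪A x, x⟫*⟪A x, p⟫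
      + (2*γ0)*(⟪x - ((5/6)*⟪x,e1⟫)•e1, w⟫ + ⟪p - ((5/6)*⟪p,e1⟫)•e1, p⟫)
      + γ0*(⟪x - ((5/6)*⟪x,e1⟫)•e1, p⟫ + ⟪p - ((5/6)*⟪p,e1⟫)•e1, x⟫)
      + γ0*((1/2)*‖p‖^2 + (1/2)*‖A x‖^2 - (lam/2)*⟪A x, x⟫ + (1/4)*⟪A x, x⟫^2
          + 2*γ0*⟪x - ((5/6)*⟪x,e1⟫)•e1, p⟫ + γ0*⟪x - ((5/6)*⟪x,e1⟫)•e1, x⟫)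
      ≤ 4*‖φ‖^2 := by
  have hw : w = φ - p - A (A x) + lam • A x - ⟪A x, x⟫ • A x := by
    rw [← heq]; module
  -- the orthogonal part
  set v : H := x - ⟪x,e1⟫•e1 with hv
  have hvD : v ∈ D := D.sub_mem hxD (D.smul_mem _ he1D)
  have hve1 : ⟪v, e1⟫ = 0 := by
    rw [hv, inner_sub_left, real_inner_smul_left, he1e1]; ring
  have he1v : ⟪e1, v⟫ = 0 := by rw [real_inner_comm]; exact hve1
  have hAveq : A v = A x - (l1*⟪x,e1⟫)•e1 := by
    rw [hv, map_sub, map_smul, hAe1, smul_smul, mul_comm]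
  have hAvD : A v ∈ D := by rw [hAveq]; exact D.sub_mem hAxD (D.smul_mem _ he1D)
  have hAxeq : A x = (l1*⟪x,e1⟫)•e1 + A v := by rw [hAveq]; abel
  have hAve1 : ⟪A v, e1⟫ = 0 := by
    rw [hsym v hvD e1 he1D, hAe1, real_inner_smul_right, hve1, mul_zero]
  have he1Av : ⟪e1, A v⟫ = 0 := by rw [real_inner_comm]; exact hAve1
  -- splitting lemma
  have hsplit : ∀ y : H, ⟪y, x⟫ = ⟪y, v⟫ + ⟪x,e1⟫*⟪y, e1⟫ := by
    intro y
    rw [hv, inner_sub_right, real_inner_smul_right]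
    ring
  have f1 : ⟪e1, x⟫ = ⟪x, e1⟫ := real_inner_comm _ _
  have f2 : ⟪A v, x⟫ = ⟪A v, v⟫ := by rw [hsplit (A v), hAve1]; ring
  have f3 : ⟪x, A v⟫ = ⟪A v, v⟫ := by rw [real_inner_comm]; exact f2
  have f4 : ⟪A v, A x⟫ = ⟪A v, A v⟫ := by
    rw [hAxeq, inner_add_right, real_inner_smul_right, hAve1]; ring
  have f5 : ⟪e1, A x⟫ = l1*⟪x,e1⟫ := by
    rw [hAxeq, inner_add_right, real_inner_smul_right, he1e1, he1Av]; ring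
  have f6 : ⟪A x, x⟫ = l1*⟪x,e1⟫^2 + ⟪A v, v⟫ := by
    rw [hAxeq, inner_add_left, real_inner_smul_left, f1, f2]; ring
  have f7 : ⟪x, A x⟫ = l1*⟪x,e1⟫^2 + ⟪A v, v⟫ := by rw [real_inner_comm]; exact f6
  have f8 : ⟪A x, A x⟫ = l1^2*⟪x,e1⟫^2 + ⟪A v, A v⟫ := by
    rw [hAxeq]
    simp only [inner_add_left, inner_add_right, real_inner_smul_left,
      real_inner_smul_right, he1e1, he1Av, hAve1]
    ring
  have f9 : ⟪x, A (A x)⟫ = l1^2*⟪x,e1⟫^2 + ⟪A v, A v⟫ := by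
    rw [← hsym x hxD (A x) hAxD]; exact f8
  have f10 : ⟪e1, A (A x)⟫ = l1^2*⟪x,e1⟫ := by
    rw [← hsym e1 he1D (A x) hAxD, hAe1, real_inner_smul_left, f5]; ring
  have f11 : ⟪x, x⟫ = ⟪x,e1⟫^2 + ⟪v, v⟫ := by
    rw [hsplit x,
      show ⟪x, v⟫ = ⟪v, v⟫ by rw [real_inner_comm, hsplit v, hve1]; ring]
    ring
  -- scalar data
  have hb0 : 0 ≤ ⟪A v, v⟫ := hpos v hvD
  have hn0 : 0 ≤ ⟪v, v⟫ := real_inner_self_nonneg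
  have hCS : ⟪A v, v⟫^2 ≤ ⟪A v, A v⟫*⟪v, v⟫ := by
    have := real_inner_mul_inner_self_le (A v) v
    nlinarith [this]
  have hgapv : l2^2*⟪v, v⟫ ≤ ⟪A v, A v⟫ := by
    have h := hgap v hvD hve1
    rwa [← real_inner_self_eq_norm_sq, ← real_inner_self_eq_norm_sq] at h
  have hX2 : ‖x‖^2 = ⟪x,e1⟫^2 + ⟪v, v⟫ := by
    rw [← real_inner_self_eq_norm_sq]; exact f11
  have hN2 : ⟪p, p⟫ = ‖p‖^2 := real_inner_self_eq_norm_sq p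
  have hAx2 : ‖A x‖^2 = l1^2*⟪x,e1⟫^2 + ⟪A v, A v⟫ := by
    rw [← real_inner_self_eq_norm_sq]; exact f8
  -- norm of Px
  have hPxn : ‖x - ((5/6)*⟪x,e1⟫)•e1‖ ≤ ‖x‖ := by
    have h1 : ‖x - ((5/6)*⟪x,e1⟫)•e1‖^2 ≤ ‖x‖^2 := by
      rw [← real_inner_self_eq_norm_sq, ← real_inner_self_eq_norm_sq]
      simp only [inner_sub_left, inner_sub_right, real_inner_smul_left,
        real_inner_smul_right, he1e1, f1]
      nlinarith [sq_nonneg (⟪x,e1⟫ : ℝ)]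
    exact (pow_le_pow_iff_left₀ (norm_nonneg _) (norm_nonneg _) two_ne_zero).1 h1
  have hPφ : ⟪x - ((5/6)*⟪x,e1⟫)•e1, φ⟫ ≤ ‖x‖*‖φ‖ :=
    (real_inner_le_norm _ _).trans (mul_le_mul_of_nonneg_right hPxn (norm_nonneg _))
  have hPp : ⟪x - ((5/6)*⟪x,e1⟫)•e1, p⟫ ≤ ‖x‖*‖p‖ :=
    (real_inner_le_norm _ _).trans (mul_le_mul_of_nonneg_right hPxn (norm_nonneg _))
  have hφp : ⟪φ, p⟫ ≤ ‖φ‖*‖p‖ := real_inner_le_norm _ _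
  -- expanded versions of the bounds
  have hPφ' : ⟪x, φ⟫ - (5/6)*⟪x,e1⟫*⟪e1,φ⟫ ≤ ‖x‖*‖φ‖ := by
    have := hPφ
    rwa [inner_sub_left, real_inner_smul_left] at this
  have hPp' : ⟪x, p⟫ - (5/6)*⟪x,e1⟫*⟪e1,p⟫ ≤ ‖x‖*‖p‖ := by
    have := hPp
    rwa [inner_sub_left, real_inner_smul_left] at this
  -- key lemma instances
  have K1 := aux_key1 l1 l2 lam γ0 ⟪x,e1⟫ ⟪A v, v⟫ ⟪v,v⟫ ⟪A v, A v⟫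
    hl1 hlam1 hlam2 hγpos hγ8a hγ8b hb0 hn0 hCS hgapv
  have K2 := aux_key2 γ0 ‖p‖ ‖x‖ ‖φ‖ hγpos hγ81
    (norm_nonneg _) (norm_nonneg _) (norm_nonneg _)
  -- scaled bounds
  have m1 : 2*γ0*(⟪x, φ⟫ - (5/6)*⟪x,e1⟫*⟪e1,φ⟫) ≤ 2*γ0*(‖x‖*‖φ‖) :=
    mul_le_mul_of_nonneg_left hPφ' (by positivity)
  have m2 : (2*γ0^2)*(⟪x, p⟫ - (5/6)*⟪x,e1⟫*⟪p,e1⟫) ≤ (2*γ0^2)*(‖x‖*‖p‖) := by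
    have h := mul_le_mul_of_nonneg_left hPp' (show (0:ℝ) ≤ 2*γ0^2 by positivity)
    rwa [real_inner_comm p e1] at h
  have m4 : 2*γ0*(⟪p,e1⟫*⟪p,e1⟫) ≥ 0 :=
    mul_nonneg (by positivity) (mul_self_nonneg _)
  -- commutation identities
  have c1 : ⟪p, x⟫ = ⟪x, p⟫ := real_inner_comm _ _
  have c2 : ⟪e1, p⟫ = ⟪p, e1⟫ := real_inner_comm _ _
  -- now expand everything
  rw [hw]
  simp only [inner_sub_left, inner_sub_right, inner_add_left, inner_add_right,
    real_inner_smul_left, real_inner_smul_right]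
  simp only [f6, f9, f10, f7, f5, f11, f1, c1, c2, hN2, hAx2]
  have hX2γ : γ0^2*‖x‖^2 = γ0^2*(⟪x,e1⟫^2 + ⟪v,v⟫) := by rw [hX2]
  linarith [K1, K2, m1, m2, m4, hφp, hX2γ]
lemma aux_lower {H : Type*} [NormedAddCommGroup H] [InnerProductSpace ℝ H]
    (D : Submodule ℝ H) (A : H →ₗ[ℝ] H)
    (hsym : ∀ x ∈ D, ∀ y ∈ D, ⟪A x, y⟫ = ⟪x, A y⟫)
    (hpos : ∀ x ∈ D, 0 ≤ ⟪A x, x⟫)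
    (l1 l2 lam : ℝ) (hl1 : 0 < l1) (hlam1 : l1 < lam) (hlam2 : lam < l2)
    (e1 : H) (he1D : e1 ∈ D) (he1e1 : ⟪e1, e1⟫ = (1:ℝ)) (hAe1 : A e1 = l1 • e1)
    (hgap : ∀ x ∈ D, ⟪x, e1⟫ = 0 → l2 ^ 2 * ‖x‖ ^ 2 ≤ ‖A x‖ ^ 2)
    (γ0 : ℝ) (hγpos : 0 < γ0) (hγ81 : 8*γ0 ≤ 1)
    (x p : H) (hxD : x ∈ D) (hAxD : A x ∈ D) :
    -(lam^2/2 + 2*γ0^2/l1^2) ≤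
      (1/2)*‖p‖^2 + (1/2)*‖A x‖^2 - (lam/2)*⟪A x, x⟫ + (1/4)*⟪A x, x⟫^2
        + 2*γ0*⟪x - ((5/6)*⟪x,e1⟫)•e1, p⟫ + γ0*⟪x - ((5/6)*⟪x,e1⟫)•e1, x⟫ := by
  set v : H := x - ⟪x,e1⟫•e1 with hv
  have hvD : v ∈ D := D.sub_mem hxD (D.smul_mem _ he1D)
  have hve1 : ⟪v, e1⟫ = 0 := by
    rw [hv, inner_sub_left, real_inner_smul_left, he1e1]; ring
  have he1v : ⟪e1, v⟫ = 0 := by rw [real_inner_comm]; exact hve1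
  have hAveq : A v = A x - (l1*⟪x,e1⟫)•e1 := by
    rw [hv, map_sub, map_smul, hAe1, smul_smul, mul_comm]
  have hAvD : A v ∈ D := by rw [hAveq]; exact D.sub_mem hAxD (D.smul_mem _ he1D)
  have hAxeq : A x = (l1*⟪x,e1⟫)•e1 + A v := by rw [hAveq]; abel
  have hAve1 : ⟪A v, e1⟫ = 0 := by
    rw [hsym v hvD e1 he1D, hAe1, real_inner_smul_right, hve1, mul_zero]
  have he1Av : ⟪e1, A v⟫ = 0 := by rw [real_inner_comm]; exact hAve1
  have hsplit : ∀ y : H, ⟪y, x⟫ = ⟪y, v⟫ + ⟪x,e1⟫*⟪y, e1⟫ := by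
    intro y
    rw [hv, inner_sub_right, real_inner_smul_right]
    ring
  have f1 : ⟪e1, x⟫ = ⟪x, e1⟫ := real_inner_comm _ _
  have f2 : ⟪A v, x⟫ = ⟪A v, v⟫ := by rw [hsplit (A v), hAve1]; ring
  have f6 : ⟪A x, x⟫ = l1*⟪x,e1⟫^2 + ⟪A v, v⟫ := by
    rw [hAxeq, inner_add_left, real_inner_smul_left, f1, f2]; ring
  have f8 : ⟪A x, A x⟫ = l1^2*⟪x,e1⟫^2 + ⟪A v, A v⟫ := by
    rw [hAxeq]
    simp only [inner_add_left, inner_add_right, real_inner_smul_left,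
      real_inner_smul_right, he1e1, he1Av, hAve1]
    ring
  have f11 : ⟪x, x⟫ = ⟪x,e1⟫^2 + ⟪v, v⟫ := by
    rw [hsplit x,
      show ⟪x, v⟫ = ⟪v, v⟫ by rw [real_inner_comm, hsplit v, hve1]; ring]
    ring
  have hb0 : 0 ≤ ⟪A v, v⟫ := hpos v hvD
  have hn0 : 0 ≤ ⟪v, v⟫ := real_inner_self_nonneg
  have hgapv : l2^2*⟪v, v⟫ ≤ ⟪A v, A v⟫ := by
    have h := hgap v hvD hve1
    rwa [← real_inner_self_eq_norm_sq, ← real_inner_self_eq_norm_sq] at h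
  have hX2 : ‖x‖^2 = ⟪x,e1⟫^2 + ⟪v, v⟫ := by
    rw [← real_inner_self_eq_norm_sq]; exact f11
  have hAx2 : ‖A x‖^2 = l1^2*⟪x,e1⟫^2 + ⟪A v, A v⟫ := by
    rw [← real_inner_self_eq_norm_sq]; exact f8
  have hPxn : ‖x - ((5/6)*⟪x,e1⟫)•e1‖ ≤ ‖x‖ := by
    have h1 : ‖x - ((5/6)*⟪x,e1⟫)•e1‖^2 ≤ ‖x‖^2 := by
      rw [← real_inner_self_eq_norm_sq, ← real_inner_self_eq_norm_sq]
      simp only [inner_sub_left, inner_sub_right, real_inner_smul_left,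
        real_inner_smul_right, he1e1, f1]
      nlinarith [sq_nonneg (⟪x,e1⟫ : ℝ)]
    exact (pow_le_pow_iff_left₀ (norm_nonneg _) (norm_nonneg _) two_ne_zero).1 h1
  have hPxp : -(‖x‖*‖p‖) ≤ ⟪x - ((5/6)*⟪x,e1⟫)•e1, p⟫ := by
    have h1 := abs_real_inner_le_norm (x - ((5/6)*⟪x,e1⟫)•e1) p
    have h2 := abs_le.1 h1
    have h3 : ‖x - ((5/6)*⟪x,e1⟫)•e1‖ * ‖p‖ ≤ ‖x‖*‖p‖ :=
      mul_le_mul_of_nonneg_right hPxn (norm_nonneg _)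
    linarith [h2.1]
  have hPxx : ⟪x - ((5/6)*⟪x,e1⟫)•e1, x⟫ = ⟪x,e1⟫^2/6 + ⟪v,v⟫ := by
    rw [inner_sub_left, real_inner_smul_left, f11, f1]
    ring
  have K3 := aux_key3 l1 l2 lam γ0 ⟪x,e1⟫ ⟪A v, v⟫ ⟪v,v⟫ ⟪A v, A v⟫ ‖p‖ ‖x‖
    hl1 hlam1 hlam2 hγpos hγ81 hb0 hn0 hgapv (norm_nonneg _) (norm_nonneg _) hX2
  have m5 : 2*γ0*(-(‖x‖*‖p‖)) ≤ 2*γ0*⟪x - ((5/6)*⟪x,e1⟫)•e1, p⟫ :=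
    mul_le_mul_of_nonneg_left hPxp (by positivity)
  rw [hPxx, f6, hAx2]
  linarith [K3, m5]

/-- Ultimate bound on the corrected energy. -/
theorem ultimate_bound_corrected_energy
    {H : Type*} [NormedAddCommGroup H] [InnerProductSpace ℝ H] [CompleteSpace H]
    (D : Submodule ℝ H) (hD : Dense (D : Set H))
    (A : H →ₗ[ℝ] H)
    (hsym : ∀ x ∈ D, ∀ y ∈ D, ⟪A x, y⟫ = ⟪x, A y⟫)
    (hpos : ∀ x ∈ D, 0 ≤ ⟪A x, x⟫)
    (l1 l2 lam : ℝ) (hl1 : 0 < l1) (hl12 : l1 < l2)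
    (hlam1 : l1 < lam) (hlam2 : lam < l2)
    (e1 : H) (he1D : e1 ∈ D) (he1 : ‖e1‖ = 1) (hAe1 : A e1 = l1 • e1)
    (hgap : ∀ x ∈ D, ⟪x, e1⟫ = 0 → l2 ^ 2 * ‖x‖ ^ 2 ≤ ‖A x‖ ^ 2)
    (γ0 : ℝ) (hγ0 : γ0 = (1/8) * min 1 (min (l1 * (lam - l1)) (l2 * (l2 - lam))))
    :
    ∃ M1 > (0:ℝ),
      ∀ f : ℝ → H, ContinuousOn f (Ici 0) → (∃ C, ∀ t ∈ Ici (0:ℝ), ‖f t‖ ≤ C) →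
      ∀ u u' u'' : ℝ → H, IsStrongSolution D A lam f u u' u'' →
      ∀ F : ℝ → ℝ,
        (∀ t, F t =
          (1/2) * ‖u' t‖ ^ 2 + (1/2) * ‖A (u t)‖ ^ 2
            - (lam/2) * ⟪A (u t), u t⟫ + (1/4) * ⟪A (u t), u t⟫ ^ 2
            + 2 * γ0 * ⟪u t - ((5/6) * ⟪u t, e1⟫) • e1, u' t⟫
            + γ0 * ⟪u t - ((5/6) * ⟪u t, e1⟫) • e1, u t⟫) →
        IsBoundedUnder (· ≤ ·) atTop F ∧
        limsup F atTop ≤ M1 * limsup (fun t => ‖f t‖ ^ 2) atTop := by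
  have hl2 : 0 < l2 := hl1.trans hl12
  have hlam : 0 < lam := hl1.trans hlam1
  have hp1 : 0 < l1*(lam - l1) := by nlinarith
  have hp2 : 0 < l2*(l2 - lam) := by nlinarith
  have hγpos : 0 < γ0 := by
    rw [hγ0]
    have : (0:ℝ) < min 1 (min (l1 * (lam - l1)) (l2 * (l2 - lam))) :=
      lt_min one_pos (lt_min hp1 hp2)
    linarith
  have hγ81 : 8*γ0 ≤ 1 := by
    rw [hγ0]
    have := min_le_left (1:ℝ) (min (l1 * (lam - l1)) (l2 * (l2 - lam)))
    linarith
  have hγ8a : 8*γ0 ≤ l1*(lam-l1) := by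
    rw [hγ0]
    have h1 := min_le_right (1:ℝ) (min (l1 * (lam - l1)) (l2 * (l2 - lam)))
    have h2 := min_le_left (l1 * (lam - l1)) (l2 * (l2 - lam))
    linarith
  have hγ8b : 8*γ0 ≤ l2*(l2-lam) := by
    rw [hγ0]
    have h1 := min_le_right (1:ℝ) (min (l1 * (lam - l1)) (l2 * (l2 - lam)))
    have h2 := min_le_right (l1 * (lam - l1)) (l2 * (l2 - lam))
    linarith
  refine ⟨4/γ0, by positivity, ?_⟩
  rintro f hfc ⟨C, hC⟩ u u' u'' hsol F hFdef
  obtain ⟨hu, hu', hu''c, hmem, hmemA, hAuc, heqn⟩ := hsol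
  have huc : ContinuousOn u (Ici 0) := fun s hs => (hu s hs).continuousWithinAt
  have hu'c : ContinuousOn u' (Ici 0) := fun s hs => (hu' s hs).continuousWithinAt
  have he1e1 : ⟪e1, e1⟫ = (1:ℝ) := by
    rw [real_inner_self_eq_norm_sq, he1]; norm_num
  -- continuity of A ∘ A ∘ u
  have hqeq : ∀ r ∈ Ici (0:ℝ), A (A (u r))
      = f r - u'' r - u' r + lam • A (u r) - ⟪A (u r), u r⟫ • A (u r) := by
    intro r hr
    rw [← heqn r hr]
    module
  have hqc : ContinuousOn (fun r => A (A (u r))) (Ici 0) := by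
    refine ContinuousOn.congr ?_ hqeq
    exact ((((hfc.sub hu''c).sub hu'c).add (hAuc.const_smul lam)).sub
      ((hAuc.inner huc).smul hAuc))
  -- derivative of ⟪Au, u⟫
  have hAuu : ∀ t ∈ Ici (0:ℝ), HasDerivWithinAt (fun r => (⟪A (u r), u r⟫:ℝ))
      (2*⟪A (u t), u' t⟫) (Ici 0) t := by
    intro t ht
    refine aux_hasDerivWithinAt_of_symm ht (hAuc t ht) (hu t ht) ?_
    intro r hr
    have hsymrt : ⟪A (u r), u t⟫ = ⟪A (u t), u r⟫ := by
      rw [hsym (u r) (hmem r hr) (u t) (hmem t ht), real_inner_comm]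
    simp only [inner_add_left, inner_sub_right]
    linarith
  -- derivative of ⟪A(Au), u⟫ = ‖Au‖²
  have hAAuu : ∀ t ∈ Ici (0:ℝ), HasDerivWithinAt (fun r => (⟪A (A (u r)), u r⟫:ℝ))
      (2*⟪A (A (u t)), u' t⟫) (Ici 0) t := by
    intro t ht
    refine aux_hasDerivWithinAt_of_symm ht (hqc t ht) (hu t ht) ?_
    intro r hr
    have h1 : ⟪A (A (u r)), u t⟫ = ⟪A (A (u t)), u r⟫ := by
      calc ⟪A (A (u r)), u t⟫ = ⟪A (u r), A (u t)⟫ :=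
            hsym (A (u r)) (hmemA r hr) (u t) (hmem t ht)
        _ = ⟪A (u t), A (u r)⟫ := real_inner_comm _ _
        _ = ⟪A (A (u t)), u r⟫ := (hsym (A (u t)) (hmemA t ht) (u r) (hmem r hr)).symm
    simp only [inner_add_left, inner_sub_right]
    linarith
  -- P part
  set Pm : ℝ → H := fun r => u r - ((5/6) * ⟪u r, e1⟫) • e1 with hPm
  have hPmd : ∀ t ∈ Ici (0:ℝ),
      HasDerivWithinAt Pm (u' t - ((5/6)*⟪u' t, e1⟫)•e1) (Ici 0) t := by
    intro t ht
    have h1 : HasDerivWithinAt (fun r => (⟪u r, e1⟫:ℝ)) ⟪u' t, e1⟫ (Ici 0) t := by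
      simpa using (hu t ht).inner ℝ (hasDerivWithinAt_const t (Ici 0) e1)
    exact (hu t ht).sub ((h1.const_mul ((5:ℝ)/6)).smul_const e1)
  -- derivative of F
  set DF : ℝ → ℝ := fun t =>
    ⟪u'' t, u' t⟫ + ⟪A (A (u t)), u' t⟫ - lam*⟪A (u t), u' t⟫
      + ⟪A (u t), u t⟫*⟪A (u t), u' t⟫
      + (2*γ0)*(⟪Pm t, u'' t⟫ + ⟪u' t - ((5/6)*⟪u' t, e1⟫)•e1, u' t⟫)
      + γ0*(⟪Pm t, u' t⟫ + ⟪u' t - ((5/6)*⟪u' t, e1⟫)•e1, u t⟫) with hDF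
  have hFder : ∀ t ∈ Ici (0:ℝ), HasDerivWithinAt F (DF t) (Ici 0) t := by
    intro t ht
    have h1 := ((hu' t ht).inner ℝ (hu' t ht)).const_mul ((1:ℝ)/2)
    have h2 := (hAAuu t ht).const_mul ((1:ℝ)/2)
    have h3 := (hAuu t ht).const_mul (lam/2)
    have h4 := ((hAuu t ht).pow 2).const_mul ((1:ℝ)/4)
    have h5 := ((hPmd t ht).inner ℝ (hu' t ht)).const_mul (2*γ0)
    have h6 := ((hPmd t ht).inner ℝ (hu t ht)).const_mul γ0
    have hG := ((((h1.add h2).sub h3).add h4).add h5).add h6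
    have hFeq : ∀ r ∈ Ici (0:ℝ), F r
        = (1/2)*⟪u' r, u' r⟫ + (1/2)*⟪A (A (u r)), u r⟫
          - lam/2*⟪A (u r), u r⟫ + (1/4)*⟪A (u r), u r⟫^2
          + (2*γ0)*⟪Pm r, u' r⟫ + γ0*⟪Pm r, u r⟫ := by
      intro r hr
      rw [hFdef r]
      rw [← real_inner_self_eq_norm_sq (u' r)]
      rw [show ‖A (u r)‖^2 = ⟪A (A (u r)), u r⟫ by
        rw [← real_inner_self_eq_norm_sq, ← hsym (A (u r)) (hmemA r hr) (u r) (hmem r hr)]]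
    have hG' := hG.congr hFeq (hFeq t ht)
    refine hG'.congr_deriv ?_
    rw [hDF]
    simp only [real_inner_comm (u'' t) (u' t)]
    ring
  -- pointwise differential inequality
  have hIneq : ∀ t ∈ Ici (0:ℝ), DF t + γ0 * F t ≤ 4*‖f t‖^2 := by
    intro t ht
    have hkey := aux_pointwise D A hsym hpos l1 l2 lam hl1 hlam1 hlam2
      e1 he1D he1e1 hAe1 hgap γ0 hγpos hγ81 hγ8a hγ8b
      (u t) (u' t) (u'' t) (f t) (hmem t ht) (hmemA t ht) (heqn t ht)
    rw [hFdef t]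
    simp only [hDF, hPm]
    linarith [hkey]
  -- lower bound
  have hLow : ∀ t ∈ Ici (0:ℝ), -(lam^2/2 + 2*γ0^2/l1^2) ≤ F t := by
    intro t ht
    have hkey := aux_lower D A hsym hpos l1 l2 lam hl1 hlam1 hlam2
      e1 he1D he1e1 hAe1 hgap γ0 hγpos hγ81 (u t) (u' t) (hmem t ht) (hmemA t ht)
    rw [hFdef t]
    linarith [hkey]
  have hC0 : 0 ≤ C := le_trans (norm_nonneg _) (hC 0 self_mem_Ici)
  -- Gronwall-type estimate
  have hgron : ∀ (T K : ℝ), 0 ≤ T → (∀ t, T ≤ t → ‖f t‖^2 ≤ K) →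
      ∀ t, T ≤ t → F t ≤ 4*K/γ0 + (F T - 4*K/γ0) * Real.exp (-γ0*(t-T)) := by
    intro T K hT hK
    apply aux_gronwall hγpos hT hFder
    intro t htT
    have ht0 : (0:ℝ) ≤ t := le_trans hT htT
    have h1 := hIneq t ht0
    have h2 := hK t htT
    linarith
  -- global upper bound
  have hbd1 : ∀ t, (0:ℝ) ≤ t → F t ≤ 4*(C^2)/γ0 + |F 0 - 4*(C^2)/γ0| := by
    intro t ht
    have h := hgron 0 (C^2) le_rfl (fun s hs => by nlinarith [hC s (le_trans (le_refl 0) hs : s ∈ Ici (0:ℝ)), norm_nonneg (f s)]) t ht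
    have he : Real.exp (-γ0*(t-0)) ≤ 1 := by
      rw [Real.exp_le_one_iff]
      nlinarith
    have habs : (F 0 - 4*(C^2)/γ0) * Real.exp (-γ0*(t-0)) ≤ |F 0 - 4*(C^2)/γ0| := by
      calc (F 0 - 4*(C^2)/γ0) * Real.exp (-γ0*(t-0))
          ≤ |F 0 - 4*(C^2)/γ0| * Real.exp (-γ0*(t-0)) :=
            mul_le_mul_of_nonneg_right (le_abs_self _) (Real.exp_pos _).le
        _ ≤ |F 0 - 4*(C^2)/γ0| * 1 := mul_le_mul_of_nonneg_left he (abs_nonneg _)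
        _ = |F 0 - 4*(C^2)/γ0| := mul_one _
    linarith
  constructor
  · exact isBoundedUnder_of_eventually_le (a := 4*(C^2)/γ0 + |F 0 - 4*(C^2)/γ0|)
      (by filter_upwards [eventually_ge_atTop 0] with t ht using hbd1 t ht)
  · set L := limsup (fun t => ‖f t‖^2) atTop with hL
    have hfbdd : IsBoundedUnder (· ≤ ·) atTop (fun t => ‖f t‖^2) :=
      isBoundedUnder_of_eventually_le (a := C^2)
        (by filter_upwards [eventually_ge_atTop 0] with t ht
            nlinarith [hC t (ht : t ∈ Ici (0:ℝ)), norm_nonneg (f t)])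
    have hcob : IsCoboundedUnder (· ≤ ·) atTop F := by
      have hb : IsBoundedUnder (· ≥ ·) atTop F :=
        isBoundedUnder_of_eventually_ge (a := -(lam^2/2 + 2*γ0^2/l1^2))
          (by filter_upwards [eventually_ge_atTop 0] with t ht using hLow t ht)
      exact hb.isCoboundedUnder_flip
    refine le_of_forall_pos_le_add ?_
    intro ε hε
    have hKL : L < L + γ0*ε/8 := by
      have : 0 < γ0*ε/8 := by positivity
      linarith
    have hev := eventually_lt_of_limsup_lt hKL hfbdd
    obtain ⟨T0, hT0⟩ := eventually_atTop.1 (hev.and (eventually_ge_atTop 0))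
    set T := max T0 0 with hT
    have hT0' : (0:ℝ) ≤ T := le_max_right _ _
    have hfK : ∀ t, T ≤ t → ‖f t‖^2 ≤ L + γ0*ε/8 := by
      intro t ht
      exact (hT0 t (le_trans (le_max_left _ _) ht)).1.le
    have hgr := hgron T (L + γ0*ε/8) hT0' hfK
    have htail : Tendsto (fun t => (F T - 4*(L + γ0*ε/8)/γ0) * Real.exp (-γ0*(t-T)))
        atTop (𝓝 0) := by
      have h1 : Tendsto (fun t : ℝ => -γ0*(t-T)) atTop atBot := by
        have := Tendsto.const_mul_atTop_of_neg (show -γ0 < 0 by linarith)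
          (tendsto_atTop_add_const_right atTop (-T) tendsto_id)
        simpa [sub_eq_add_neg] using this
      have h2 := Real.tendsto_exp_atBot.comp h1
      have h3 := h2.const_mul (F T - 4*(L + γ0*ε/8)/γ0)
      simpa using h3
    have hev2 : ∀ᶠ t in atTop, F t ≤ 4/γ0*L + ε := by
      have heps : (0:ℝ) < ε/2 := by linarith
      filter_upwards [htail.eventually_lt_const heps, eventually_ge_atTop T] with t h1 h2
      have h4 := hgr t h2
      have h5 : 4*(L+γ0*ε/8)/γ0 = 4/γ0*L + ε/2 := by
        field_simp
        ring
      linarith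
    exact limsup_le_of_le hcob hev2
end

section
/- Ultimate bound on solutions: there exist positive constants M2 and M3, depending only on λ, λ1, λ2, such that for every bounded continuous f : [0,∞) → H and every strong solution u of u'' + u' + A²u − λAu + ⟨Au,u⟩Au = f(t), one has limsup_{t→+∞} ( |u'(t)|² + |Au(t)|² ) ≤ M2 + M3 · limsup_{t→+∞} |f(t)|². -/
open Filter Topology Set
open scoped RealInnerProductSpace

section aux
variable {H : Type*} [NormedAddCommGroup H] [InnerProductSpace ℝ H]

lemma hasDerivWithinAt_inner_left_zero
    {p q : ℝ → H} {p' : H} {s : Set ℝ} {t : ℝ}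
    (hp : HasDerivWithinAt p p' s t) (hp0 : p t = 0)
    (hq : ContinuousWithinAt q s t) :
    HasDerivWithinAt (fun t' => ⟪p t', q t'⟫) ⟪p', q t⟫ s t := by
  rw [hasDerivWithinAt_iff_tendsto_slope] at hp ⊢
  have hq' : Tendsto q (𝓝[s \ {t}] t) (𝓝 (q t)) :=
    hq.mono_left (nhdsWithin_mono _ diff_subset)
  have h : Tendsto (fun t' => ⟪slope p t t', q t'⟫) (𝓝[s \ {t}] t) (𝓝 ⟪p', q t⟫) :=
    hp.inner hq'
  refine h.congr' ?_
  filter_upwards [self_mem_nhdsWithin] with t' ht'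
  simp only [slope_def_module, hp0, inner_zero_left, sub_zero, smul_eq_mul,
    real_inner_smul_left]

lemma deriv_quad {u u' : ℝ → H} {B : H → H} {g : ℝ → ℝ} {t : ℝ}
    (heq : ∀ s ∈ Ici (0:ℝ), g s - g t = ⟪u s - u t, B (u s)⟫ + ⟪B (u t), u s - u t⟫)
    (hu : HasDerivWithinAt u (u' t) (Ici 0) t) (ht : t ∈ Ici (0:ℝ))
    (hBu : ContinuousOn (fun s => B (u s)) (Ici 0)) :
    HasDerivWithinAt g (2 * ⟪B (u t), u' t⟫) (Ici 0) t := by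
  have h1 : HasDerivWithinAt (fun s => ⟪u s - u t, B (u s)⟫) ⟪u' t, B (u t)⟫ (Ici 0) t :=
    hasDerivWithinAt_inner_left_zero (hp0 := by simp) (hu.sub_const (u t)) (hBu t ht)
  have h2 : HasDerivWithinAt (fun s => ⟪B (u t), u s - u t⟫) ⟪B (u t), u' t⟫ (Ici 0) t := by
    simpa using (hasDerivWithinAt_const t (Ici 0) (B (u t))).inner ℝ (hu.sub_const (u t))
  have h3 := (h1.add h2).add_const (g t)
  have h4 : ⟪u' t, B (u t)⟫ + ⟪B (u t), u' t⟫ = 2 * ⟪B (u t), u' t⟫ := by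
    rw [real_inner_comm]; ring
  rw [h4] at h3
  refine h3.congr (fun s hs => ?_) ?_
  · have := heq s hs; simp only [Pi.add_apply]; linarith
  · simp

lemma spectral_lb {D : Submodule ℝ H} {A : H →ₗ[ℝ] H}
    (hsym : ∀ x ∈ D, ∀ y ∈ D, ⟪A x, y⟫ = ⟪x, A y⟫)
    {l1 l2 : ℝ} (hl1 : 0 < l1) (hl12 : l1 < l2)
    {e1 : H} (he1D : e1 ∈ D) (he1 : ‖e1‖ = 1) (hAe1 : A e1 = l1 • e1)
    (hgap : ∀ x ∈ D, ⟪x, e1⟫ = 0 → l2 ^ 2 * ‖x‖ ^ 2 ≤ ‖A x‖ ^ 2)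
    {x : H} (hx : x ∈ D) : l1 ^ 2 * ‖x‖ ^ 2 ≤ ‖A x‖ ^ 2 := by
  set a : ℝ := ⟪x, e1⟫ with ha
  set w : H := x - a • e1 with hw
  have hwD : w ∈ D := D.sub_mem hx (D.smul_mem a he1D)
  have he1n : ⟪e1, e1⟫ = 1 := by
    rw [real_inner_self_eq_norm_sq, he1]; norm_num
  have hwe1 : ⟪w, e1⟫ = 0 := by
    rw [hw, inner_sub_left, real_inner_smul_left, he1n]; simp [ha]
  have hAwe1 : ⟪A w, e1⟫ = 0 := by
    rw [hsym w hwD e1 he1D, hAe1, real_inner_smul_right, hwe1, mul_zero]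
  have hxd : x = w + a • e1 := by rw [hw]; abel
  have hAx : A x = A w + (a * l1) • e1 := by
    rw [hxd, map_add, map_smul, hAe1, smul_smul]
  have hnx : ‖x‖ ^ 2 = ‖w‖ ^ 2 + a ^ 2 := by
    rw [hxd, ← real_inner_self_eq_norm_sq, inner_add_add_self, real_inner_smul_left,
      real_inner_smul_right, real_inner_smul_left, real_inner_smul_right, he1n,
      real_inner_self_eq_norm_sq]
    have h0 : ⟪(e1:H), w⟫ = 0 := by rw [real_inner_comm]; exact hwe1
    rw [h0]; rw [hwe1]; ring
  have hnAx : ‖A x‖ ^ 2 = ‖A w‖ ^ 2 + (a * l1) ^ 2 := by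
    rw [hAx, ← real_inner_self_eq_norm_sq, inner_add_add_self, real_inner_smul_left,
      real_inner_smul_right, real_inner_smul_left, real_inner_smul_right, he1n,
      real_inner_self_eq_norm_sq]
    have h0 : ⟪(e1:H), A w⟫ = 0 := by rw [real_inner_comm]; exact hAwe1
    rw [h0]; rw [hAwe1]; ring
  have hgapw := hgap w hwD hwe1
  have h1 : l1 ^ 2 * ‖w‖ ^ 2 ≤ l2 ^ 2 * ‖w‖ ^ 2 := by
    apply mul_le_mul_of_nonneg_right _ (sq_nonneg _)
    nlinarith
  nlinarith [sq_nonneg a, sq_nonneg l1]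

end aux

lemma decay_bound {V Vd : ℝ → ℝ} {c B T : ℝ} (hc : 0 < c) (hT : 0 ≤ T)
    (hV : ∀ t ∈ Ici (0:ℝ), HasDerivWithinAt V (Vd t) (Ici 0) t)
    (hineq : ∀ t ∈ Ici T, Vd t + c * V t ≤ B) :
    ∀ t ∈ Ici T, V t ≤ B / c + (V T - B / c) * Real.exp (-(c * (t - T))) := by
  set W : ℝ → ℝ := fun t => (V t - B / c) * Real.exp (c * (t - T)) with hW
  have hmemIci : ∀ t ∈ Ici T, t ∈ Ici (0:ℝ) := fun t ht => le_trans hT ht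
  have hVc : ContinuousOn V (Ici T) := fun t ht =>
    ((hV t (hmemIci t ht)).continuousWithinAt).mono (Ici_subset_Ici.2 hT)
  have hWc : ContinuousOn W (Ici T) := by
    apply hVc.sub continuousOn_const |>.mul
    exact (Real.continuous_exp.comp (by continuity)).continuousOn
  have hanti : AntitoneOn W (Ici T) := by
    apply antitoneOn_of_deriv_nonpos (convex_Ici T) hWc
    · intro x hx
      rw [interior_Ici] at hx
      have hx0 : Ici (0:ℝ) ∈ nhds x := Ici_mem_nhds (lt_of_le_of_lt hT hx)
      have hVx : HasDerivAt V (Vd x) x := (hV x (hmemIci x (mem_Ici.2 (le_of_lt (mem_Ioi.1 hx))))).hasDerivAt hx0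
      have he : HasDerivAt (fun t => Real.exp (c * (t - T))) (c * Real.exp (c * (x - T))) x := by
        have : HasDerivAt (fun t : ℝ => c * (t - T)) c x :=
          ((hasDerivAt_id x).sub_const T).const_mul c |>.congr_deriv (by ring)
        simpa [mul_comm] using this.exp
      exact ((hVx.sub_const (B / c)).mul he).differentiableAt.differentiableWithinAt
    · intro x hx
      rw [interior_Ici] at hx
      have hx0 : Ici (0:ℝ) ∈ nhds x := Ici_mem_nhds (lt_of_le_of_lt hT hx)
      have hVx : HasDerivAt V (Vd x) x := (hV x (hmemIci x (mem_Ici.2 (le_of_lt (mem_Ioi.1 hx))))).hasDerivAt hx0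
      have he : HasDerivAt (fun t => Real.exp (c * (t - T))) (c * Real.exp (c * (x - T))) x := by
        have : HasDerivAt (fun t : ℝ => c * (t - T)) c x :=
          ((hasDerivAt_id x).sub_const T).const_mul c |>.congr_deriv (by ring)
        simpa [mul_comm] using this.exp
      have hWx : HasDerivAt W
          (Vd x * Real.exp (c * (x - T)) + (V x - B / c) * (c * Real.exp (c * (x - T)))) x :=
        (hVx.sub_const (B / c)).mul he
      rw [hWx.deriv]
      have hexp : 0 < Real.exp (c * (x - T)) := Real.exp_pos _
      have h1 : Vd x + c * V x ≤ B := hineq x (mem_Ici.2 (le_of_lt (mem_Ioi.1 hx)))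
      have : Vd x * Real.exp (c * (x - T)) + (V x - B / c) * (c * Real.exp (c * (x - T)))
          = (Vd x + c * V x - B) * Real.exp (c * (x - T)) := by
        field_simp; ring
      rw [this]
      exact mul_nonpos_of_nonpos_of_nonneg (by linarith) (le_of_lt hexp)
  intro t ht
  have h2 : W t ≤ W T := hanti self_mem_Ici ht ht
  have h3 : W T = V T - B / c := by simp [hW]
  rw [h3] at h2
  have hexp : 0 < Real.exp (c * (t - T)) := Real.exp_pos _
  have h4 : V t - B / c ≤ (V T - B / c) * Real.exp (-(c * (t - T))) := by
    rw [Real.exp_neg]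
    rw [hW] at h2
    calc V t - B / c = (V t - B / c) * Real.exp (c * (t - T)) * (Real.exp (c * (t - T)))⁻¹ := by
          field_simp
      _ ≤ (V T - B / c) * (Real.exp (c * (t - T)))⁻¹ := by
          apply mul_le_mul_of_nonneg_right h2 (by positivity)
  linarith

set_option maxHeartbeats 1000000 in
lemma scalar_main {l1 lam c a b n s p F1 F2 φ : ℝ}
    (hl1 : 0 < l1) (hlam : 0 < lam)
    (hcdef : c = 1/(3*(1+1/l1^2)))
    (hs : 0 ≤ s) (ha : 0 ≤ a) (hb : 0 ≤ b) (hn : 0 ≤ n) (hφ : 0 ≤ φ)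
    (hp : |p| ≤ a*n) (hF1 : F1 ≤ φ*a) (hF2 : F2 ≤ φ*n)
    (hspec : l1^2*n^2 ≤ b^2) :
    (-(a^2) - b^2 + lam*s - s*s + 2*F1 + F2)
      + c*(a^2 + b^2 - lam*s + s*s/2 + p + n^2/2)
    ≤ lam^2/2 + (3 + 3/(2*l1^2))*φ^2 := by
  have hl1ne : l1 ≠ 0 := ne_of_gt hl1
  have hc : 0 < c := by rw [hcdef]; positivity
  have hc13 : c ≤ 1/3 := by
    rw [hcdef, div_le_div_iff₀ (by positivity) (by norm_num)]
    have : (0:ℝ) < 1/l1^2 := by positivity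
    nlinarith
  have f1 : c*p ≤ c/2*a^2 + c/2*n^2 := by
    have hpan : p ≤ a*n := (abs_le.mp hp).2
    have h1a : c*p ≤ c*(a*n) := mul_le_mul_of_nonneg_left hpan hc.le
    have h1b : a*n ≤ (a^2+n^2)/2 := by nlinarith [sq_nonneg (a-n)]
    have h1c : c*(a*n) ≤ c*((a^2+n^2)/2) := mul_le_mul_of_nonneg_left h1b hc.le
    nlinarith [h1a, h1c]
  have f2 : 2*F1 ≤ 1/3*a^2 + 3*φ^2 := by nlinarith [sq_nonneg (a - 3*φ)]
  have h6pos : (0:ℝ) < 6*l1^2 := by positivity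
  have f3 : F2 ≤ l1^2/6*n^2 + 3/(2*l1^2)*φ^2 := by
    have hkey : 6*l1^2*(φ*n) ≤ 6*l1^2*(l1^2/6*n^2 + 3/(2*l1^2)*φ^2) := by
      have expand : 6*l1^2*(l1^2/6*n^2 + 3/(2*l1^2)*φ^2) = l1^4*n^2 + 9*φ^2 := by
        field_simp; ring
      rw [expand]; nlinarith [sq_nonneg (l1^2*n - 3*φ)]
    have := le_of_mul_le_mul_left hkey h6pos
    linarith
  have f4 : lam*s ≤ s*s/2 + lam^2/2 := by nlinarith [sq_nonneg (s - lam)]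
  have f5 : 0 ≤ c*(lam*s) := by positivity
  have f6 : c*a^2 ≤ 1/3*a^2 := mul_le_mul_of_nonneg_right hc13 (sq_nonneg a)
  have f7 : c*(s*s) ≤ 1/3*(s*s) := mul_le_mul_of_nonneg_right hc13 (mul_self_nonneg s)
  have f9 : c*b^2 + c/l1^2*b^2 = 1/3*b^2 := by rw [hcdef]; field_simp
  have f8 : c*n^2 + l1^2/6*n^2 ≤ c/l1^2*b^2 + 1/6*b^2 := by
    have hnn : (0:ℝ) ≤ c/l1^2 + 1/6 := by positivity
    have h8 := mul_le_mul_of_nonneg_left hspec hnn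
    have e : (c/l1^2 + 1/6)*(l1^2*n^2) = c*n^2 + l1^2/6*n^2 := by field_simp
    rw [e] at h8
    linarith
  linarith [f1, f2, f3, f4, f5, f6, f7, f8, f9, sq_nonneg a, sq_nonneg b, mul_self_nonneg s]

set_option maxHeartbeats 1000000 in
/-- Ultimate bound on solutions. -/
theorem ultimate_bound_solutions
    {H : Type*} [NormedAddCommGroup H] [InnerProductSpace ℝ H] [CompleteSpace H]
    (D : Submodule ℝ H) (hD : Dense (D : Set H))
    (A : H →ₗ[ℝ] H)
    (hsym : ∀ x ∈ D, ∀ y ∈ D, ⟪A x, y⟫ = ⟪x, A y⟫)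
    (hpos : ∀ x ∈ D, 0 ≤ ⟪A x, x⟫)
    (l1 l2 lam : ℝ) (hl1 : 0 < l1) (hl12 : l1 < l2)
    (hlam1 : l1 < lam) (hlam2 : lam < l2)
    (e1 : H) (he1D : e1 ∈ D) (he1 : ‖e1‖ = 1) (hAe1 : A e1 = l1 • e1)
    (hgap : ∀ x ∈ D, ⟪x, e1⟫ = 0 → l2 ^ 2 * ‖x‖ ^ 2 ≤ ‖A x‖ ^ 2)
    :
    ∃ M2 > (0:ℝ), ∃ M3 > (0:ℝ),
      ∀ f : ℝ → H, ContinuousOn f (Ici 0) → (∃ C, ∀ t ∈ Ici (0:ℝ), ‖f t‖ ≤ C) →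
      ∀ u u' u'' : ℝ → H, IsStrongSolution D A lam f u u' u'' →
        IsBoundedUnder (· ≤ ·) atTop (fun t => ‖u' t‖ ^ 2 + ‖A (u t)‖ ^ 2) ∧
        limsup (fun t => ‖u' t‖ ^ 2 + ‖A (u t)‖ ^ 2) atTop
          ≤ M2 + M3 * limsup (fun t => ‖f t‖ ^ 2) atTop := by
  have hlam : 0 < lam := lt_trans hl1 hlam1
  set c : ℝ := 1 / (3 * (1 + 1 / l1 ^ 2)) with hcdef
  have hc : 0 < c := by rw [hcdef]; positivity
  set K : ℝ := 3 + 3 / (2 * l1 ^ 2) with hKdef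
  have hK : 0 < K := by rw [hKdef]; positivity
  have hM2 : 0 < lam ^ 2 + lam ^ 2 / c :=
    add_pos (pow_pos hlam 2) (div_pos (pow_pos hlam 2) hc)
  have hM3 : 0 < 2 * K / c := div_pos (by linarith) hc
  refine ⟨lam ^ 2 + lam ^ 2 / c, hM2, 2 * K / c, hM3, ?_⟩
  rintro f hfc ⟨C, hC⟩ u u' u'' hsol
  obtain ⟨hu, hu', hu''c, huD, hAuD, hAuc, heqn⟩ := hsol
  have huc : ContinuousOn u (Ici 0) := fun t ht => (hu t ht).continuousWithinAt
  have hu'c : ContinuousOn u' (Ici 0) := fun t ht => (hu' t ht).continuousWithinAt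
  set S : ℝ → ℝ := fun t => ⟪A (u t), u t⟫ with hSdef
  have hSc : ContinuousOn S (Ici 0) := hAuc.inner huc
  have hA2c : ContinuousOn (fun t => A (A (u t))) (Ici 0) := by
    have heqA : EqOn (fun t => A (A (u t)))
        (fun t => f t - u'' t - u' t + lam • A (u t) - S t • A (u t)) (Ici 0) := by
      intro t ht
      have h := heqn t ht
      simp only
      rw [← h]; abel
    exact ContinuousOn.congr
      ((((hfc.sub hu''c).sub hu'c).add (hAuc.const_smul lam)).sub (hSc.smul hAuc)) heqA
  set V : ℝ → ℝ := fun t => ⟪u' t, u' t⟫ + ⟪A (u t), A (u t)⟫ - lam * S t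
      + S t * S t / 2 + ⟪u' t, u t⟫ + ⟪u t, u t⟫ / 2 with hVdef
  set Vd : ℝ → ℝ := fun t => (⟪u' t, u'' t⟫ + ⟪u'' t, u' t⟫) + 2 * ⟪A (A (u t)), u' t⟫
      - lam * (2 * ⟪A (u t), u' t⟫)
      + (2 * ⟪A (u t), u' t⟫ * S t + S t * (2 * ⟪A (u t), u' t⟫)) / 2
      + (⟪u' t, u' t⟫ + ⟪u'' t, u t⟫) + (⟪u t, u' t⟫ + ⟪u' t, u t⟫) / 2 with hVddef
  -- derivative of V
  have hVderiv : ∀ t ∈ Ici (0:ℝ), HasDerivWithinAt V (Vd t) (Ici 0) t := by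
    intro t ht
    have hN1 := (hu' t ht).inner ℝ (hu' t ht)
    have hP := (hu' t ht).inner ℝ (hu t ht)
    have hN0 := (hu t ht).inner ℝ (hu t ht)
    have hS : HasDerivWithinAt S (2 * ⟪A (u t), u' t⟫) (Ici 0) t := by
      refine deriv_quad (B := fun x => A x) ?_ (hu t ht) ht hAuc
      intro s hs
      have e1 := hsym (u s - u t) (D.sub_mem (huD s hs) (huD t ht)) (u s) (huD s hs)
      have e2 : ⟪u s - u t, A (u s)⟫ = ⟪A (u s), u s⟫ - ⟪A (u t), u s⟫ := by
        rw [← e1, map_sub, inner_sub_left]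
      have e3 : ⟪A (u t), u s - u t⟫ = ⟪A (u t), u s⟫ - ⟪A (u t), u t⟫ :=
        inner_sub_right _ _ _
      simp only [hSdef, e2, e3]; ring
    have hN2 : HasDerivWithinAt (fun s => ⟪A (u s), A (u s)⟫)
        (2 * ⟪A (A (u t)), u' t⟫) (Ici 0) t := by
      refine deriv_quad (B := fun x => A (A x)) ?_ (hu t ht) ht hA2c
      intro s hs
      have e1 := hsym (u s - u t) (D.sub_mem (huD s hs) (huD t ht)) (A (u s)) (hAuD s hs)
      have e2 : ⟪u s - u t, A (A (u s))⟫ = ⟪A (u s), A (u s)⟫ - ⟪A (u t), A (u s)⟫ := by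
        rw [← e1, map_sub, inner_sub_left]
      have e3 := hsym (A (u t)) (hAuD t ht) (u s - u t) (D.sub_mem (huD s hs) (huD t ht))
      have e4 : ⟪A (A (u t)), u s - u t⟫ = ⟪A (u t), A (u s)⟫ - ⟪A (u t), A (u t)⟫ := by
        rw [e3, map_sub, inner_sub_right]
      rw [e2, e4]; ring
    exact ((((hN1.add hN2).sub (hS.const_mul lam)).add ((hS.mul hS).div_const 2)).add
      hP).add (hN0.div_const 2)
  -- lower bound : target ≤ 2V + lam²
  have hVlb : ∀ t ∈ Ici (0:ℝ), ‖u' t‖ ^ 2 + ‖A (u t)‖ ^ 2 ≤ 2 * V t + lam ^ 2 := by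
    intro t ht
    have hs0 : 0 ≤ S t := hpos (u t) (huD t ht)
    have hp1 : |⟪u' t, u t⟫| ≤ ‖u' t‖ * ‖u t‖ := abs_real_inner_le_norm _ _
    have hp2 := (abs_le.mp hp1).1
    have hn1 : ⟪u' t, u' t⟫ = ‖u' t‖ ^ 2 := real_inner_self_eq_norm_sq _
    have hn2 : ⟪A (u t), A (u t)⟫ = ‖A (u t)‖ ^ 2 := real_inner_self_eq_norm_sq _
    have hn0 : ⟪u t, u t⟫ = ‖u t‖ ^ 2 := real_inner_self_eq_norm_sq _
    simp only [hVdef, hn1, hn2, hn0]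
    nlinarith [sq_nonneg (S t - lam), sq_nonneg (‖u' t‖ - ‖u t‖), sq_nonneg ‖A (u t)‖]
  -- main differential inequality
  have hVineq : ∀ t ∈ Ici (0:ℝ), Vd t + c * V t ≤ lam ^ 2 / 2 + K * ‖f t‖ ^ 2 := by
    intro t ht
    have hsub : u'' t = f t - u' t - A (A (u t)) + lam • A (u t) - S t • A (u t) := by
      have h := heqn t ht
      rw [← h]; simp only [hSdef]; abel
    have hA2u : ⟪A (A (u t)), u t⟫ = ⟪A (u t), A (u t)⟫ :=
      hsym (A (u t)) (hAuD t ht) (u t) (huD t ht)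
    have hn1 : ⟪u' t, u' t⟫ = ‖u' t‖ ^ 2 := real_inner_self_eq_norm_sq _
    have hn2 : ⟪A (u t), A (u t)⟫ = ‖A (u t)‖ ^ 2 := real_inner_self_eq_norm_sq _
    have hn0 : ⟪u t, u t⟫ = ‖u t‖ ^ 2 := real_inner_self_eq_norm_sq _
    have hVd_eq : Vd t = -(‖u' t‖ ^ 2) - ‖A (u t)‖ ^ 2 + lam * S t - S t * S t
        + 2 * ⟪f t, u' t⟫ + ⟪f t, u t⟫ := by
      simp only [hVddef, hsub, inner_sub_left, inner_add_left, real_inner_smul_left,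
        hA2u, hn1, hn2]
      have hcm1 : ⟪u' t, f t - u' t - A (A (u t)) + lam • A (u t) - S t • A (u t)⟫
          = ⟪f t, u' t⟫ - ‖u' t‖ ^ 2 - ⟪A (A (u t)), u' t⟫ + lam * ⟪A (u t), u' t⟫
            - S t * ⟪A (u t), u' t⟫ := by
        rw [real_inner_comm]
        simp only [inner_sub_left, inner_add_left, real_inner_smul_left, hn1]
      rw [hcm1]
      have hcm2 : ⟪u t, u' t⟫ = ⟪u' t, u t⟫ := real_inner_comm _ _
      rw [hcm2]
      simp only [hSdef]
      ring
    have hscal := scalar_main (a := ‖u' t‖) (b := ‖A (u t)‖) (n := ‖u t‖) (s := S t)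
      (p := ⟪u' t, u t⟫) (F1 := ⟪f t, u' t⟫) (F2 := ⟪f t, u t⟫) (φ := ‖f t‖)
      hl1 hlam hcdef (hpos (u t) (huD t ht)) (norm_nonneg _) (norm_nonneg _)
      (norm_nonneg _) (norm_nonneg _) (abs_real_inner_le_norm _ _)
      (real_inner_le_norm _ _) (real_inner_le_norm _ _)
      (spectral_lb hsym hl1 hl12 he1D he1 hAe1 hgap (huD t ht))
    rw [hVd_eq]
    simp only [hVdef, hn1, hn2, hn0, hKdef]
    linarith [hscal]
  clear_value S V Vd c K
  -- global boundedness
  have hBg : ∀ t ∈ Ici (0:ℝ), Vd t + c * V t ≤ lam ^ 2 / 2 + K * C ^ 2 := by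
    intro t ht
    have h1 := hVineq t ht
    have h2 : ‖f t‖ ^ 2 ≤ C ^ 2 := by
      nlinarith [hC t ht, norm_nonneg (f t)]
    have h3 : K * ‖f t‖ ^ 2 ≤ K * C ^ 2 := mul_le_mul_of_nonneg_left h2 hK.le
    linarith
  have hdecay0 := decay_bound hc le_rfl hVderiv hBg
  have hVbd : ∀ t ∈ Ici (0:ℝ),
      V t ≤ (lam ^ 2 / 2 + K * C ^ 2) / c + |V 0 - (lam ^ 2 / 2 + K * C ^ 2) / c| := by
    intro t ht
    have h := hdecay0 t ht
    have he1 : Real.exp (-(c * (t - 0))) ≤ 1 := by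
      rw [Real.exp_le_one_iff]
      have : 0 ≤ c * t := mul_nonneg hc.le ht
      simp only [sub_zero]; linarith
    have he2 : 0 < Real.exp (-(c * (t - 0))) := Real.exp_pos _
    have hle : (V 0 - (lam ^ 2 / 2 + K * C ^ 2) / c) * Real.exp (-(c * (t - 0)))
        ≤ |V 0 - (lam ^ 2 / 2 + K * C ^ 2) / c| := by
      calc (V 0 - (lam ^ 2 / 2 + K * C ^ 2) / c) * Real.exp (-(c * (t - 0)))
          ≤ |V 0 - (lam ^ 2 / 2 + K * C ^ 2) / c| * Real.exp (-(c * (t - 0))) :=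
            mul_le_mul_of_nonneg_right (le_abs_self _) he2.le
        _ ≤ |V 0 - (lam ^ 2 / 2 + K * C ^ 2) / c| * 1 :=
            mul_le_mul_of_nonneg_left he1 (abs_nonneg _)
        _ = _ := mul_one _
    linarith
  constructor
  · -- bounded
    apply isBoundedUnder_of_eventually_le
      (a := 2 * ((lam ^ 2 / 2 + K * C ^ 2) / c + |V 0 - (lam ^ 2 / 2 + K * C ^ 2) / c|)
        + lam ^ 2)
    filter_upwards [eventually_ge_atTop (0:ℝ)] with t ht
    have h1 := hVlb t ht
    have h2 := hVbd t ht
    linarith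
  · -- limsup bound
    set LF := limsup (fun t => ‖f t‖ ^ 2) atTop with hLF
    have hfb : IsBoundedUnder (· ≤ ·) atTop (fun t => ‖f t‖ ^ 2) := by
      apply isBoundedUnder_of_eventually_le (a := C ^ 2)
      filter_upwards [eventually_ge_atTop (0:ℝ)] with t ht
      nlinarith [hC t ht, norm_nonneg (f t)]
    have hgb : IsCoboundedUnder (· ≤ ·) atTop (fun t => ‖u' t‖ ^ 2 + ‖A (u t)‖ ^ 2) :=
      isCoboundedUnder_le_of_le atTop (x := 0) (fun t => by positivity)
    refine le_of_forall_pos_le_add fun ε hε => ?_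
    have hden : (0:ℝ) < 2 * K / c + 2 := by linarith
    set ε' := ε / (2 * K / c + 2) with hε'def
    have hε' : 0 < ε' := div_pos hε hden
    have hflt : ∀ᶠ t in atTop, ‖f t‖ ^ 2 < LF + ε' :=
      eventually_lt_of_limsup_lt (by linarith) hfb
    obtain ⟨T0, hT0⟩ := eventually_atTop.mp hflt
    set T := max T0 0 with hTdef
    have hT0' : (0:ℝ) ≤ T := le_max_right _ _
    set B1 := lam ^ 2 / 2 + K * (LF + ε') with hB1def
    have hineqT : ∀ t ∈ Ici T, Vd t + c * V t ≤ B1 := by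
      intro t ht
      have h1 := hVineq t (le_trans hT0' ht)
      have h2 : ‖f t‖ ^ 2 ≤ LF + ε' := (hT0 t (le_trans (le_max_left _ _) ht)).le
      have h3 : K * ‖f t‖ ^ 2 ≤ K * (LF + ε') := mul_le_mul_of_nonneg_left h2 hK.le
      rw [hB1def]; linarith
    have hdec := decay_bound hc hT0' hVderiv hineqT
    have htend : Tendsto (fun t => (V T - B1 / c) * Real.exp (-(c * (t - T)))) atTop (𝓝 0) := by
      have h1 : Tendsto (fun t : ℝ => c * (t - T)) atTop atTop := by
        apply Tendsto.const_mul_atTop hc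
        simpa [sub_eq_add_neg] using tendsto_atTop_add_const_right atTop (-T) tendsto_id
      have h2 : Tendsto (fun t : ℝ => -(c * (t - T))) atTop atBot :=
        tendsto_neg_atTop_atBot.comp h1
      have h3 : Tendsto (fun t => Real.exp (-(c * (t - T)))) atTop (𝓝 0) :=
        Real.tendsto_exp_atBot.comp h2
      simpa using h3.const_mul (V T - B1 / c)
    have hev : ∀ᶠ t in atTop, ‖u' t‖ ^ 2 + ‖A (u t)‖ ^ 2
        ≤ 2 * (B1 / c) + lam ^ 2 + 2 * ε' := by
      filter_upwards [eventually_ge_atTop T,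
        htend.eventually (eventually_le_nhds hε')] with t ht hexp
      have h1 := hdec t ht
      have h2 := hVlb t (le_trans hT0' ht)
      linarith
    have hlim := limsup_le_of_le hgb hev
    have harith : 2 * (B1 / c) + lam ^ 2 + 2 * ε'
        = (lam ^ 2 + lam ^ 2 / c) + (2 * K / c) * LF + (2 * K / c + 2) * ε' := by
      have hcne : c ≠ 0 := ne_of_gt hc
      rw [hB1def]; field_simp; ring
    have hfinal : (2 * K / c + 2) * ε' = ε := by
      rw [hε'def, mul_comm, div_mul_cancel₀ _ (ne_of_gt hden)]
    rw [harith, hfinal] at hlim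
    exact hlim
end

section
/- Differential inequality for the corrected energy: for every strong solution u of u'' + u' + A²u − λAu + ⟨Au,u⟩Au = f(t), the corrected energy F is differentiable on [0,∞) and satisfies F'(t) ≤ −γ0·F(t) + 2|f(t)|² for every t ≥ 0. -/
open Filter Topology Set
open scoped RealInnerProductSpace

lemma aux_slope_deriv {H : Type*} [NormedAddCommGroup H] [InnerProductSpace ℝ H]
    {u : ℝ → H} {u't : H} {g : ℝ → ℝ} {B : ℝ → H} {t : ℝ}
    (ht : t ∈ Ici (0:ℝ))
    (hu : HasDerivWithinAt u u't (Ici 0) t)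
    (hB : ContinuousOn B (Ici 0))
    (key : ∀ y ∈ Ici (0:ℝ), g y - g t = ⟪B y + B t, u y - u t⟫) :
    HasDerivWithinAt g (2 * ⟪B t, u't⟫) (Ici 0) t := by
  rw [hasDerivWithinAt_iff_tendsto_slope]
  have hBt : Tendsto B (𝓝[Ici 0 \ {t}] t) (𝓝 (B t)) :=
    (hB.continuousWithinAt ht).mono_left (nhdsWithin_mono t diff_subset)
  have hs : Tendsto (slope u t) (𝓝[Ici 0 \ {t}] t) (𝓝 u't) :=
    hasDerivWithinAt_iff_tendsto_slope.mp hu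
  have main : Tendsto (fun y => ⟪B y + B t, slope u t y⟫) (𝓝[Ici 0 \ {t}] t)
      (𝓝 ⟪B t + B t, u't⟫) := (hBt.add tendsto_const_nhds).inner hs
  rw [show ⟪B t + B t, u't⟫ = 2 * ⟪B t, u't⟫ by rw [inner_add_left]; ring] at main
  refine main.congr' ?_
  filter_upwards [self_mem_nhdsWithin] with y hy
  rw [slope_def_module, real_inner_smul_right, ← key y hy.1, slope_def_field,
    div_eq_inv_mul]


lemma scalar_key (l1 l2 lam g s wn q r : ℝ)
    (hs : 0 ≤ s) (hwn : 0 ≤ wn) (hq : 0 ≤ q) (hr : 0 ≤ r)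
    (hl1 : 0 < l1) (hlam1 : l1 < lam) (hlam2 : lam < l2)
    (hg0 : 0 < g) (hga : g ≤ 1/8) (hgb : 8*g ≤ l1*(lam-l1)) (hgc : 8*g ≤ l2*(l2-lam))
    (h1 : l2*q ≤ r) (h2 : l2^2*wn ≤ r) :
    (g+g^2)*(s+wn) + ((1/2)*l1^2*s + (1/2)*r - (lam/2)*(l1*s+q) + (1/4)*(l1*s+q)^2 + g*s/6 + g*wn)
      - 2*((l1^2*s/6 + r) - (lam-(l1*s+q))*(l1*s/6+q)) ≤ 0 := by
  have hlam0 : 0 < lam := hl1.trans hlam1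
  have hl2 : 0 < l2 := hlam0.trans hlam2
  have hgsq : g^2 ≤ (l1*(lam-l1))/64 := by nlinarith
  have key1 : s*(g/6+g+g^2) ≤ s*(l1*(lam-l1)/6) := by
    have : g/6+g+g^2 ≤ l1*(lam-l1)/6 := by nlinarith
    exact mul_le_mul_of_nonneg_left this hs
  have key2 : lam*q + (l2*(l2-lam))*wn ≤ r := by
    have h3 : l2*(lam*q + (l2*(l2-lam))*wn) ≤ l2*r := by nlinarith
    exact le_of_mul_le_mul_left h3 hl2
  have hgsq2 : g^2 ≤ (l2*(l2-lam))/64 := by nlinarith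
  have key3 : wn*(2*g+g^2) ≤ wn*((3/2)*(l2*(l2-lam))) := by
    have : 2*g+g^2 ≤ (3/2)*(l2*(l2-lam)) := by nlinarith
    exact mul_le_mul_of_nonneg_left this hwn
  nlinarith [key1, key2, key3, mul_nonneg (mul_nonneg hl1.le hs) hq, mul_nonneg hq hq,
    mul_nonneg (mul_nonneg hs hs) (sq_nonneg l1)]


private lemma young1 (ip np nf : ℝ) (h : ip ≤ nf * np) : ip ≤ nf^2 + (1/4)*np^2 := by
  nlinarith [sq_nonneg (nf - np/2)]

private lemma young2 (c ip np nf : ℝ) (hc : 0 ≤ c) (h : ip ≤ np * nf) :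
    2*c*ip ≤ nf^2 + c^2*np^2 := by
  nlinarith [sq_nonneg (c*np - nf), mul_le_mul_of_nonneg_left h (by linarith : (0:ℝ) ≤ 2*c)]

private lemma young3 (c ip np nu : ℝ) (hc : 0 ≤ c) (h : ip ≤ np * nu) :
    2*c^2*ip ≤ c^3*np^2 + c*nu^2 := by
  nlinarith [mul_nonneg hc (sq_nonneg (c*np - nu)),
    mul_le_mul_of_nonneg_left h (by positivity : (0:ℝ) ≤ 2*c^2)]

private lemma sqrt_step (l2 nv nav : ℝ) (hl2 : 0 ≤ l2) (hnv : 0 ≤ nv) (hnav : 0 ≤ nav)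
    (h : l2^2*nv^2 ≤ nav^2) : l2*nv ≤ nav := by
  nlinarith

private lemma cs_gap (l2 q nav nv : ℝ) (hq : q ≤ nav * nv) (h2 : l2*nv ≤ nav)
    (hl2 : 0 ≤ l2) (hnav : 0 ≤ nav) : l2*q ≤ nav^2 := by
  nlinarith [mul_le_mul_of_nonneg_left hq hl2, mul_le_mul_of_nonneg_left h2 hnav]

set_option maxHeartbeats 1000000 in
lemma pointwise_ineq {H : Type*} [NormedAddCommGroup H] [InnerProductSpace ℝ H]
    (D : Submodule ℝ H) (A : H →ₗ[ℝ] H)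
    (hsym : ∀ x ∈ D, ∀ y ∈ D, ⟪A x, y⟫ = ⟪x, A y⟫)
    (hpos : ∀ x ∈ D, 0 ≤ ⟪A x, x⟫)
    (l1 l2 lam : ℝ) (hl1 : 0 < l1) (hl12 : l1 < l2)
    (hlam1 : l1 < lam) (hlam2 : lam < l2)
    (e1 : H) (he1D : e1 ∈ D) (he1 : ‖e1‖ = 1) (hAe1 : A e1 = l1 • e1)
    (hgap : ∀ x ∈ D, ⟪x, e1⟫ = 0 → l2 ^ 2 * ‖x‖ ^ 2 ≤ ‖A x‖ ^ 2)
    (γ0 : ℝ) (hγ0 : γ0 = (1/8) * min 1 (min (l1 * (lam - l1)) (l2 * (l2 - lam))))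
    (U U' U'' FT : H) (hUD : U ∈ D) (hAUD : A U ∈ D)
    (heq : U'' + U' + A (A U) - lam • A U + ⟪A U, U⟫ • A U = FT) :
    ⟪U'', U'⟫ + ⟪A (A U), U'⟫ - lam * ⟪A U, U'⟫ + ⟪A U, U⟫ * ⟪A U, U'⟫
      + 2*γ0*(⟪U - ((5/6)*⟪U, e1⟫) • e1, U''⟫ + ⟪U' - ((5/6)*⟪U', e1⟫) • e1, U'⟫)
      + γ0*(⟪U - ((5/6)*⟪U, e1⟫) • e1, U'⟫ + ⟪U' - ((5/6)*⟪U', e1⟫) • e1, U⟫)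
    ≤ -γ0 * ((1/2) * ‖U'‖^2 + (1/2) * ‖A U‖^2 - (lam/2) * ⟪A U, U⟫ + (1/4) * ⟪A U, U⟫^2
        + 2 * γ0 * ⟪U - ((5/6)*⟪U, e1⟫) • e1, U'⟫ + γ0 * ⟪U - ((5/6)*⟪U, e1⟫) • e1, U⟫)
      + 2 * ‖FT‖^2 := by
  have hδ : 0 < l1*(lam-l1) := mul_pos hl1 (by linarith)
  have hμ : 0 < l2*(l2-lam) := mul_pos (by linarith) (by linarith)
  have hg1 : 0 < γ0 := by
    have h := lt_min one_pos (lt_min hδ hμ); rw [hγ0]; linarith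
  have hg2 : γ0 ≤ 1/8 := by
    have h := min_le_left 1 (min (l1*(lam-l1)) (l2*(l2-lam))); rw [hγ0]; linarith
  have hgb : 8*γ0 ≤ l1*(lam-l1) := by
    have h1 := min_le_right 1 (min (l1*(lam-l1)) (l2*(l2-lam)))
    have h2 := min_le_left (l1*(lam-l1)) (l2*(l2-lam)); rw [hγ0]; linarith
  have hgc : 8*γ0 ≤ l2*(l2-lam) := by
    have h1 := min_le_right 1 (min (l1*(lam-l1)) (l2*(l2-lam)))
    have h2 := min_le_right (l1*(lam-l1)) (l2*(l2-lam)); rw [hγ0]; linarith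
  set a := (⟪U, e1⟫:ℝ) with ha
  set bb := (⟪U', e1⟫:ℝ) with hbb
  set P := U - ((5/6)*a) • e1 with hP
  set Q := U' - ((5/6)*bb) • e1 with hQ
  set v := U - a • e1 with hv
  set Av := A U - (l1*a) • e1 with hAv2
  have hvD : v ∈ D := D.sub_mem hUD (D.smul_mem a he1D)
  have hPD : P ∈ D := D.sub_mem hUD (D.smul_mem _ he1D)
  have he1n : (⟪e1, e1⟫:ℝ) = 1 := by
    rw [real_inner_self_eq_norm_sq, he1]; norm_num
  have hsm : ∀ c : ℝ, ‖c • e1‖^2 = c^2 := by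
    intro c; rw [norm_smul, he1, mul_one, Real.norm_eq_abs, sq_abs]
  have hAUe1 : (⟪A U, e1⟫:ℝ) = l1 * a := by
    rw [hsym _ hUD _ he1D, hAe1, real_inner_smul_right, ← ha]
  have he1AU : (⟪e1, A U⟫:ℝ) = l1 * a := by rw [real_inner_comm]; exact hAUe1
  have he1U : (⟪e1, U⟫:ℝ) = a := by rw [real_inner_comm]
  have he1U' : (⟪e1, U'⟫:ℝ) = bb := by rw [real_inner_comm]
  have hAv : A v = Av := by
    rw [hv, map_sub, map_smul, hAe1, hAv2, smul_smul, mul_comm]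
  have hve1 : (⟪v, e1⟫:ℝ) = 0 := by
    rw [hv, inner_sub_left, real_inner_smul_left, he1n, ← ha]; ring
  have hq0 : 0 ≤ (⟪Av, v⟫:ℝ) := by rw [← hAv]; exact hpos v hvD
  have f10 : l2^2*‖v‖^2 ≤ ‖Av‖^2 := by rw [← hAv]; exact hgap v hvD hve1
  have hl2 : 0 < l2 := by linarith
  have step : l2*‖v‖ ≤ ‖Av‖ := sqrt_step l2 ‖v‖ ‖Av‖ hl2.le (norm_nonneg v) (norm_nonneg Av) f10
  have f11 : l2*⟪Av, v⟫ ≤ ‖Av‖^2 :=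
    cs_gap l2 ⟪Av, v⟫ ‖Av‖ ‖v‖ (real_inner_le_norm Av v) step hl2.le (norm_nonneg Av)
  have g7 : (⟪A U, U⟫:ℝ) = l1*a^2 + ⟪Av, v⟫ := by
    have h : (⟪Av, v⟫:ℝ) = ⟪A U, U⟫ - l1*a^2 := by
      rw [hAv2, hv]
      simp only [inner_sub_left, inner_sub_right, real_inner_smul_left,
        real_inner_smul_right, hAUe1, he1U, he1n, ← ha]
      ring
    linarith
  have g8 : ‖A U‖^2 = l1^2*a^2 + ‖Av‖^2 := by
    have h : ‖Av‖^2 = ‖A U‖^2 - l1^2*a^2 := by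
      rw [← real_inner_self_eq_norm_sq Av, hAv2]
      simp only [inner_sub_left, inner_sub_right, real_inner_smul_left,
        real_inner_smul_right, hAUe1, he1AU, he1n, real_inner_self_eq_norm_sq, hsm]
      ring
    linarith
  have g5 : (⟪P, A (A U)⟫:ℝ) = l1^2*a^2/6 + ‖Av‖^2 := by
    rw [← hsym _ hPD _ hAUD, hP, map_sub, map_smul, hAe1]
    simp only [smul_smul, inner_sub_left, real_inner_smul_left, he1AU,
      real_inner_self_eq_norm_sq]
    rw [g8]; ring
  have g6 : (⟪P, A U⟫:ℝ) = l1*a^2/6 + ⟪Av, v⟫ := by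
    rw [hP]
    simp only [inner_sub_left, real_inner_smul_left, he1AU]
    rw [real_inner_comm (A U) U, g7]; ring
  have hvv : ‖v‖^2 = ‖U‖^2 - a^2 := by
    rw [← real_inner_self_eq_norm_sq v, hv]
    simp only [inner_sub_left, inner_sub_right, real_inner_smul_left,
      real_inner_smul_right, he1U, he1n, ← ha, real_inner_self_eq_norm_sq, hsm]
    ring
  have g9 : (⟪P, U⟫:ℝ) = a^2/6 + ‖v‖^2 := by
    rw [hP]
    simp only [inner_sub_left, real_inner_smul_left, he1U, real_inner_self_eq_norm_sq]
    rw [hvv]; ring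
  have g10 : ‖P‖^2 = a^2/36 + ‖v‖^2 := by
    rw [← real_inner_self_eq_norm_sq P, hP]
    simp only [inner_sub_left, inner_sub_right, real_inner_smul_left,
      real_inner_smul_right, he1U, he1n, ← ha, real_inner_self_eq_norm_sq, hsm]
    rw [hvv]; ring
  have g11 : (⟪Q, U⟫:ℝ) = ⟪P, U'⟫ := by
    rw [hQ, hP]
    simp only [inner_sub_left, real_inner_smul_left, he1U, he1U']
    rw [real_inner_comm U U']; ring
  have b3 : (⟪Q, U'⟫:ℝ) ≤ ‖U'‖^2 := by
    rw [hQ]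
    simp only [inner_sub_left, real_inner_smul_left, he1U', real_inner_self_eq_norm_sq]
    have := sq_nonneg bb; linarith
  -- bounds
  have b1 : (⟪FT, U'⟫:ℝ) ≤ ‖FT‖^2 + (1/4)*‖U'‖^2 :=
    young1 _ _ _ (real_inner_le_norm FT U')
  have b2 : 2*γ0*(⟪P, FT⟫:ℝ) ≤ ‖FT‖^2 + γ0^2*‖P‖^2 :=
    young2 γ0 _ _ _ hg1.le (real_inner_le_norm P FT)
  have b3h : 2*γ0*(⟪Q, U'⟫:ℝ) ≤ 2*γ0*‖U'‖^2 :=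
    mul_le_mul_of_nonneg_left b3 (by positivity)
  have b4 : 2*γ0^2*(⟪P, U'⟫:ℝ) ≤ γ0^3*‖P‖^2 + γ0*‖U'‖^2 :=
    young3 γ0 _ _ _ hg1.le (real_inner_le_norm P U')
  have e10a : γ0^2*‖P‖^2 = γ0^2*(a^2/36 + ‖v‖^2) := by rw [g10]
  have e10b : γ0^3*‖P‖^2 = γ0^3*(a^2/36 + ‖v‖^2) := by rw [g10]
  have hYb : γ0*‖U'‖^2 ≤ (1/8)*‖U'‖^2 :=
    mul_le_mul_of_nonneg_right hg2 (sq_nonneg ‖U'‖)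
  have key := scalar_key l1 l2 lam γ0 (a^2) (‖v‖^2) (⟪Av, v⟫) (‖Av‖^2)
    (sq_nonneg a) (sq_nonneg ‖v‖) hq0 (sq_nonneg ‖Av‖) hl1 hlam1 hlam2 hg1 hg2 hgb hgc
    f11 f10
  have hT2 : γ0*((1/2)*(l1^2*a^2 + ‖Av‖^2) - (lam/2)*(l1*a^2+⟪Av,v⟫)
      + (1/4)*(l1*a^2+⟪Av,v⟫)^2 + γ0*(a^2/6+‖v‖^2)
      - 2*((l1^2*a^2/6 + ‖Av‖^2) - (lam - (l1*a^2+⟪Av,v⟫))*(l1*a^2/6+⟪Av,v⟫)))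
      + (γ0^2+γ0^3)*(a^2/36 + ‖v‖^2) ≤ 0 := by
    have k2 : γ0 * ((γ0+γ0^2)*(a^2+‖v‖^2) + ((1/2)*l1^2*a^2 + (1/2)*‖Av‖^2
        - (lam/2)*(l1*a^2+⟪Av,v⟫) + (1/4)*(l1*a^2+⟪Av,v⟫)^2 + γ0*a^2/6 + γ0*‖v‖^2)
        - 2*((l1^2*a^2/6 + ‖Av‖^2) - (lam-(l1*a^2+⟪Av,v⟫))*(l1*a^2/6+⟪Av,v⟫))) ≤ 0 :=
      mul_nonpos_of_nonneg_of_nonpos hg1.le key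
    have k3 : 0 ≤ (γ0^2+γ0^3)*(a^2 - a^2/36) := by
      have h35 : (0:ℝ) ≤ a^2 - a^2/36 := by have := sq_nonneg a; linarith
      exact mul_nonneg (by positivity) h35
    linarith only [k2, k3]
  -- equation consequences
  have hs1 := congrArg (fun z => (⟪z, U'⟫:ℝ)) heq
  simp only [inner_add_left, inner_sub_left, real_inner_smul_left,
    real_inner_self_eq_norm_sq] at hs1
  have hs2 := congrArg (fun z => (⟪P, z⟫:ℝ)) heq
  simp only [inner_add_right, inner_sub_right, real_inner_smul_right] at hs2
  rw [g5, g6, g7] at hs2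
  rw [g7] at hs1
  have gU : (⟪U'', U'⟫:ℝ) = ⟪FT, U'⟫ - ‖U'‖^2 - ⟪A (A U), U'⟫ + lam * ⟪A U, U'⟫
      - (l1*a^2 + ⟪Av,v⟫) * ⟪A U, U'⟫ := by linarith only [hs1]
  have gP : (⟪P, U''⟫:ℝ) = ⟪P, FT⟫ - ⟪P, U'⟫ - (l1^2*a^2/6 + ‖Av‖^2)
      + lam * (l1*a^2/6 + ⟪Av,v⟫) - (l1*a^2 + ⟪Av,v⟫) * (l1*a^2/6 + ⟪Av,v⟫) := by
    linarith only [hs2]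
  rw [gU, gP, g7, g8, g9, g11]
  linarith only [b1, b2, b3h, b4, e10a, e10b, hT2, hYb, sq_nonneg ‖U'‖]

/-- Differential inequality for the corrected energy. -/
theorem corrected_energy_differential_inequality
    {H : Type*} [NormedAddCommGroup H] [InnerProductSpace ℝ H] [CompleteSpace H]
    (D : Submodule ℝ H) (hD : Dense (D : Set H))
    (A : H →ₗ[ℝ] H)
    (hsym : ∀ x ∈ D, ∀ y ∈ D, ⟪A x, y⟫ = ⟪x, A y⟫)
    (hpos : ∀ x ∈ D, 0 ≤ ⟪A x, x⟫)
    (l1 l2 lam : ℝ) (hl1 : 0 < l1) (hl12 : l1 < l2)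
    (hlam1 : l1 < lam) (hlam2 : lam < l2)
    (e1 : H) (he1D : e1 ∈ D) (he1 : ‖e1‖ = 1) (hAe1 : A e1 = l1 • e1)
    (hgap : ∀ x ∈ D, ⟪x, e1⟫ = 0 → l2 ^ 2 * ‖x‖ ^ 2 ≤ ‖A x‖ ^ 2)
    (γ0 : ℝ) (hγ0 : γ0 = (1/8) * min 1 (min (l1 * (lam - l1)) (l2 * (l2 - lam))))
    (f : ℝ → H) (hfc : ContinuousOn f (Ici 0))
    (hfb : ∃ C, ∀ t ∈ Ici (0:ℝ), ‖f t‖ ≤ C)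
    (u u' u'' : ℝ → H) (hu : IsStrongSolution D A lam f u u' u'')
    (F : ℝ → ℝ)
    (hF : ∀ t, F t =
      (1/2) * ‖u' t‖ ^ 2 + (1/2) * ‖A (u t)‖ ^ 2
        - (lam/2) * ⟪A (u t), u t⟫ + (1/4) * ⟪A (u t), u t⟫ ^ 2
        + 2 * γ0 * ⟪u t - ((5/6) * ⟪u t, e1⟫) • e1, u' t⟫
        + γ0 * ⟪u t - ((5/6) * ⟪u t, e1⟫) • e1, u t⟫)
    :
    ∃ F' : ℝ → ℝ, ∀ t ∈ Ici (0:ℝ),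
      HasDerivWithinAt F (F' t) (Ici 0) t ∧
      F' t ≤ -γ0 * F t + 2 * ‖f t‖ ^ 2 := by
  obtain ⟨hu1, hu2, hu3, hu4, hu5, hu6, hu7⟩ := hu
  have huc : ContinuousOn u (Ici 0) := fun s hs => (hu1 s hs).continuousWithinAt
  have hu'c : ContinuousOn u' (Ici 0) := fun s hs => (hu2 s hs).continuousWithinAt
  have hWc : ContinuousOn (fun y => A (A (u y))) (Ici 0) := by
    have heqW : ∀ y ∈ Ici (0:ℝ), A (A (u y)) =
        f y - u'' y - u' y + lam • A (u y) - ⟪A (u y), u y⟫ • A (u y) := by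
      intro y hy
      have h := hu7 y hy
      rw [← h]; module
    exact ContinuousOn.congr
      ((((hfc.sub hu3).sub hu'c).add (hu6.const_smul lam)).sub ((hu6.inner huc).smul hu6)) heqW
  refine ⟨fun y => ⟪u'' y, u' y⟫ + ⟪A (A (u y)), u' y⟫ - lam * ⟪A (u y), u' y⟫
      + ⟪A (u y), u y⟫ * ⟪A (u y), u' y⟫
      + 2*γ0*(⟪u y - ((5/6)*⟪u y, e1⟫) • e1, u'' y⟫
          + ⟪u' y - ((5/6)*⟪u' y, e1⟫) • e1, u' y⟫)
      + γ0*(⟪u y - ((5/6)*⟪u y, e1⟫) • e1, u' y⟫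
          + ⟪u' y - ((5/6)*⟪u' y, e1⟫) • e1, u y⟫), ?_⟩
  intro t ht
  constructor
  · -- differentiability
    have hA2 : HasDerivWithinAt (fun y => ⟪A (u y), u y⟫) (2*⟪A (u t), u' t⟫) (Ici 0) t := by
      refine aux_slope_deriv ht (hu1 t ht) hu6 ?_
      intro y hy
      have hcomm : ⟪A (u t), u y⟫ = ⟪A (u y), u t⟫ := by
        rw [hsym _ (hu4 t ht) _ (hu4 y hy), real_inner_comm]
      simp only [inner_add_left, inner_sub_right]
      rw [hcomm]; ring
    have hW2 : HasDerivWithinAt (fun y => ‖A (u y)‖^2) (2*⟪A (A (u t)), u' t⟫) (Ici 0) t := by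
      refine aux_slope_deriv ht (hu1 t ht) hWc ?_
      intro y hy
      have h1 : ⟪A (u y - u t), A (u y) + A (u t)⟫
          = ⟪u y - u t, A (A (u y)) + A (A (u t))⟫ := by
        rw [hsym _ (D.sub_mem (hu4 y hy) (hu4 t ht)) _ (D.add_mem (hu5 y hy) (hu5 t ht)),
          map_add]
      rw [real_inner_comm, ← h1, map_sub]
      simp only [inner_sub_left, inner_add_right, real_inner_self_eq_norm_sq]
      rw [real_inner_comm (A (u t)) (A (u y))]; ring
    have hin1 : HasDerivWithinAt (fun y => ⟪u y, e1⟫) ⟪u' t, e1⟫ (Ici 0) t := by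
      simpa using (hu1 t ht).inner ℝ (hasDerivWithinAt_const t (Ici 0) e1)
    have hp : HasDerivWithinAt (fun y => u y - ((5/6)*⟪u y, e1⟫) • e1)
        (u' t - ((5/6)*⟪u' t, e1⟫) • e1) (Ici 0) t :=
      (hu1 t ht).sub ((hin1.const_mul (5/6:ℝ)).smul_const e1)
    have hc1 : HasDerivWithinAt (fun y => (1/2) * ‖u' y‖^2) ⟪u'' t, u' t⟫ (Ici 0) t := by
      have h := ((hu2 t ht).inner ℝ (hu2 t ht)).const_mul (1/2:ℝ)
      simp only [real_inner_self_eq_norm_sq] at h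
      refine h.congr_deriv ?_
      rw [real_inner_comm (u' t) (u'' t)]; ring
    have hc2 : HasDerivWithinAt (fun y => (1/2) * ‖A (u y)‖^2)
        ⟪A (A (u t)), u' t⟫ (Ici 0) t := by
      have h := hW2.const_mul (1/2:ℝ)
      refine h.congr_deriv ?_; ring
    have hc3 : HasDerivWithinAt (fun y => (lam/2) * ⟪A (u y), u y⟫)
        (lam * ⟪A (u t), u' t⟫) (Ici 0) t := by
      have h := hA2.const_mul (lam/2:ℝ)
      refine h.congr_deriv ?_; ring
    have hc4 : HasDerivWithinAt (fun y => (1/4) * ⟪A (u y), u y⟫^2)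
        (⟪A (u t), u t⟫ * ⟪A (u t), u' t⟫) (Ici 0) t := by
      have h := (hA2.pow 2).const_mul (1/4:ℝ)
      refine h.congr_deriv ?_; push_cast; ring
    have hc5 : HasDerivWithinAt (fun y => 2 * γ0 * ⟪u y - ((5/6)*⟪u y, e1⟫) • e1, u' y⟫)
        (2*γ0*(⟪u t - ((5/6)*⟪u t, e1⟫) • e1, u'' t⟫
          + ⟪u' t - ((5/6)*⟪u' t, e1⟫) • e1, u' t⟫)) (Ici 0) t :=
      (hp.inner ℝ (hu2 t ht)).const_mul (2*γ0)
    have hc6 : HasDerivWithinAt (fun y => γ0 * ⟪u y - ((5/6)*⟪u y, e1⟫) • e1, u y⟫)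
        (γ0*(⟪u t - ((5/6)*⟪u t, e1⟫) • e1, u' t⟫
          + ⟪u' t - ((5/6)*⟪u' t, e1⟫) • e1, u t⟫)) (Ici 0) t :=
      (hp.inner ℝ (hu1 t ht)).const_mul γ0
    exact (((((hc1.add hc2).sub hc3).add hc4).add hc5).add hc6).congr
      (fun y _ => hF y) (hF t)
  · -- inequality
    rw [hF t]
    exact pointwise_ineq D A hsym hpos l1 l2 lam hl1 hl12 hlam1 hlam2 e1 he1D he1 hAe1
      hgap γ0 hγ0 (u t) (u' t) (u'' t) (f t) (hu4 t ht) (hu5 t ht) (hu7 t ht)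
end

section
/- For every bounded continuously differentiable function φ : [0,∞) → ℝ there exists a sequence (t_n) of nonnegative real numbers with t_n → +∞ such that φ'(t_n) → 0 and φ(t_n) → limsup_{t→+∞} φ(t) as n → +∞. -/
open Filter Topology Set
open scoped RealInnerProductSpace

set_option maxHeartbeats 1000000 in
lemma key_step (φ φ' : ℝ → ℝ)
    (hφ : ∀ t ∈ Ici (0:ℝ), HasDerivWithinAt φ (φ' t) (Ici 0) t)
    (hφ' : ContinuousOn φ' (Ici 0))
    (hb : ∃ C, ∀ t ∈ Ici (0:ℝ), |φ t| ≤ C)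
    (ε N : ℝ) (hε : 0 < ε) :
    ∃ w, N ≤ w ∧ 0 ≤ w ∧ |φ' w| ≤ ε ∧ |φ w - limsup φ atTop| ≤ ε := by
  obtain ⟨C, hC⟩ := hb
  set L := limsup φ atTop with hLdef
  have hbdd : IsBoundedUnder (· ≤ ·) atTop φ :=
    ⟨C, eventually_atTop.2 ⟨0, fun t ht => (abs_le.1 (hC t ht)).2⟩⟩
  have hbdd' : IsBoundedUnder (· ≥ ·) atTop φ :=
    ⟨-C, eventually_atTop.2 ⟨0, fun t ht => neg_le_of_abs_le (hC t ht)⟩⟩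
  have hcob : IsCoboundedUnder (· ≤ ·) atTop φ := hbdd'.isCoboundedUnder_le
  set δ : ℝ := min (ε/2) (ε^2/8) with hδdef
  have hδpos : 0 < δ := lt_min (by linarith) (by positivity)
  have hδ1 : δ ≤ ε/2 := min_le_left _ _
  have hδ2 : δ ≤ ε^2/8 := min_le_right _ _
  have h1 : ∀ᶠ t in atTop, φ t < L + δ :=
    eventually_lt_of_limsup_lt (by linarith) hbdd
  have h2 : ∃ᶠ t in atTop, L - δ < φ t :=
    frequently_lt_of_lt_limsup hcob (by linarith)
  obtain ⟨s₀, hs₀⟩ := eventually_atTop.1 h1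
  set s : ℝ := max s₀ (max N 0) with hsdef
  have hsN : N ≤ s := le_max_of_le_right (le_max_left _ _)
  have hs0 : (0:ℝ) ≤ s := le_max_of_le_right (le_max_right _ _)
  have hs : ∀ t, s ≤ t → φ t < L + δ := fun t ht => hs₀ t (le_trans (le_max_left _ _) ht)
  obtain ⟨u, hus, hu⟩ := (frequently_atTop.1 h2) (s + ε)
  -- basic facts
  have hu0 : 0 < u := by linarith
  have hcφ : ContinuousOn φ (Ici 0) := fun t ht => (hφ t ht).continuousWithinAt
  -- derivative on interior points
  have hderiv : ∀ x : ℝ, 0 < x → deriv φ x = φ' x := by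
    intro x hx
    exact ((hφ x (le_of_lt hx)).hasDerivAt (Ici_mem_nhds hx)).deriv
  have hdiff : ∀ x : ℝ, 0 < x → DifferentiableAt ℝ φ x := by
    intro x hx
    exact ((hφ x (le_of_lt hx)).hasDerivAt (Ici_mem_nhds hx)).differentiableAt
  rcases le_or_gt |φ' u| (3*ε/4) with hBu | hBu
  · -- easy case : w = u
    refine ⟨u, by linarith, by linarith, by linarith, ?_⟩
    have h3 : φ u < L + δ := hs u (by linarith)
    rw [abs_le]; constructor <;> linarith
  rcases lt_or_ge (3*ε/4) (φ' u) with hpos | hneg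
  · -- φ' u > 3ε/4 : move right
    set A : Set ℝ := Icc u (u+ε) ∩ φ' ⁻¹' (Iic (3*ε/4)) with hAdef
    have hIsub : Icc u (u+ε) ⊆ Ici (0:ℝ) := fun t ht => le_trans (le_of_lt hu0) ht.1
    have hAclosed : IsClosed A :=
      (hφ'.mono hIsub).preimage_isClosed_of_isClosed isClosed_Icc isClosed_Iic
    have hAne : A.Nonempty := by
      by_contra hne
      have hgt : ∀ t ∈ Icc u (u+ε), 3*ε/4 < φ' t := by
        intro t ht
        by_contra hle
        exact hne ⟨t, ht, le_of_not_gt hle⟩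
      have key := (convex_Icc u (u+ε)).mul_sub_le_image_sub_of_le_deriv
        (hcφ.mono hIsub)
        (fun x hx => (hdiff x (lt_of_lt_of_le hu0 (by
          rw [interior_Icc] at hx; exact le_of_lt hx.1))).differentiableWithinAt)
        (C := 3*ε/4) (fun x hx => by
          rw [interior_Icc] at hx
          rw [hderiv x (lt_trans hu0 hx.1)]
          exact le_of_lt (hgt x ⟨le_of_lt hx.1, le_of_lt hx.2⟩))
        u (by constructor <;> linarith) (u+ε) (by constructor <;> linarith) (by linarith)
      have h3 : φ (u+ε) < L + δ := hs (u+ε) (by linarith)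
      nlinarith
    set w : ℝ := sInf A with hwdef
    have hAbdd : BddBelow A := ⟨u, fun t ht => ht.1.1⟩
    have hwA : w ∈ A := hAclosed.csInf_mem hAne hAbdd
    have hw1 : u ≤ w := hwA.1.1
    have hw2 : w ≤ u + ε := hwA.1.2
    have hw3 : φ' w ≤ 3*ε/4 := hwA.2
    have huw : u < w := by
      rcases eq_or_lt_of_le hw1 with h | h
      · exfalso; rw [← h] at hw3; linarith
      · exact h
    have hgt : ∀ t, u ≤ t → t < w → 3*ε/4 < φ' t := by
      intro t ht1 ht2
      by_contra hle
      exact notMem_of_lt_csInf ht2 hAbdd ⟨⟨ht1, by linarith⟩, le_of_not_gt hle⟩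
    -- φ w ≥ φ u by monotonicity
    have hIsub2 : Icc u w ⊆ Ici (0:ℝ) := fun t ht => le_trans (le_of_lt hu0) ht.1
    have hmono := (convex_Icc u w).mul_sub_le_image_sub_of_le_deriv
      (hcφ.mono hIsub2)
      (fun x hx => (hdiff x (lt_of_lt_of_le hu0 (by
        rw [interior_Icc] at hx; exact le_of_lt hx.1))).differentiableWithinAt)
      (C := 0) (fun x hx => by
        rw [interior_Icc] at hx
        rw [hderiv x (lt_trans hu0 hx.1)]
        linarith [hgt x (le_of_lt hx.1) hx.2])
      u (by constructor <;> linarith) w (by constructor <;> linarith) (le_of_lt huw)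
    have hφw : φ u ≤ φ w := by nlinarith
    -- φ' w ≥ 3ε/4 by left continuity
    have hne : (𝓝[Ico u w] w).NeBot := right_nhdsWithin_Ico_neBot huw
    have htend : Tendsto φ' (𝓝[Ico u w] w) (𝓝 (φ' w)) :=
      ((hφ' w (hIsub2 ⟨hw1, le_refl w⟩)).mono (fun t ht => hIsub2 ⟨ht.1, le_of_lt ht.2⟩))
    have hge : 3*ε/4 ≤ φ' w := by
      refine ge_of_tendsto htend ?_
      filter_upwards [self_mem_nhdsWithin] with t ht
      exact le_of_lt (hgt t ht.1 ht.2)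
    refine ⟨w, by linarith, by linarith, ?_, ?_⟩
    · rw [abs_le]; constructor <;> linarith
    · have h3 : φ w < L + δ := hs w (by linarith)
      rw [abs_le]; constructor <;> linarith
  · -- φ' u < -(3ε/4) : move left
    have hneg' : φ' u < -(3*ε/4) := by
      rcases abs_cases (φ' u) with ⟨h, _⟩ | ⟨h, _⟩ <;> linarith
    set A : Set ℝ := Icc (u-ε) u ∩ φ' ⁻¹' (Ici (-(3*ε/4))) with hAdef
    have hIsub : Icc (u-ε) u ⊆ Ici (0:ℝ) := fun t ht => le_trans (by linarith) ht.1
    have hAclosed : IsClosed A :=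
      (hφ'.mono hIsub).preimage_isClosed_of_isClosed isClosed_Icc isClosed_Ici
    have hAne : A.Nonempty := by
      by_contra hne
      have hgt : ∀ t ∈ Icc (u-ε) u, φ' t < -(3*ε/4) := by
        intro t ht
        by_contra hle
        exact hne ⟨t, ht, le_of_not_gt hle⟩
      have key := (convex_Icc (u-ε) u).image_sub_le_mul_sub_of_deriv_le
        (hcφ.mono hIsub)
        (fun x hx => (hdiff x (by
          rw [interior_Icc] at hx
          have : s ≤ u - ε := by linarith
          linarith [hx.1, hs0])).differentiableWithinAt)
        (C := -(3*ε/4)) (fun x hx => by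
          rw [interior_Icc] at hx
          rw [hderiv x (by linarith [hx.1] : (0:ℝ) < x)]
          exact le_of_lt (hgt x ⟨le_of_lt hx.1, le_of_lt hx.2⟩))
        (u-ε) (by constructor <;> linarith) u (by constructor <;> linarith) (by linarith)
      have h3 : φ (u-ε) < L + δ := hs (u-ε) (by linarith)
      nlinarith
    set w : ℝ := sSup A with hwdef
    have hAbdd : BddAbove A := ⟨u, fun t ht => ht.1.2⟩
    have hwA : w ∈ A := hAclosed.csSup_mem hAne hAbdd
    have hw1 : u - ε ≤ w := hwA.1.1
    have hw2 : w ≤ u := hwA.1.2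
    have hw3 : -(3*ε/4) ≤ φ' w := hwA.2
    have huw : w < u := by
      rcases eq_or_lt_of_le hw2 with h | h
      · exfalso; rw [h] at hw3; linarith
      · exact h
    have hgt : ∀ t, w < t → t ≤ u → φ' t < -(3*ε/4) := by
      intro t ht1 ht2
      by_contra hle
      exact notMem_of_csSup_lt ht1 hAbdd ⟨⟨by linarith, ht2⟩, le_of_not_gt hle⟩
    have hIsub2 : Icc w u ⊆ Ici (0:ℝ) := fun t ht => le_trans (by linarith) ht.1
    have hw0 : (0:ℝ) ≤ w := by linarith
    have hmono := (convex_Icc w u).image_sub_le_mul_sub_of_deriv_le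
      (hcφ.mono hIsub2)
      (fun x hx => (hdiff x (by
        rw [interior_Icc] at hx; linarith [hx.1])).differentiableWithinAt)
      (C := 0) (fun x hx => by
        rw [interior_Icc] at hx
        rw [hderiv x (by linarith [hx.1] : (0:ℝ) < x)]
        linarith [hgt x hx.1 (le_of_lt hx.2)])
      w (by constructor <;> linarith) u (by constructor <;> linarith) (le_of_lt huw)
    have hφw : φ u ≤ φ w := by nlinarith
    -- φ' w ≤ -(3ε/4) by right continuity
    have hne : (𝓝[Ioc w u] w).NeBot := left_nhdsWithin_Ioc_neBot huw
    have htend : Tendsto φ' (𝓝[Ioc w u] w) (𝓝 (φ' w)) :=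
      ((hφ' w hw0).mono (fun t ht => hIsub2 ⟨le_of_lt ht.1, ht.2⟩))
    have hle : φ' w ≤ -(3*ε/4) := by
      refine le_of_tendsto htend ?_
      filter_upwards [self_mem_nhdsWithin] with t ht
      exact le_of_lt (hgt t ht.1 ht.2)
    refine ⟨w, by linarith, by linarith, ?_, ?_⟩
    · rw [abs_le]; constructor <;> linarith
    · have h3 : φ w < L + δ := hs w (by linarith)
      rw [abs_le]; constructor <;> linarith

/-- For every bounded `C¹` function `φ : [0,∞) → ℝ` there is a sequence `tₙ → +∞`
along which `φ'` tends to `0` and `φ` tends to its limsup at `+∞`. -/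
theorem exists_sequence_deriv_to_zero_limsup (φ φ' : ℝ → ℝ)
    (hφ : ∀ t ∈ Ici (0:ℝ), HasDerivWithinAt φ (φ' t) (Ici 0) t)
    (hφ' : ContinuousOn φ' (Ici 0))
    (hb : ∃ C, ∀ t ∈ Ici (0:ℝ), |φ t| ≤ C) :
    ∃ t : ℕ → ℝ, (∀ n, 0 ≤ t n) ∧ Tendsto t atTop atTop ∧
      Tendsto (fun n => φ' (t n)) atTop (𝓝 0) ∧
      Tendsto (fun n => φ (t n)) atTop (𝓝 (limsup φ atTop)) := by
  have key : ∀ n : ℕ, ∃ w : ℝ, (n:ℝ) ≤ w ∧ 0 ≤ w ∧ |φ' w| ≤ 1/(n+1) ∧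
      |φ w - limsup φ atTop| ≤ 1/(n+1) := fun n =>
    key_step φ φ' hφ hφ' hb (1/(n+1)) n (by positivity)
  choose t ht0 ht1 ht2 ht3 using key
  have hlim : Tendsto (fun n : ℕ => 1/((n:ℝ)+1)) atTop (𝓝 0) :=
    tendsto_one_div_add_atTop_nhds_zero_nat
  refine ⟨t, ht1, ?_, ?_, ?_⟩
  · exact tendsto_atTop_mono ht0 tendsto_natCast_atTop_atTop
  · refine squeeze_zero_norm (fun n => ?_) hlim
    simpa using ht2 n
  · have : Tendsto (fun n => φ (t n) - limsup φ atTop) atTop (𝓝 0) := by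
      refine squeeze_zero_norm (fun n => ?_) hlim
      simpa using ht3 n
    have h2 := this.add_const (limsup φ atTop)
    simpa using h2
end

section
/- Ultimate bounds for a scalar damped linear ODE with negative stiffness: let m > 0, let ψ : [0,∞) → ℝ be a bounded continuous function, and let y : [0,∞) → ℝ be a twice continuously differentiable function satisfying y''(t) + y'(t) − m·y(t) = ψ(t) for all t ≥ 0. If y is bounded, then limsup_{t→+∞} |y(t)| ≤ (1/m)·limsup_{t→+∞} |ψ(t)| and limsup_{t→+∞} |y'(t)| ≤ 2·limsup_{t→+∞} |ψ(t)|. -/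
open Filter Topology Set
open scoped RealInnerProductSpace

private lemma monoOn_aux {f f' : ℝ → ℝ}
    (hf : ∀ t ∈ Ici (0:ℝ), HasDerivWithinAt f (f' t) (Ici 0) t)
    {T : ℝ} (hT : 0 ≤ T) (hd : ∀ t, T ≤ t → 0 ≤ f' t) :
    MonotoneOn f (Ici T) := by
  apply monotoneOn_of_deriv_nonneg (convex_Ici T)
  · intro x hx
    exact ((hf x (hT.trans hx)).continuousWithinAt).mono (Ici_subset_Ici.2 hT)
  · intro x hx
    rw [interior_Ici] at hx
    have h0 : 0 < x := lt_of_le_of_lt hT hx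
    exact (((hf x h0.le).hasDerivAt (Ici_mem_nhds h0)).differentiableAt).differentiableWithinAt
  · intro x hx
    rw [interior_Ici] at hx
    have h0 : 0 < x := lt_of_le_of_lt hT hx
    rw [((hf x h0.le).hasDerivAt (Ici_mem_nhds h0)).deriv]
    exact hd x hx.le

private lemma hasDeriv_aux {f f' : ℝ → ℝ}
    (hf : ∀ t ∈ Ici (0:ℝ), HasDerivWithinAt f (f' t) (Ici 0) t) (c K : ℝ) :
    ∀ t ∈ Ici (0:ℝ), HasDerivWithinAt (fun t => Real.exp (-(c*t)) * (f t + K))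
      (Real.exp (-(c*t)) * (f' t - c * (f t + K))) (Ici 0) t := by
  intro t ht
  have he : HasDerivAt (fun t : ℝ => Real.exp (-(c*t))) (Real.exp (-(c*t)) * (-c)) t := by
    have h1 : HasDerivAt (fun t : ℝ => -(c*t)) (-c) t := by
      simpa using ((hasDerivAt_id t).const_mul (-c))
    exact h1.exp
  have := (he.hasDerivWithinAt).fun_mul ((hf t ht).add_const K)
  refine this.congr_deriv ?_
  ring

/-- Upper comparison: if `f' - c f ≤ M` beyond `T` then
`f t ≤ exp (c (t-T)) (f T + M/c) - M/c`. -/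
private lemma ode_upper {f f' : ℝ → ℝ}
    (hf : ∀ t ∈ Ici (0:ℝ), HasDerivWithinAt f (f' t) (Ici 0) t)
    {c M T : ℝ} (hc : c ≠ 0) (hT : 0 ≤ T)
    (hd : ∀ t, T ≤ t → f' t - c * f t ≤ M) :
    ∀ t, T ≤ t → f t ≤ Real.exp (c*(t-T)) * (f T + M/c) - M/c := by
  have hg := hasDeriv_aux hf c (M/c)
  have hgneg : ∀ t ∈ Ici (0:ℝ), HasDerivWithinAt
      (fun t => -(Real.exp (-(c*t)) * (f t + M/c)))
      (-(Real.exp (-(c*t)) * (f' t - c * (f t + M/c)))) (Ici 0) t :=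
    fun t ht => (hg t ht).neg
  have hmono : MonotoneOn (fun t => -(Real.exp (-(c*t)) * (f t + M/c))) (Ici T) := by
    apply monoOn_aux hgneg hT
    intro t ht
    have h1 : f' t - c * (f t + M/c) ≤ 0 := by
      have h3 : c * (f t + M / c) = c * f t + M := by field_simp
      rw [h3]
      linarith [hd t ht]
    have := mul_nonpos_of_nonneg_of_nonpos (Real.exp_pos (-(c*t))).le h1
    linarith
  intro t ht
  have hle := hmono (self_mem_Ici) (mem_Ici.2 ht) ht
  simp only [neg_le_neg_iff] at hle
  -- hle : exp(-(c*t)) * (f t + M/c) ≤ exp(-(c*T)) * (f T + M/c)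
  have hle' : Real.exp (-(c*t)) * (f t + M/c) ≤ Real.exp (-(c*T)) * (f T + M/c) := by
    linarith
  have e1 : Real.exp (c*t) * Real.exp (-(c*t)) = 1 := by
    rw [← Real.exp_add]; simp
  have key : f t + M/c ≤ Real.exp (c*(t-T)) * (f T + M/c) := by
    calc f t + M/c = (Real.exp (c*t) * Real.exp (-(c*t))) * (f t + M/c) := by rw [e1]; ring
      _ = Real.exp (c*t) * (Real.exp (-(c*t)) * (f t + M/c)) := by ring
      _ ≤ Real.exp (c*t) * (Real.exp (-(c*T)) * (f T + M/c)) :=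
          mul_le_mul_of_nonneg_left hle' (Real.exp_pos _).le
      _ = Real.exp (c*(t-T)) * (f T + M/c) := by
          rw [← mul_assoc, ← Real.exp_add]; ring_nf
  linarith

private lemma ode_lower {f f' : ℝ → ℝ}
    (hf : ∀ t ∈ Ici (0:ℝ), HasDerivWithinAt f (f' t) (Ici 0) t)
    {c M T : ℝ} (hc : c ≠ 0) (hT : 0 ≤ T)
    (hd : ∀ t, T ≤ t → -M ≤ f' t - c * f t) :
    ∀ t, T ≤ t → Real.exp (c*(t-T)) * (f T - M/c) + M/c ≤ f t := by
  intro t ht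
  have := ode_upper (f := fun t => -f t) (f' := fun t => -f' t) (M := M)
    (fun t ht => (hf t ht).neg) hc hT (fun s hs => by have := hd s hs; linarith) t ht
  have heq : Real.exp (c*(t-T)) * (-f T + M/c) - M/c
      = -(Real.exp (c*(t-T)) * (f T - M/c) + M/c) := by ring
  rw [heq] at this
  linarith

/-- If `f' - c f ≥ -M` beyond `T` with `c > 0` and `f` bounded above, then `f ≤ M/c` beyond `T`. -/
private lemma bound_of_bounded {f f' : ℝ → ℝ}
    (hf : ∀ t ∈ Ici (0:ℝ), HasDerivWithinAt f (f' t) (Ici 0) t)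
    {c M T Cu : ℝ} (hc : 0 < c) (hT : 0 ≤ T)
    (hd : ∀ t, T ≤ t → -M ≤ f' t - c * f t)
    (hb : ∀ t, (0:ℝ) ≤ t → f t ≤ Cu) :
    ∀ t, T ≤ t → f t ≤ M / c := by
  intro t₀ ht₀
  by_contra h
  push_neg at h
  have hδpos : 0 < f t₀ - M/c := by linarith
  have key : ∀ t, t₀ ≤ t → Real.exp (c*(t-t₀)) * (f t₀ - M/c) + M/c ≤ f t :=
    ode_lower hf hc.ne' (hT.trans ht₀) (fun s hs => hd s (ht₀.trans hs))
  have htend : Tendsto (fun t => Real.exp (c*(t-t₀)) * (f t₀ - M/c) + M/c) atTop atTop := by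
    apply tendsto_atTop_add_const_right
    apply Tendsto.atTop_mul_const hδpos
    apply Real.tendsto_exp_atTop.comp
    have : Tendsto (fun t : ℝ => c * t) atTop atTop :=
      Tendsto.const_mul_atTop hc tendsto_id
    have := tendsto_atTop_add_const_right atTop (-(c*t₀)) this
    refine this.congr (fun t => by ring)
  obtain ⟨t, hCu, ht⟩ := ((htend.eventually_gt_atTop Cu).and (eventually_ge_atTop t₀)).exists
  have h1 := key t ht
  have h2 := hb t ((hT.trans ht₀).trans ht)
  linarith


/-- Two-sided bound for the stable (`c < 0`) direction. -/
private lemma abs_bound_of_ode {f f' : ℝ → ℝ}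
    (hf : ∀ t ∈ Ici (0:ℝ), HasDerivWithinAt f (f' t) (Ici 0) t)
    {c M T : ℝ} (hc : c < 0) (hT : 0 ≤ T) (hM : 0 ≤ M)
    (hd : ∀ t, T ≤ t → |f' t - c * f t| ≤ M) :
    ∀ t, T ≤ t → |f t| ≤ Real.exp (c*(t-T)) * (|f T| + M/(-c)) + M/(-c) := by
  intro t ht
  have hcpos : 0 < -c := neg_pos.2 hc
  have hMc : M / c = -(M / (-c)) := by field_simp
  have hP : 0 ≤ M / (-c) := div_nonneg hM hcpos.le
  have hE : 0 < Real.exp (c*(t-T)) := Real.exp_pos _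
  have hup := ode_upper hf hc.ne hT (fun s hs => (abs_le.1 (hd s hs)).2) t ht
  have hlo := ode_lower hf hc.ne hT (fun s hs => (abs_le.1 (hd s hs)).1) t ht
  rw [hMc] at hup hlo
  rw [abs_le]
  constructor
  · have h1 : -(|f T| + M/(-c)) ≤ f T + M/(-c) := by
      have := neg_abs_le (f T); linarith
    nlinarith [mul_le_mul_of_nonneg_left h1 hE.le]
  · have h1 : f T - M/(-c) ≤ |f T| + M/(-c) := by
      have := le_abs_self (f T); linarith
    nlinarith [mul_le_mul_of_nonneg_left h1 hE.le]

/-- Ultimate bounds for a scalar damped linear ODE with negative stiffness. -/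
theorem scalar_ode_ultimate_bounds (m : ℝ) (hm : 0 < m) (ψ : ℝ → ℝ)
    (hψc : ContinuousOn ψ (Ici 0))
    (hψb : ∃ C, ∀ t ∈ Ici (0:ℝ), |ψ t| ≤ C)
    (y y' y'' : ℝ → ℝ)
    (hy : ∀ t ∈ Ici (0:ℝ), HasDerivWithinAt y (y' t) (Ici 0) t)
    (hy' : ∀ t ∈ Ici (0:ℝ), HasDerivWithinAt y' (y'' t) (Ici 0) t)
    (hy'' : ContinuousOn y'' (Ici 0))
    (heq : ∀ t ∈ Ici (0:ℝ), y'' t + y' t - m * y t = ψ t)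
    (hyb : ∃ C, ∀ t ∈ Ici (0:ℝ), |y t| ≤ C) :
    limsup (fun t => |y t|) atTop ≤ (1/m) * limsup (fun t => |ψ t|) atTop ∧
    IsBoundedUnder (· ≤ ·) atTop (fun t => |y' t|) ∧
    limsup (fun t => |y' t|) atTop ≤ 2 * limsup (fun t => |ψ t|) atTop := by
  obtain ⟨Cψ, hCψ⟩ := hψb
  obtain ⟨Cy, hCy⟩ := hyb
  have hCy0 : 0 ≤ Cy := le_trans (abs_nonneg _) (hCy 0 self_mem_Ici)
  have hCψ0 : 0 ≤ Cψ := le_trans (abs_nonneg _) (hCψ 0 self_mem_Ici)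
  set s : ℝ := Real.sqrt (1 + 4*m) with hsdef
  have hss : s^2 = 1 + 4*m := Real.sq_sqrt (by positivity)
  have hsnn : 0 ≤ s := Real.sqrt_nonneg _
  have hs1 : 1 < s := by nlinarith [hss]
  set lam : ℝ := (-1 + s)/2 with hlamdef
  set mu : ℝ := (-1 - s)/2 with hmudef
  have hlam : 0 < lam := by rw [hlamdef]; linarith
  have hmu : mu < 0 := by rw [hmudef]; linarith
  have hsum : lam + mu = -1 := by rw [hlamdef, hmudef]; ring
  have hlm : lam * mu = -m := by
    have h1 : lam * mu = (1 - s^2)/4 := by rw [hlamdef, hmudef]; ring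
    rw [h1, hss]; ring
  have hdiff : lam - mu = s := by rw [hlamdef, hmudef]; ring
  -- the two first-order variables
  set v : ℝ → ℝ := fun t => y' t - lam * y t with hvdef
  set dv : ℝ → ℝ := fun t => y'' t - lam * y' t with hdvdef
  set u : ℝ → ℝ := fun t => y' t - mu * y t with hudef
  set du : ℝ → ℝ := fun t => y'' t - mu * y' t with hdudef
  have hdv : ∀ t ∈ Ici (0:ℝ), HasDerivWithinAt v (dv t) (Ici 0) t :=
    fun t ht => (hy' t ht).sub ((hy t ht).const_mul lam)
  have hdu : ∀ t ∈ Ici (0:ℝ), HasDerivWithinAt u (du t) (Ici 0) t :=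
    fun t ht => (hy' t ht).sub ((hy t ht).const_mul mu)
  have heqv : ∀ t, 0 ≤ t → dv t - mu * v t = ψ t := by
    intro t ht
    have h := heq t ht
    rw [hdvdef, hvdef]
    dsimp only
    linear_combination h - y' t * hsum + y t * hlm
  have hequ : ∀ t, 0 ≤ t → du t - lam * u t = ψ t := by
    intro t ht
    have h := heq t ht
    rw [hdudef, hudef]
    dsimp only
    linear_combination h - y' t * hsum + y t * hlm
  -- uniform bound on v
  set P0 : ℝ := Cψ / (-mu) with hP0def
  have hmupos : 0 < -mu := neg_pos.2 hmu
  have hP0 : 0 ≤ P0 := div_nonneg hCψ0 hmupos.le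
  have hvb : ∀ t, 0 ≤ t → |v t| ≤ |v 0| + 2 * P0 := by
    intro t ht
    have h := abs_bound_of_ode hdv hmu le_rfl hCψ0
      (fun s hs => by rw [heqv s hs]; exact hCψ s hs) t ht
    have hE1 : Real.exp (mu*(t-0)) ≤ 1 := by
      rw [Real.exp_le_one_iff]
      nlinarith
    have hE0 : 0 < Real.exp (mu*(t-0)) := Real.exp_pos _
    have habs : 0 ≤ |v 0| := abs_nonneg _
    nlinarith [h]
  set Cv : ℝ := |v 0| + 2 * P0 with hCvdef
  have hCv0 : 0 ≤ Cv := by have := abs_nonneg (v 0); rw [hCvdef]; linarith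
  -- uniform bound on u
  have huv : ∀ t, u t - v t = s * y t := by
    intro t; rw [hudef, hvdef]; dsimp only
    linear_combination y t * hdiff
  have hub : ∀ t, 0 ≤ t → |u t| ≤ Cv + s * Cy := by
    intro t ht
    have h1 : |u t| ≤ |v t| + |s * y t| := by
      have := huv t
      calc |u t| = |v t + s * y t| := by rw [← this]; ring_nf
        _ ≤ |v t| + |s * y t| := abs_add_le _ _
    have h2 : |s * y t| ≤ s * Cy := by
      rw [abs_mul, abs_of_nonneg hsnn]
      exact mul_le_mul_of_nonneg_left (hCy t ht) hsnn
    have := hvb t ht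
    rw [hCvdef]; linarith
  set Cu : ℝ := Cv + s * Cy with hCudef
  -- key quantitative estimates for an eventual bound M on |ψ|
  have key : ∀ M T : ℝ, 0 ≤ M → 0 ≤ T → (∀ t, T ≤ t → |ψ t| ≤ M) →
      (∀ t, T ≤ t → |u t| ≤ M / lam) ∧
      (∀ ε > (0:ℝ), ∀ᶠ t in atTop, |v t| ≤ M / (-mu) + ε) := by
    intro M T hM0 hT hMψ
    constructor
    · intro t ht
      rw [abs_le]
      constructor
      · have := bound_of_bounded (f := fun t => - u t) (f' := fun t => - du t)
          (M := M) (Cu := Cu)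
          (fun t' ht' => (hdu t' ht').neg) hlam hT
          (fun s' hs' => by
            have h := hequ s' (hT.trans hs')
            have := (abs_le.1 (hMψ s' hs')).2
            linarith)
          (fun t' ht' => by
            have := hub t' ht'
            have := neg_abs_le (u t'); linarith) t ht
        linarith
      · exact bound_of_bounded (M := M) (Cu := Cu) hdu hlam hT
          (fun s' hs' => by
            have h := hequ s' (hT.trans hs')
            have := (abs_le.1 (hMψ s' hs')).1
            linarith)
          (fun t' ht' => le_trans (le_abs_self _) (hub t' ht')) t ht
    · intro ε hε
      have hbound := abs_bound_of_ode hdv hmu hT hM0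
        (fun s' hs' => by rw [heqv s' (hT.trans hs')]; exact hMψ s' hs')
      have htend : Tendsto (fun t => Real.exp (mu*(t-T)) * (|v T| + M/(-mu))) atTop (𝓝 0) := by
        have h1 : Tendsto (fun t : ℝ => (-mu) * (t - T)) atTop atTop := by
          apply Tendsto.const_mul_atTop hmupos
          exact tendsto_atTop_add_const_right atTop (-T) tendsto_id
        have h2 : Tendsto (fun t : ℝ => Real.exp (mu*(t-T))) atTop (𝓝 0) := by
          have := Real.tendsto_exp_neg_atTop_nhds_zero.comp h1
          refine this.congr (fun t => ?_)
          simp only [Function.comp]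
          ring_nf
        have := h2.mul_const (|v T| + M/(-mu))
        simpa using this
      filter_upwards [htend.eventually_lt_const hε, eventually_ge_atTop T] with t h1 h2
      have := hbound t h2
      linarith
  -- boundedness facts for limsup
  set L : ℝ := limsup (fun t => |ψ t|) atTop with hLdef
  have hbψ : IsBoundedUnder (· ≤ ·) atTop (fun t => |ψ t|) :=
    ⟨Cψ, eventually_map.2 ((eventually_ge_atTop 0).mono fun t ht => hCψ t ht)⟩
  have hcoy : IsCoboundedUnder (· ≤ ·) atTop (fun t => |y t|) :=
    IsBoundedUnder.isCoboundedUnder_le ⟨0, eventually_map.2 (Eventually.of_forall fun t => abs_nonneg _)⟩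
  have hcoy' : IsCoboundedUnder (· ≤ ·) atTop (fun t => |y' t|) :=
    IsBoundedUnder.isCoboundedUnder_le ⟨0, eventually_map.2 (Eventually.of_forall fun t => abs_nonneg _)⟩
  have hL0 : 0 ≤ L :=
    le_limsup_of_frequently_le ((Eventually.of_forall fun t => abs_nonneg (ψ t)).frequently) hbψ
  have h3 : lam * (-mu) = m := by rw [mul_neg, hlm, neg_neg]
  -- main per-ε estimate
  have main : ∀ ε > (0:ℝ), limsup (fun t => |y t|) atTop ≤ (L + ε)/m ∧
      limsup (fun t => |y' t|) atTop ≤ 2*(L + ε) := by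
    intro ε hε
    have hev := eventually_lt_of_limsup_lt (show L < L + ε by linarith) hbψ
    obtain ⟨T₀, hT₀⟩ := eventually_atTop.1 hev
    set T : ℝ := max T₀ 0 with hTdef
    have hT : 0 ≤ T := le_max_right _ _
    have hMψ : ∀ t, T ≤ t → |ψ t| ≤ L + ε :=
      fun t ht => (hT₀ t ((le_max_left _ _).trans ht)).le
    have hM0 : 0 ≤ L + ε := by linarith
    obtain ⟨ku, kv⟩ := key (L + ε) T hM0 hT hMψ
    set M : ℝ := L + ε with hMdef
    constructor
    · apply le_of_forall_pos_le_add
      intro ε' hε'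
      apply limsup_le_of_le hcoy
      filter_upwards [kv ε' hε', eventually_ge_atTop T] with t h2 h3'
      have h1 := ku t h3'
      have hspos : 0 < s := by linarith
      have hyt : |u t - v t| = s * |y t| := by
        rw [huv t, abs_mul, abs_of_nonneg hsnn]
      have h4 : |u t - v t| ≤ |u t| + |v t| := abs_sub _ _
      have e5 : M/lam = M*(-mu)/m := by
        rw [div_eq_div_iff hlam.ne' hm.ne']
        linear_combination (-M) * h3
      have e6 : M/(-mu) = M*lam/m := by
        rw [div_eq_div_iff hmupos.ne' hm.ne']
        linear_combination (-M) * h3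
      have h5 : s * |y t| ≤ M*(-mu)/m + (M*lam/m + ε') := by
        rw [← e5, ← e6, ← hyt]
        linarith only [h1, h2, h4]
      have e7 : M*(-mu)/m + (M*lam/m + ε') = M*s/m + ε' := by
        rw [← hdiff]; ring
      have h6 : ε' ≤ ε' * s := le_mul_of_one_le_right hε'.le hs1.le
      have h8 : s * |y t| ≤ s * (M/m + ε') := by
        have e9 : s * (M/m + ε') = M*s/m + ε'*s := by ring
        linarith only [h5, e7, h6, e9]
      exact le_of_mul_le_mul_left h8 hspos
    · apply le_of_forall_pos_le_add
      intro ε'' hε''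
      apply limsup_le_of_le hcoy'
      have hε' : 0 < ε'' / (-mu) := div_pos hε'' hmupos
      filter_upwards [kv (ε''/(-mu)) hε', eventually_ge_atTop T] with t h2 h3'
      have h1 := ku t h3'
      have hid : lam * u t - mu * v t = s * y' t := by
        rw [hudef, hvdef]; dsimp only
        linear_combination y' t * hdiff
      have h4 : |y' t| ≤ |lam * u t - mu * v t| := by
        rw [hid, abs_mul, abs_of_nonneg hsnn]
        exact le_mul_of_one_le_left (abs_nonneg _) hs1.le
      have h5 : |lam * u t - mu * v t| ≤ lam * |u t| + (-mu) * |v t| := by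
        calc |lam * u t - mu * v t| ≤ |lam * u t| + |mu * v t| := abs_sub _ _
          _ = lam * |u t| + (-mu) * |v t| := by
              rw [abs_mul, abs_mul, abs_of_nonneg hlam.le, abs_of_neg hmu]
      have h6 : lam * |u t| ≤ M := by
        have := mul_le_mul_of_nonneg_left h1 hlam.le
        rwa [mul_div_cancel₀ _ hlam.ne'] at this
      have h7 : (-mu) * |v t| ≤ M + ε'' := by
        have := mul_le_mul_of_nonneg_left h2 hmupos.le
        have hmne : mu ≠ 0 := ne_of_lt hmu
        have e8 : (-mu) * (M/(-mu) + ε''/(-mu)) = M + ε'' := by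
          field_simp
          ring
        linarith [this, e8]
      linarith
  refine ⟨?_, ?_, ?_⟩
  · apply le_of_forall_pos_le_add
    intro η hη
    calc limsup (fun t => |y t|) atTop ≤ (L + η*m)/m := (main (η*m) (by positivity)).1
      _ = 1/m * L + η := by field_simp
  · refine ⟨Cu + (-mu) * Cy, eventually_map.2 ((eventually_ge_atTop 0).mono fun t ht => ?_)⟩
    have h1 : y' t = u t + mu * y t := by rw [hudef]; dsimp only; ring
    have h2 : |y' t| ≤ |u t| + (-mu) * |y t| := by
      rw [h1]
      calc |u t + mu * y t| ≤ |u t| + |mu * y t| := abs_add_le _ _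
        _ = |u t| + (-mu) * |y t| := by rw [abs_mul, abs_of_neg hmu]
    have h3 := hub t ht
    have h4 := mul_le_mul_of_nonneg_left (hCy t ht) hmupos.le
    rw [hCudef] at h3 ⊢
    linarith
  · apply le_of_forall_pos_le_add
    intro η hη
    calc limsup (fun t => |y' t|) atTop ≤ 2*(L + η/2) := (main (η/2) (by positivity)).2
      _ = 2 * L + η := by ring
end

section
/- Ultimate bound for a damped abstract wave equation with coercive operator: let X be a real Hilbert space, let B be a densely defined symmetric linear operator on X with domain D(B) such that ⟨Bx,x⟩ ≥ m|x|² for every x ∈ D(B), where m > 0, let ψ : [0,∞) → X be a bounded continuous function, and let y : [0,∞) → X be a twice continuously differentiable function with y(t) ∈ D(B) for every t ≥ 0, with t ↦ By(t) continuous, satisfying y''(t) + y'(t) + By(t) = ψ(t) for all t ≥ 0. Then limsup_{t→+∞} ( |y'(t)|² + ⟨By(t), y(t)⟩ ) ≤ 9·max{1, 1/m} · limsup_{t→+∞} |ψ(t)|². -/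
open Filter Topology Set
open scoped RealInnerProductSpace

lemma gron_aux {V g : ℝ → ℝ} {c K T : ℝ} (hc : 0 < c)
    (hV : ∀ t ∈ Ici T, HasDerivWithinAt V (g t) (Ici T) t)
    (hle : ∀ t ∈ Ici T, g t ≤ -c * V t + K) :
    ∀ ε > 0, ∀ᶠ t in atTop, V t ≤ K / c + ε := by
  intro ε hε
  set W : ℝ → ℝ := fun t => (V t - K / c) * Real.exp (c * t) with hWdef
  have hexp : ∀ t : ℝ, HasDerivAt (fun s => Real.exp (c * s)) (c * Real.exp (c * t)) t := by
    intro t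
    have h1 : HasDerivAt (fun s : ℝ => c * s) c t := by
      simpa using (hasDerivAt_id t).const_mul c
    exact ((Real.hasDerivAt_exp (c * t)).comp t h1).congr_deriv (mul_comm _ _)
  have hW : ∀ t ∈ Ici T, HasDerivWithinAt W
      (g t * Real.exp (c * t) + (V t - K / c) * (c * Real.exp (c * t))) (Ici T) t := by
    intro t ht
    exact ((hV t ht).sub_const _).mul ((hexp t).hasDerivWithinAt)
  have hanti : AntitoneOn W (Ici T) := by
    apply antitoneOn_of_deriv_nonpos (convex_Ici T)
    · exact fun t ht => (hW t ht).continuousWithinAt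
    · intro x hx
      rw [interior_Ici] at hx
      exact ((hW x (Ioi_subset_Ici_self hx)).hasDerivAt
        (Ici_mem_nhds hx)).differentiableAt.differentiableWithinAt
    · intro x hx
      rw [interior_Ici] at hx
      have hd := (hW x (Ioi_subset_Ici_self hx)).hasDerivAt (Ici_mem_nhds hx)
      rw [hd.deriv]
      have h1 := hle x (Ioi_subset_Ici_self hx)
      have h2 : (0:ℝ) < Real.exp (c * x) := Real.exp_pos _
      have h3 : g x * Real.exp (c * x) + (V x - K / c) * (c * Real.exp (c * x))
          = (g x + c * V x - K) * Real.exp (c * x) := by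
        field_simp
        ring
      rw [h3]
      have h4 : g x + c * V x - K ≤ 0 := by linarith
      exact mul_nonpos_of_nonpos_of_nonneg h4 h2.le
  have hbound : ∀ t ∈ Ici T, V t ≤ K / c + W T * Real.exp (-(c * t)) := by
    intro t ht
    have h1 : W t ≤ W T := hanti self_mem_Ici ht ht
    have h2 : (0:ℝ) < Real.exp (c * t) := Real.exp_pos _
    have h3 : (V t - K / c) * Real.exp (c * t) ≤ W T := h1
    have h4 : V t - K / c ≤ W T * Real.exp (-(c * t)) := by
      rw [Real.exp_neg, ← div_eq_mul_inv, le_div_iff₀ h2]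
      exact h3
    linarith
  have htend : Tendsto (fun t => W T * Real.exp (-(c * t))) atTop (𝓝 0) := by
    have h1 : Tendsto (fun t : ℝ => -(c * t)) atTop atBot := by
      exact tendsto_neg_atBot_iff.mpr (Tendsto.const_mul_atTop hc tendsto_id)
    simpa using (Real.tendsto_exp_atBot.comp h1).const_mul (W T)
  have h5 : ∀ᶠ t in atTop, W T * Real.exp (-(c * t)) < ε := by
    have := htend.eventually (eventually_lt_nhds hε)
    simpa using this
  filter_upwards [h5, eventually_ge_atTop T] with t h5t hTt
  have := hbound t hTt
  linarith

lemma le_of_forall_pos_le_add' {a b : ℝ} (h : ∀ ε > 0, a ≤ b + ε) : a ≤ b := by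
  by_contra hc
  push_neg at hc
  linarith [h ((a - b)/2) (by linarith)]

set_option maxHeartbeats 1600000 in
/-- Ultimate bound for a damped abstract wave equation with coercive operator. -/
theorem abstract_wave_ultimate_bound
    {X : Type*} [NormedAddCommGroup X] [InnerProductSpace ℝ X] [CompleteSpace X]
    (D : Submodule ℝ X) (hD : Dense (D : Set X))
    (B : X →ₗ[ℝ] X)
    (hsym : ∀ x ∈ D, ∀ y ∈ D, ⟪B x, y⟫ = ⟪x, B y⟫)
    (m : ℝ) (hm : 0 < m)
    (hcoer : ∀ x ∈ D, m * ‖x‖ ^ 2 ≤ ⟪B x, x⟫)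
    (ψ : ℝ → X) (hψc : ContinuousOn ψ (Ici 0))
    (hψb : ∃ C, ∀ t ∈ Ici (0:ℝ), ‖ψ t‖ ≤ C)
    (y y' y'' : ℝ → X)
    (hyD : ∀ t ∈ Ici (0:ℝ), y t ∈ D)
    (hy : ∀ t ∈ Ici (0:ℝ), HasDerivWithinAt y (y' t) (Ici 0) t)
    (hy' : ∀ t ∈ Ici (0:ℝ), HasDerivWithinAt y' (y'' t) (Ici 0) t)
    (hy'' : ContinuousOn y'' (Ici 0))
    (hBy : ContinuousOn (fun t => B (y t)) (Ici 0))
    (heq : ∀ t ∈ Ici (0:ℝ), y'' t + y' t + B (y t) = ψ t) :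
    IsBoundedUnder (· ≤ ·) atTop (fun t => ‖y' t‖ ^ 2 + ⟪B (y t), y t⟫) ∧
    limsup (fun t => ‖y' t‖ ^ 2 + ⟪B (y t), y t⟫) atTop
      ≤ 9 * max 1 (1/m) * limsup (fun t => ‖ψ t‖ ^ 2) atTop := by
  set μ := min m 1 with hμdef
  have hμ : 0 < μ := lt_min hm one_pos
  have hμ1 : μ ≤ 1 := min_le_right m 1
  have hμm : μ ≤ m := min_le_left m 1
  have hco : ∀ t ∈ Ici (0:ℝ), μ * ‖y t‖ ^ 2 ≤ ⟪B (y t), y t⟫ := by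
    intro t ht
    have h1 := hcoer (y t) (hyD t ht)
    nlinarith [sq_nonneg ‖y t‖]
  -- derivative of the quadratic form t ↦ ⟪B (y t), y t⟫
  have hQd : ∀ t ∈ Ici (0:ℝ),
      HasDerivWithinAt (fun s => ⟪B (y s), y s⟫) (2 * ⟪B (y t), y' t⟫) (Ici 0) t := by
    intro t ht
    rw [hasDerivWithinAt_iff_tendsto_slope]
    have hyt : Tendsto (slope y t) (𝓝[Ici 0 \ {t}] t) (𝓝 (y' t)) :=
      (hasDerivWithinAt_iff_tendsto_slope).mp (hy t ht)
    have hBc : Tendsto (fun s => B (y s)) (𝓝[Ici 0 \ {t}] t) (𝓝 (B (y t))) :=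
      (hBy t ht).mono_left (nhdsWithin_mono t diff_subset)
    have hlim : Tendsto (fun s => ⟪slope y t s, B (y s)⟫ + ⟪B (y t), slope y t s⟫)
        (𝓝[Ici 0 \ {t}] t) (𝓝 (⟪y' t, B (y t)⟫ + ⟪B (y t), y' t⟫)) :=
      (hyt.inner hBc).add (tendsto_const_nhds.inner hyt)
    have hEv : (fun s => ⟪slope y t s, B (y s)⟫ + ⟪B (y t), slope y t s⟫)
        =ᶠ[𝓝[Ici 0 \ {t}] t] slope (fun s => ⟪B (y s), y s⟫) t := by
      filter_upwards [self_mem_nhdsWithin] with s hs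
      obtain ⟨hs0, hst⟩ := hs
      have hsym1 : ⟪B (y s - y t), y s⟫ = ⟪y s - y t, B (y s)⟫ :=
        hsym _ (Submodule.sub_mem D (hyD s hs0) (hyD t ht)) _ (hyD s hs0)
      have hdiff : ⟪B (y s), y s⟫ - ⟪B (y t), y t⟫
          = ⟪y s - y t, B (y s)⟫ + ⟪B (y t), y s - y t⟫ := by
        rw [← hsym1, map_sub, inner_sub_left, inner_sub_right]
        ring
      have hslope : slope (fun s => ⟪B (y s), y s⟫) t s
          = (s - t)⁻¹ * (⟪B (y s), y s⟫ - ⟪B (y t), y t⟫) := by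
        rw [slope_def_field]; rw [div_eq_inv_mul]
      rw [hslope, hdiff, slope, real_inner_smul_left, real_inner_smul_right, vsub_eq_sub]
      ring
    have hval : ⟪y' t, B (y t)⟫ + ⟪B (y t), y' t⟫ = 2 * ⟪B (y t), y' t⟫ := by
      rw [real_inner_comm]; ring
    exact hval ▸ hlim.congr' hEv
  -- the Lyapunov function and its derivative
  have hVd : ∀ t ∈ Ici (0:ℝ), HasDerivWithinAt
      (fun s => ⟪y' s, y' s⟫ + ⟪B (y s), y s⟫ + μ/3 * ⟪y' s, y s⟫ + μ/6 * ⟪y s, y s⟫)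
      ((⟪y' t, y'' t⟫ + ⟪y'' t, y' t⟫) + 2 * ⟪B (y t), y' t⟫
        + μ/3 * (⟪y' t, y' t⟫ + ⟪y'' t, y t⟫) + μ/6 * (⟪y t, y' t⟫ + ⟪y' t, y t⟫))
      (Ici 0) t := by
    intro t ht
    exact ((((hy' t ht).inner ℝ (hy' t ht)).add (hQd t ht)).add
      (((hy' t ht).inner ℝ (hy t ht)).const_mul (μ/3))).add
      (((hy t ht).inner ℝ (hy t ht)).const_mul (μ/6))
  -- pointwise differential inequality
  have hg : ∀ t ∈ Ici (0:ℝ),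
      (⟪y' t, y'' t⟫ + ⟪y'' t, y' t⟫) + 2 * ⟪B (y t), y' t⟫
        + μ/3 * (⟪y' t, y' t⟫ + ⟪y'' t, y t⟫) + μ/6 * (⟪y t, y' t⟫ + ⟪y' t, y t⟫)
      ≤ -(μ/8) * (⟪y' t, y' t⟫ + ⟪B (y t), y t⟫ + μ/3 * ⟪y' t, y t⟫ + μ/6 * ⟪y t, y t⟫)
        + (5/6) * ‖ψ t‖ ^ 2 := by
    intro t ht
    have hsub : y'' t = ψ t - y' t - B (y t) := by
      have h := heq t ht
      rw [← h]; abel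
    have hc1 : ⟪ψ t, y' t⟫ ≤ ‖ψ t‖ * ‖y' t‖ := real_inner_le_norm _ _
    have hc2 : ⟪ψ t, y t⟫ ≤ ‖ψ t‖ * ‖y t‖ := real_inner_le_norm _ _
    have hc3 : ⟪y' t, y t⟫ ≤ ‖y' t‖ * ‖y t‖ := real_inner_le_norm _ _
    have hc3' : -(‖y' t‖ * ‖y t‖) ≤ ⟪y' t, y t⟫ := (abs_le.mp (abs_real_inner_le_norm _ _)).1
    have hQc := hco t ht
    have hA2 : ⟪y' t, y' t⟫ = ‖y' t‖ ^ 2 := real_inner_self_eq_norm_sq _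
    have hY2 : ⟪y t, y t⟫ = ‖y t‖ ^ 2 := real_inner_self_eq_norm_sq _
    have e1 : ⟪y' t, ψ t⟫ = ⟪ψ t, y' t⟫ := real_inner_comm _ _
    have e2 : ⟪y' t, B (y t)⟫ = ⟪B (y t), y' t⟫ := real_inner_comm _ _
    have e3 : ⟪y t, y' t⟫ = ⟪y' t, y t⟫ := real_inner_comm _ _
    rw [hsub]
    simp only [inner_sub_left, inner_sub_right]
    rw [e1, e2, e3, hA2, hY2]
    have hP : (0:ℝ) ≤ ‖ψ t‖ := norm_nonneg _
    have hA : (0:ℝ) ≤ ‖y' t‖ := norm_nonneg _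
    have hY : (0:ℝ) ≤ ‖y t‖ := norm_nonneg _
    nlinarith [sq_nonneg (5*‖ψ t‖ - 6*‖y' t‖ - μ*‖y t‖), sq_nonneg (82*‖y' t‖ - 53*μ*‖y t‖),
      sq_nonneg (μ*‖y t‖),
      mul_nonneg (sub_nonneg.mpr hμ1) (mul_nonneg hA (mul_nonneg hμ.le hY)),
      mul_nonneg (sub_nonneg.mpr hμ1) (sq_nonneg ‖y' t‖),
      mul_nonneg (sub_nonneg.mpr hμ1) (mul_nonneg hμ.le (sq_nonneg ‖y t‖)),
      mul_nonneg hμ.le (sub_nonneg.mpr hc3), mul_nonneg hμ.le (sub_nonneg.mpr hc3'),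
      mul_nonneg hμ.le (sub_nonneg.mpr hQc), sq_nonneg (‖y' t‖ - μ*‖y t‖)]
  -- boundedness of the forcing term
  obtain ⟨C, hC⟩ := hψb
  have hbψ : IsBoundedUnder (· ≤ ·) atTop (fun t => ‖ψ t‖ ^ 2) := by
    apply isBoundedUnder_of_eventually_le (a := C ^ 2)
    filter_upwards [eventually_ge_atTop (0:ℝ)] with t ht
    have := hC t ht
    nlinarith [norm_nonneg (ψ t)]
  set P := limsup (fun t => ‖ψ t‖ ^ 2) atTop with hPdef
  have hP0 : 0 ≤ P :=
    le_limsup_of_frequently_le (Frequently.of_forall fun t => sq_nonneg _) hbψ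
  -- energy comparison with the Lyapunov function
  have hEV : ∀ t ∈ Ici (0:ℝ), ‖y' t‖ ^ 2 + ⟪B (y t), y t⟫
      ≤ (6/5) * (⟪y' t, y' t⟫ + ⟪B (y t), y t⟫ + μ/3 * ⟪y' t, y t⟫ + μ/6 * ⟪y t, y t⟫) := by
    intro t ht
    have hc3' : -(‖y' t‖ * ‖y t‖) ≤ ⟪y' t, y t⟫ := (abs_le.mp (abs_real_inner_le_norm _ _)).1
    have hQc := hco t ht
    have hA2 : ⟪y' t, y' t⟫ = ‖y' t‖ ^ 2 := real_inner_self_eq_norm_sq _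
    have hY2 : ⟪y t, y t⟫ = ‖y t‖ ^ 2 := real_inner_self_eq_norm_sq _
    rw [hA2, hY2]
    nlinarith [sq_nonneg (‖y' t‖ - μ*‖y t‖),
      mul_nonneg (sub_nonneg.mpr hμ1) (mul_nonneg hμ.le (sq_nonneg ‖y t‖)),
      mul_nonneg hμ.le (sub_nonneg.mpr hc3'), mul_nonneg hμ.le (sub_nonneg.mpr hQc)]
  -- key eventual bound
  have key : ∀ ε : ℝ, 0 < ε → ∀ᶠ t in atTop,
      ‖y' t‖ ^ 2 + ⟪B (y t), y t⟫ ≤ 8/μ * (P + ε) + 2*ε := by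
    intro ε hε
    have hev : ∀ᶠ t in atTop, ‖ψ t‖ ^ 2 < P + ε :=
      eventually_lt_of_limsup_lt (by linarith) hbψ
    obtain ⟨T₀, hT₀⟩ := eventually_atTop.mp hev
    set T := max T₀ 0 with hTdef
    have hT0 : (0:ℝ) ≤ T := le_max_right T₀ 0
    have hVd' : ∀ t ∈ Ici T, HasDerivWithinAt
        (fun s => ⟪y' s, y' s⟫ + ⟪B (y s), y s⟫ + μ/3 * ⟪y' s, y s⟫ + μ/6 * ⟪y s, y s⟫)
        ((⟪y' t, y'' t⟫ + ⟪y'' t, y' t⟫) + 2 * ⟪B (y t), y' t⟫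
          + μ/3 * (⟪y' t, y' t⟫ + ⟪y'' t, y t⟫) + μ/6 * (⟪y t, y' t⟫ + ⟪y' t, y t⟫))
        (Ici T) t := by
      intro t ht
      exact (hVd t (le_trans hT0 ht)).mono (Ici_subset_Ici.mpr hT0)
    have hle' : ∀ t ∈ Ici T,
        (⟪y' t, y'' t⟫ + ⟪y'' t, y' t⟫) + 2 * ⟪B (y t), y' t⟫
          + μ/3 * (⟪y' t, y' t⟫ + ⟪y'' t, y t⟫) + μ/6 * (⟪y t, y' t⟫ + ⟪y' t, y t⟫)
        ≤ -(μ/8) * (⟪y' t, y' t⟫ + ⟪B (y t), y t⟫ + μ/3 * ⟪y' t, y t⟫ + μ/6 * ⟪y t, y t⟫)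
          + (5/6) * (P + ε) := by
      intro t ht
      have h1 := hg t (le_trans hT0 ht)
      have h2 := hT₀ t (le_trans (le_max_left T₀ 0) ht)
      linarith
    have hgr := gron_aux (by positivity : (0:ℝ) < μ/8) hVd' hle' ε hε
    filter_upwards [hgr, eventually_ge_atTop T] with t h1 h2
    have ht0 : (0:ℝ) ≤ t := le_trans hT0 h2
    have h3 := hEV t ht0
    have h4 : (5/6) * (P + ε) / (μ/8) = 20/(3*μ) * (P + ε) := by
      field_simp
      ring
    rw [h4] at h1
    have h5 : (6:ℝ)/5 * (20/(3*μ) * (P + ε) + ε) = 8/μ * (P + ε) + 6/5*ε := by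
      field_simp
      ring
    have h6 : ‖y' t‖ ^ 2 + ⟪B (y t), y t⟫ ≤ 6/5 * (20/(3*μ) * (P + ε) + ε) :=
      le_trans h3 (mul_le_mul_of_nonneg_left h1 (by norm_num))
    rw [h5] at h6
    linarith
  constructor
  · have key1 := key 1 one_pos
    exact isBoundedUnder_of_eventually_le (a := 8/μ * (P + 1) + 2*1) key1
  · have hcob : IsCoboundedUnder (· ≤ ·) atTop (fun t => ‖y' t‖ ^ 2 + ⟪B (y t), y t⟫) := by
      apply isCoboundedUnder_le_of_eventually_le atTop (x := 0)
      filter_upwards [eventually_ge_atTop (0:ℝ)] with t ht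
      have := hco t ht
      nlinarith [sq_nonneg ‖y' t‖, sq_nonneg ‖y t‖]
    have hls : limsup (fun t => ‖y' t‖ ^ 2 + ⟪B (y t), y t⟫) atTop ≤ 8/μ * P := by
      apply le_of_forall_pos_le_add'
      intro δ hδ
      set ε := δ / (8/μ + 2) with hεdef
      have hden : (0:ℝ) < 8/μ + 2 := by positivity
      have hε : 0 < ε := by positivity
      have h1 : limsup (fun t => ‖y' t‖ ^ 2 + ⟪B (y t), y t⟫) atTop ≤ 8/μ * (P + ε) + 2*ε :=
        limsup_le_of_le hcob (key ε hε)
      have h2 : 8/μ * (P + ε) + 2*ε = 8/μ * P + (8/μ + 2) * ε := by ring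
      have h3 : (8/μ + 2) * ε = δ := by
        rw [hεdef, mul_comm]
        exact div_mul_cancel₀ δ hden.ne'
      linarith
    have hmax : max 1 (1/m) = 1/μ := by
      rcases le_total m 1 with h | h
      · rw [hμdef, min_eq_left h, max_eq_right (one_le_one_div hm h)]
      · rw [hμdef, min_eq_right h, max_eq_left]
        · norm_num
        · rw [div_le_one hm]; exact h
    rw [hmax]
    have h8 : 8/μ ≤ 9 * (1/μ) := by
      rw [mul_one_div]
      exact (div_le_div_iff_of_pos_right hμ).mpr (by norm_num)
    calc limsup (fun t => ‖y' t‖ ^ 2 + ⟪B (y t), y t⟫) atTop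
        ≤ 8/μ * P := hls
      _ ≤ 9 * (1/μ) * P := mul_le_mul_of_nonneg_right h8 hP0
end

section
/- Energy estimates for the first component: for every strong solution u of u'' + u' + A²u − λAu + ⟨Au,u⟩Au = f(t) and every t ≥ 0, one has F_-(t) ≥ (λ1²/4)·u_-(t)⁴ − (λ1(λ−λ1)/2)·u_-(t)², and F_- is differentiable with F_-'(t) ≤ −γ0·F_-(t) + 2·f_-(t)² − λ1·⟨Au_+(t), u_+(t)⟩·u_-(t)·u_-'(t). -/
open Filter Topology Set
open scoped RealInnerProductSpace

lemma key_ineq (a b c Q g m L : ℝ) (hQ : 0 ≤ Q) (hg : 0 ≤ g) (h18 : g ≤ 1/8)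
    (h8 : 8 * g ≤ m) (hL : 0 ≤ L) :
    b * (c - b + m*a - L*(Q + L*a^2)*a) - m*(a*b) + L^2*a^3*b
      + (g/3) * (b*b + a*(c - b + m*a - L*(Q + L*a^2)*a)) + (g/3)*(a*b)
    ≤ -g * (1/2*b^2 - m/2*a^2 + L^2/4*a^4 + g/3*(a*b) + g/6*a^2) + 2*c^2 - L*Q*(a*b) := by
  nlinarith [sq_nonneg (b - c), sq_nonneg (3*g*a - c),
    mul_nonneg (mul_nonneg hg hg) (sq_nonneg (a - b)),
    mul_nonneg (mul_nonneg hg (by linarith : 0 ≤ m - 8*g)) (sq_nonneg a),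
    mul_nonneg (mul_nonneg hg hL) (mul_nonneg hQ (sq_nonneg a)),
    mul_nonneg (mul_nonneg hg (sq_nonneg L)) (sq_nonneg (a*a)),
    mul_nonneg (mul_nonneg hg (by linarith : (0:ℝ) ≤ 1/8 - g)) (sq_nonneg b)]

/-- Energy estimates for the first component. -/
theorem first_component_energy_estimates
    {H : Type*} [NormedAddCommGroup H] [InnerProductSpace ℝ H] [CompleteSpace H]
    (D : Submodule ℝ H) (hD : Dense (D : Set H))
    (A : H →ₗ[ℝ] H)
    (hsym : ∀ x ∈ D, ∀ y ∈ D, ⟪A x, y⟫ = ⟪x, A y⟫)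
    (hpos : ∀ x ∈ D, 0 ≤ ⟪A x, x⟫)
    (l1 l2 lam : ℝ) (hl1 : 0 < l1) (hl12 : l1 < l2)
    (hlam1 : l1 < lam) (hlam2 : lam < l2)
    (e1 : H) (he1D : e1 ∈ D) (he1 : ‖e1‖ = 1) (hAe1 : A e1 = l1 • e1)
    (hgap : ∀ x ∈ D, ⟪x, e1⟫ = 0 → l2 ^ 2 * ‖x‖ ^ 2 ≤ ‖A x‖ ^ 2)
    (γ0 : ℝ) (hγ0 : γ0 = (1/8) * min 1 (min (l1 * (lam - l1)) (l2 * (l2 - lam))))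
    (f : ℝ → H) (hfc : ContinuousOn f (Ici 0))
    (hfb : ∃ C, ∀ t ∈ Ici (0:ℝ), ‖f t‖ ≤ C)
    (u u' u'' : ℝ → H) (hu : IsStrongSolution D A lam f u u' u'')
    (Fm : ℝ → ℝ)
    (hFm : ∀ t, Fm t =
      (1/2) * ⟪u' t, e1⟫ ^ 2 - (l1 * (lam - l1) / 2) * ⟪u t, e1⟫ ^ 2
        + (l1 ^ 2 / 4) * ⟪u t, e1⟫ ^ 4
        + (γ0 / 3) * (⟪u t, e1⟫ * ⟪u' t, e1⟫) + (γ0 / 6) * ⟪u t, e1⟫ ^ 2) :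
    (∀ t ∈ Ici (0:ℝ),
      (l1 ^ 2 / 4) * ⟪u t, e1⟫ ^ 4 - (l1 * (lam - l1) / 2) * ⟪u t, e1⟫ ^ 2
        ≤ Fm t) ∧
    ∃ Fm' : ℝ → ℝ, ∀ t ∈ Ici (0:ℝ),
      HasDerivWithinAt Fm (Fm' t) (Ici 0) t ∧
      Fm' t ≤ -γ0 * Fm t + 2 * ⟪f t, e1⟫ ^ 2
        - l1 * ⟪A (u t - ⟪u t, e1⟫ • e1), u t - ⟪u t, e1⟫ • e1⟫
            * (⟪u t, e1⟫ * ⟪u' t, e1⟫) := by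
  obtain ⟨hu1, hu2, _, huD, hAuD, _, heq⟩ := hu
  set μ : ℝ := l1 * (lam - l1) with hμ
  have hμpos : 0 < μ := mul_pos hl1 (by linarith)
  -- γ0 facts
  have hγnn : 0 ≤ γ0 := by
    rw [hγ0]
    have : (0:ℝ) < min 1 (min (l1 * (lam - l1)) (l2 * (l2 - lam))) := by
      apply lt_min one_pos
      exact lt_min hμpos (mul_pos (by linarith) (by linarith))
    positivity
  have hγ18 : γ0 ≤ 1/8 := by
    rw [hγ0]
    have := min_le_left 1 (min (l1 * (lam - l1)) (l2 * (l2 - lam)))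
    linarith
  have hγμ : 8 * γ0 ≤ μ := by
    rw [hγ0, hμ]
    have h1 := min_le_right 1 (min (l1 * (lam - l1)) (l2 * (l2 - lam)))
    have h2 := min_le_left (l1 * (lam - l1)) (l2 * (l2 - lam))
    linarith
  set x : ℝ → ℝ := fun t => ⟪u t, e1⟫ with hxdef
  set y : ℝ → ℝ := fun t => ⟪u' t, e1⟫ with hydef
  set Y : ℝ → ℝ := fun t => ⟪u'' t, e1⟫ with hYdef
  set F : ℝ → ℝ := fun t => ⟪f t, e1⟫ with hFdef
  set q : ℝ → ℝ := fun t => ⟪A (u t - ⟪u t, e1⟫ • e1), u t - ⟪u t, e1⟫ • e1⟫ with hqdef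
  have hx : ∀ t ∈ Ici (0:ℝ), HasDerivWithinAt x (y t) (Ici 0) t := by
    intro t ht
    have := ((innerSL ℝ e1).hasFDerivAt (x := u t)).comp_hasDerivWithinAt t (hu1 t ht)
    simpa [hxdef, hydef, real_inner_comm, Function.comp_def] using this
  have hy : ∀ t ∈ Ici (0:ℝ), HasDerivWithinAt y (Y t) (Ici 0) t := by
    intro t ht
    have := ((innerSL ℝ e1).hasFDerivAt (x := u' t)).comp_hasDerivWithinAt t (hu2 t ht)
    simpa [hydef, hYdef, real_inner_comm, Function.comp_def] using this
  have he11 : ⟪e1, e1⟫ = 1 := by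
    rw [real_inner_self_eq_norm_sq, he1]; norm_num
  have hAue1 : ∀ t ∈ Ici (0:ℝ), ⟪A (u t), e1⟫ = l1 * x t := by
    intro t ht
    rw [hsym _ (huD t ht) _ he1D, hAe1, real_inner_smul_right]
  have hAAue1 : ∀ t ∈ Ici (0:ℝ), ⟪A (A (u t)), e1⟫ = l1 ^ 2 * x t := by
    intro t ht
    rw [hsym _ (hAuD t ht) _ he1D, hAe1, real_inner_smul_right, hAue1 t ht]
    ring
  have hqval : ∀ t ∈ Ici (0:ℝ), ⟪A (u t), u t⟫ = q t + l1 * x t ^ 2 := by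
    intro t ht
    have : A (u t - ⟪u t, e1⟫ • e1) = A (u t) - (l1 * x t) • e1 := by
      rw [map_sub, map_smul, hAe1, smul_smul, mul_comm]
    rw [hqdef]
    simp only [this, inner_sub_left, inner_sub_right, real_inner_smul_left,
      real_inner_smul_right, he11, hAue1 t ht]
    have : ⟪e1, u t⟫ = x t := real_inner_comm _ _
    rw [this]
    ring
  have hq0 : ∀ t ∈ Ici (0:ℝ), 0 ≤ q t := by
    intro t ht
    exact hpos _ (Submodule.sub_mem D (huD t ht) (Submodule.smul_mem D _ he1D))
  -- projected ODE
  have hode : ∀ t ∈ Ici (0:ℝ),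
      Y t = F t - y t - l1 ^ 2 * x t + lam * l1 * x t
        - l1 * (q t + l1 * x t ^ 2) * x t := by
    intro t ht
    have h := heq t ht
    have h2 : ⟪u'' t + u' t + A (A (u t)) - lam • A (u t) + ⟪A (u t), u t⟫ • A (u t), e1⟫
        = ⟪f t, e1⟫ := by rw [h]
    simp only [inner_add_left, inner_sub_left, real_inner_smul_left] at h2
    rw [hAue1 t ht, hAAue1 t ht, hqval t ht] at h2
    have hY : ⟪u'' t, e1⟫ = Y t := rfl
    have hy' : ⟪u' t, e1⟫ = y t := rfl
    rw [hY, hy'] at h2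
    have hF : F t = ⟪f t, e1⟫ := rfl
    rw [hF]
    linarith [h2]
  -- Fm as explicit function of x y
  have hFm' : ∀ t, Fm t = (1/2) * y t ^ 2 - (μ/2) * x t ^ 2 + (l1^2/4) * x t ^ 4
      + (γ0/3) * (x t * y t) + (γ0/6) * x t ^ 2 := fun t => hFm t
  constructor
  · intro t ht
    have := hFm' t
    nlinarith [sq_nonneg (y t + (γ0/3) * x t), sq_nonneg (x t), sq_nonneg (y t),
      mul_nonneg hγnn (sq_nonneg (x t))]
  · refine ⟨fun t => y t * Y t - μ * (x t * y t) + l1^2 * x t ^ 3 * y t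
      + (γ0/3) * (y t * y t + x t * Y t) + (γ0/3) * (x t * y t), fun t ht => ?_⟩
    have hx' := hx t ht
    have hy' := hy t ht
    constructor
    · have hg : HasDerivWithinAt
          (fun s => (1/2) * y s ^ 2 - (μ/2) * x s ^ 2 + (l1^2/4) * x s ^ 4
            + (γ0/3) * (x s * y s) + (γ0/6) * x s ^ 2)
          (y t * Y t - μ * (x t * y t) + l1^2 * x t ^ 3 * y t
            + (γ0/3) * (y t * y t + x t * Y t) + (γ0/3) * (x t * y t)) (Ici 0) t := by
        have h1 := (hy'.pow 2).const_mul (1/2 : ℝ)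
        have h2 := (hx'.pow 2).const_mul (μ/2 : ℝ)
        have h3 := (hx'.pow 4).const_mul (l1^2/4 : ℝ)
        have h4 := (hx'.mul hy').const_mul (γ0/3 : ℝ)
        have h5 := (hx'.pow 2).const_mul (γ0/6 : ℝ)
        have := (((h1.sub h2).add h3).add h4).add h5
        refine this.congr_deriv ?_
        push_cast
        ring
      exact hg.congr (fun s _ => hFm' s) (hFm' t)
    · show y t * Y t - μ * (x t * y t) + l1^2 * x t ^ 3 * y t
          + (γ0/3) * (y t * y t + x t * Y t) + (γ0/3) * (x t * y t)
          ≤ -γ0 * Fm t + 2 * F t ^ 2 - l1 * q t * (x t * y t)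
      rw [hode t ht, hFm' t]
      have hq := hq0 t ht
      have h8 : 8 * γ0 ≤ l1 * (lam - l1) := by rw [← hμ]; exact hγμ
      have hk := key_ineq (x t) (y t) (F t) (q t) γ0 (l1*(lam-l1)) l1 hq hγnn hγ18 h8 hl1.le
      rw [hμ]
      nlinarith [hk]
end
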